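/- arXiv:1602.07039 — 7 statements merged into one kernel-verified Lean document; each statement's English description precedes it below -/
import Mathlib

section
/- For a connected simple graph G with at least one edge, the largest Laplacian eigenvalue μ₁(G) satisfies μ₁(G) ≤ max over edges v_i v_j of |N_i ∪ N_j|, where N_i is the neighborhood of v_i; moreover this bound does not exceed n. -/
open Finset

noncomputable def lapEigs {V : Type*} [Fintype V] [DecidableEq V] (G : SimpleGraph V) :
    V → ℝ :=
  letI := Classical.decRel G.Adj
  (SimpleGraph.posSemidef_lapMatrix ℝ G).1.eigenvalues

/-- Laplacian eigenvalues sorted in non-increasing order: `mu G 0` is the largest. -/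
noncomputable def mu {n : ℕ} (G : SimpleGraph (Fin n)) : Fin n → ℝ :=
  fun i => (lapEigs G ∘ Tuple.sort (lapEigs G)) i.rev

noncomputable def kf {V : Type*} [Fintype V] [DecidableEq V] (G : SimpleGraph V) : ℝ :=
  (Fintype.card V : ℝ) * ∑ v, (lapEigs G v)⁻¹

noncomputable def treeCount {V : Type*} (G : SimpleGraph V) : ℕ :=
  Nat.card {H : SimpleGraph V // H ≤ G ∧ H.IsTree}

noncomputable def resist {V : Type*} [Fintype V] [DecidableEq V] (G : SimpleGraph V)
    (u v : V) : ℝ :=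
  letI := Classical.decRel G.Adj
  let M := (G.lapMatrix ℝ + (Fintype.card V : ℝ)⁻¹ • Matrix.of (fun _ _ : V => (1 : ℝ)))⁻¹
  M u u + M v v - M u v - M v u

noncomputable def kfR {V : Type*} [Fintype V] [DecidableEq V] (G : SimpleGraph V) : ℝ :=
  (∑ u, ∑ v, resist G u v) / 2

noncomputable def kfx {V : Type*} [Fintype V] [DecidableEq V] (G : SimpleGraph V) (x : V) : ℝ :=
  ∑ v, resist G x v

noncomputable def wiener {V : Type*} [Fintype V] (G : SimpleGraph V) : ℝ :=
  (∑ u, ∑ v, (G.dist u v : ℝ)) / 2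

open Matrix in
private lemma exists_eigvec {n : ℕ} (hn : 0 < n) (G : SimpleGraph (Fin n)) :
    ∃ x : Fin n → ℝ, x ≠ 0 ∧
      (@SimpleGraph.lapMatrix (Fin n) ℝ _ G (Classical.decRel G.Adj) _ _) *ᵥ x
        = mu G ⟨0, hn⟩ • x := by
  letI := Classical.decRel G.Adj
  have hA := (SimpleGraph.posSemidef_lapMatrix ℝ G).1
  set i0 := Tuple.sort (lapEigs G) (Fin.rev ⟨0, hn⟩) with hi0
  have hmu : mu G ⟨0, hn⟩ = hA.eigenvalues i0 := rfl
  refine ⟨hA.eigenvectorBasis i0, ?_, ?_⟩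
  · intro h
    exact hA.eigenvectorBasis.orthonormal.ne_zero i0 (by ext k; exact congrFun h k)
  · rw [hmu]
    exact hA.mulVec_eigenvectorBasis i0

private lemma lapEigs_le_mu {n : ℕ} (hn : 0 < n) (G : SimpleGraph (Fin n)) (j : Fin n) :
    lapEigs G j ≤ mu G ⟨0, hn⟩ := by
  obtain ⟨k, hk⟩ := (Tuple.sort (lapEigs G)).surjective j
  have hle : k ≤ Fin.rev ⟨0, hn⟩ := by
    have := k.isLt
    rw [Fin.le_def, Fin.val_rev]
    have h2 : ((⟨0, hn⟩ : Fin n) : ℕ) = 0 := rfl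
    rw [h2]
    omega
  have := Tuple.monotone_sort (lapEigs G) hle
  simpa [mu, hk] using this

private lemma mu_nonneg {n : ℕ} (hn : 0 < n) (G : SimpleGraph (Fin n)) :
    0 ≤ mu G ⟨0, hn⟩ := by
  classical
  refine le_trans ?_ (lapEigs_le_mu hn G ⟨0, hn⟩)
  exact (SimpleGraph.posSemidef_lapMatrix ℝ G).eigenvalues_nonneg _

private lemma inner_bound {n : ℕ} (G : SimpleGraph (Fin n)) [DecidableRel G.Adj]
    {μ : ℝ} (hμ : 0 < μ) (x : Fin n → ℝ) (i : Fin n)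
    (hrec : ∀ a, ∑ k ∈ G.neighborFinset a, (x a - x k) = μ * x a)
    (hmax : ∀ k, x k ≤ x i) (hpos : 0 < x i) (hdeg : (G.neighborFinset i).Nonempty) :
    ∃ u v, G.Adj u v ∧ μ ≤ ((G.neighborFinset u ∪ G.neighborFinset v).card : ℝ) := by
  obtain ⟨j, hjmem, hjmin⟩ := Finset.exists_min_image (G.neighborFinset i) x hdeg
  have hij : G.Adj i j := (SimpleGraph.mem_neighborFinset G i j).1 hjmem
  set S := G.neighborFinset i with hSdef
  set T := G.neighborFinset j with hTdef
  have hlt : x j < x i := by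
    by_contra hcon
    push_neg at hcon
    have h0 : ∑ k ∈ S, (x i - x k) = 0 := by
      refine Finset.sum_eq_zero fun k hk => ?_
      have h1 := hjmin k hk
      have h2 := hmax k
      linarith
    have := hrec i
    rw [h0] at this
    nlinarith
  -- rewrite the two sums over S ∪ T
  have hS : ∑ k ∈ S, (x i - x k) = ∑ k ∈ S ∪ T, (if k ∈ S then x i - x k else 0) := by
    rw [Finset.sum_ite_mem, Finset.union_inter_cancel_left]
  have hT : ∑ k ∈ T, (x k - x j) = ∑ k ∈ S ∪ T, (if k ∈ T then x k - x j else 0) := by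
    rw [Finset.sum_ite_mem, Finset.union_inter_cancel_right]
  have hsum : μ * (x i - x j)
      = ∑ k ∈ S ∪ T, ((if k ∈ S then x i - x k else 0) + (if k ∈ T then x k - x j else 0)) := by
    rw [Finset.sum_add_distrib, ← hS, ← hT]
    have h1 := hrec i
    have h2 := hrec j
    have h3 : ∑ k ∈ T, (x k - x j) = -(μ * x j) := by
      rw [← h2, ← Finset.sum_neg_distrib]
      exact Finset.sum_congr rfl fun k _ => by ring
    rw [h1, h3]
    ring
  have hbound : μ * (x i - x j) ≤ ((S ∪ T).card : ℝ) * (x i - x j) := by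
    rw [hsum]
    have := Finset.sum_le_card_nsmul (S ∪ T)
      (fun k => (if k ∈ S then x i - x k else 0) + (if k ∈ T then x k - x j else 0))
      (x i - x j) ?_
    · simpa [nsmul_eq_mul] using this
    · intro k hk
      by_cases h1 : k ∈ S <;> by_cases h2 : k ∈ T <;> simp only [h1, h2, if_true, if_false]
      · linarith
      · have := hjmin k h1; linarith
      · have := hmax k; linarith
      · exact absurd (Finset.mem_union.1 hk) (by simp [h1, h2])
  exact ⟨i, j, hij, (mul_le_mul_iff_of_pos_right (sub_pos.2 hlt)).1 hbound⟩

/-- `μ₁(G) ≤ max_{v_iv_j ∈ E} |N_i ∪ N_j|`, and this bound does not exceed `n`. -/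
theorem lap_spectral_radius_le_neighbor_union {n : ℕ} (hn : 0 < n)
    (G : SimpleGraph (Fin n)) [DecidableRel G.Adj] (hc : G.Connected)
    (he : G.edgeSet.Nonempty) :
    (∃ u v, G.Adj u v ∧
      mu G ⟨0, hn⟩ ≤ ((G.neighborFinset u ∪ G.neighborFinset v).card : ℝ)) ∧
    (∀ u v, G.Adj u v → (G.neighborFinset u ∪ G.neighborFinset v).card ≤ n) := by
  obtain ⟨e, heE⟩ := he
  induction e using Sym2.ind with
  | _ u₀ v₀ =>
  rw [SimpleGraph.mem_edgeSet] at heE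
  constructor
  · by_cases hμ2 : mu G ⟨0, hn⟩ ≤ 2
    · refine ⟨u₀, v₀, heE, le_trans hμ2 ?_⟩
      have h2 : 2 ≤ (G.neighborFinset u₀ ∪ G.neighborFinset v₀).card := by
        rw [Nat.succ_le_iff, Finset.one_lt_card]
        refine ⟨v₀, ?_, u₀, ?_, (heE.ne).symm⟩
        · exact Finset.mem_union.2 (Or.inl ((SimpleGraph.mem_neighborFinset G u₀ v₀).2 heE))
        · exact Finset.mem_union.2 (Or.inr ((SimpleGraph.mem_neighborFinset G v₀ u₀).2 heE.symm))
      exact_mod_cast h2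
    · push_neg at hμ2
      have hμ : 0 < mu G ⟨0, hn⟩ := lt_trans two_pos hμ2
      obtain ⟨x, hx0, hx⟩ := exists_eigvec hn G
      have hd : (Classical.decRel G.Adj) = ‹DecidableRel G.Adj› := Subsingleton.elim _ _
      rw [hd] at hx
      have hrec : ∀ a, ∑ k ∈ G.neighborFinset a, (x a - x k) = mu G ⟨0, hn⟩ * x a := by
        intro a
        have := congrFun hx a
        rw [SimpleGraph.lapMatrix_mulVec_apply] at this
        rw [Finset.sum_sub_distrib, Finset.sum_const, SimpleGraph.card_neighborFinset_eq_degree]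
        simp only [Pi.smul_apply, smul_eq_mul] at this
        rw [nsmul_eq_mul, this]
      -- pick i maximizing |x|
      obtain ⟨i, -, hi⟩ := Finset.exists_max_image Finset.univ (fun k => |x k|)
        ⟨⟨0, hn⟩, Finset.mem_univ _⟩
      have hxi : x i ≠ 0 := by
        intro h
        apply hx0
        funext k
        have := hi k (Finset.mem_univ k)
        rw [h, abs_zero, abs_nonpos_iff] at this
        exact this
      have hdeg : ∀ a : Fin n, (G.neighborFinset a).Nonempty := by
        intro a
        obtain ⟨w, hw⟩ : ∃ w, w ≠ a := by
          by_cases h : u₀ = a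
          · exact ⟨v₀, by rintro rfl; exact heE.ne (h ▸ rfl)⟩
          · exact ⟨u₀, h⟩
        obtain ⟨p⟩ := hc.preconnected a w
        cases p with
        | nil => exact absurd rfl hw
        | cons h p => exact ⟨_, (SimpleGraph.mem_neighborFinset G a _).2 h⟩
      -- sign normalize
      rcases lt_or_gt_of_ne hxi with hneg | hpos
      · -- use y = -x
        set y : Fin n → ℝ := fun k => -x k with hy
        have hrec' : ∀ a, ∑ k ∈ G.neighborFinset a, (y a - y k) = mu G ⟨0, hn⟩ * y a := by
          intro a
          have h4 : ∑ k ∈ G.neighborFinset a, (y a - y k)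
              = -∑ k ∈ G.neighborFinset a, (x a - x k) := by
            rw [← Finset.sum_neg_distrib]
            refine Finset.sum_congr rfl fun k _ => ?_
            simp only [hy]
            ring
          rw [h4, hrec a]
          simp only [hy]
          ring
        have hpos' : 0 < y i := by simp only [hy]; linarith
        have hmax' : ∀ k, y k ≤ y i := by
          intro k
          have h := hi k (Finset.mem_univ k)
          calc y k = -x k := rfl
            _ ≤ |x k| := neg_le_abs _
            _ ≤ |x i| := h
            _ = -x i := abs_of_neg hneg
            _ = y i := rfl
        exact inner_bound G hμ y i hrec' hmax' hpos' (hdeg i)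
      · -- x i > 0
        have hmax : ∀ k, x k ≤ x i := by
          intro k
          have h := hi k (Finset.mem_univ k)
          calc x k ≤ |x k| := le_abs_self _
            _ ≤ |x i| := h
            _ = x i := abs_of_pos hpos
        exact inner_bound G hμ x i hrec hmax hpos (hdeg i)
  · intro u v _
    calc (G.neighborFinset u ∪ G.neighborFinset v).card
        ≤ Fintype.card (Fin n) := Finset.card_le_univ _
      _ = n := Fintype.card_fin n
end

section
/- For a simple graph G on n vertices with at least one edge, the largest Laplacian eigenvalue satisfies μ₁(G) ≥ Δ + 1, where Δ is the maximum vertex degree. If G is connected, equality holds if and only if Δ = n − 1. -/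
open Finset

namespace LapAux

open Matrix

variable {n : ℕ} {A : Matrix (Fin n) (Fin n) ℝ}

lemma quad_eq_sum_eigs (hA : A.IsHermitian) (x : Fin n → ℝ) :
    x ⬝ᵥ (A *ᵥ x) = ∑ i, hA.eigenvalues i *
      ((star (hA.eigenvectorUnitary : Matrix (Fin n) (Fin n) ℝ) *ᵥ x) i)^2 := by
  set U := (hA.eigenvectorUnitary : Matrix (Fin n) (Fin n) ℝ) with hU
  have hy : star U *ᵥ x = x ᵥ* U := by
    rw [star_eq_conjTranspose, conjTranspose_eq_transpose_of_trivial, ← vecMul_transpose,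
      transpose_transpose]
  have hAx : A *ᵥ x = U *ᵥ (diagonal (RCLike.ofReal ∘ hA.eigenvalues) *ᵥ (star U *ᵥ x)) := by
    conv_lhs => rw [hA.spectral_theorem, Unitary.conjStarAlgAut_apply]
    rw [mulVec_mulVec, mulVec_mulVec]
  rw [hAx, dotProduct_mulVec, ← hy]
  simp [dotProduct, mulVec_diagonal]
  exact Finset.sum_congr rfl fun i _ => by ring

lemma normsq_eq_sum (hA : A.IsHermitian) (x : Fin n → ℝ) :
    x ⬝ᵥ x = ∑ i, ((star (hA.eigenvectorUnitary : Matrix (Fin n) (Fin n) ℝ) *ᵥ x) i)^2 := by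
  set U := (hA.eigenvectorUnitary : Matrix (Fin n) (Fin n) ℝ) with hU
  have h1 : U * star U = 1 := (Unitary.mem_iff.mp hA.eigenvectorUnitary.2).2
  set y := star U *ᵥ x with hy
  have hst : star U = Uᵀ := by
    rw [star_eq_conjTranspose, conjTranspose_eq_transpose_of_trivial]
  have : y ⬝ᵥ y = x ⬝ᵥ x := by
    conv_lhs => rw [hy, dotProduct_mulVec, hst, vecMul_transpose, ← hst, mulVec_mulVec, h1,
      one_mulVec]
  rw [← this]
  simp [dotProduct, pow_two]

lemma rayleigh_le (hA : A.IsHermitian) (c : ℝ) (h : ∀ i, hA.eigenvalues i ≤ c) (x : Fin n → ℝ) :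
    x ⬝ᵥ (A *ᵥ x) ≤ c * (x ⬝ᵥ x) := by
  rw [quad_eq_sum_eigs hA x, normsq_eq_sum hA x, Finset.mul_sum]
  exact Finset.sum_le_sum fun i _ => mul_le_mul_of_nonneg_right (h i) (sq_nonneg _)

lemma eig_le_of_forall (hA : A.IsHermitian) (c : ℝ)
    (h : ∀ x : Fin n → ℝ, x ⬝ᵥ (A *ᵥ x) ≤ c * (x ⬝ᵥ x)) (i : Fin n) : hA.eigenvalues i ≤ c := by
  set u : Fin n → ℝ := ⇑(hA.eigenvectorBasis i) with hu
  have h1 : u ⬝ᵥ u = 1 := by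
    have hn : ‖hA.eigenvectorBasis i‖ = 1 := hA.eigenvectorBasis.orthonormal.1 i
    have : (inner ℝ (hA.eigenvectorBasis i) (hA.eigenvectorBasis i) : ℝ) = 1 := by
      rw [real_inner_self_eq_norm_sq, hn]; norm_num
    rw [← this, PiLp.inner_apply]
    simp [dotProduct, hu, pow_two]
  have h2 : A *ᵥ u = hA.eigenvalues i • u := hA.mulVec_eigenvectorBasis i
  have h3 := h u
  rw [h2, dotProduct_smul, h1, smul_eq_mul, mul_one, mul_one] at h3
  exact h3

lemma mu_zero_ge {n : ℕ} (hn : 0 < n) (G : SimpleGraph (Fin n)) (v : Fin n) :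
    lapEigs G v ≤ mu G ⟨0, hn⟩ := by
  set f := lapEigs G
  have h1 : f v = (f ∘ Tuple.sort f) ((Tuple.sort f).symm v) := by
    simp [f, Function.comp]
  rw [h1]
  exact Tuple.monotone_sort f (by
    rw [Fin.le_def]
    exact Nat.le_sub_one_of_lt (by simpa using ((Tuple.sort f).symm v).isLt))

lemma mu_zero_mem {n : ℕ} (hn : 0 < n) (G : SimpleGraph (Fin n)) :
    ∃ v, mu G ⟨0, hn⟩ = lapEigs G v :=
  ⟨Tuple.sort (lapEigs G) (Fin.rev ⟨0, hn⟩), rfl⟩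

lemma lapMatrix_eq {n : ℕ} (G : SimpleGraph (Fin n)) (i1 i2 : DecidableRel G.Adj) :
    @SimpleGraph.lapMatrix (Fin n) ℝ _ G i1 _ _ = @SimpleGraph.lapMatrix (Fin n) ℝ _ G i2 _ _ := by
  cases Subsingleton.elim i1 i2; rfl

lemma lap_quad (G : SimpleGraph (Fin n)) [DecidableRel G.Adj] (x : Fin n → ℝ) :
    x ⬝ᵥ (G.lapMatrix ℝ *ᵥ x) = (∑ i, ∑ j, if G.Adj i j then (x i - x j)^2 else 0) / 2 := by
  rw [← Matrix.toLinearMap₂'_apply', SimpleGraph.lapMatrix_toLinearMap₂']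

lemma quad_le_card (G : SimpleGraph (Fin n)) [DecidableRel G.Adj] (x : Fin n → ℝ) :
    x ⬝ᵥ (G.lapMatrix ℝ *ᵥ x) ≤ n * (x ⬝ᵥ x) := by
  rw [lap_quad, div_le_iff₀ (by norm_num : (0:ℝ) < 2)]
  have h1 : ∀ i j : Fin n, (if G.Adj i j then (x i - x j)^2 else 0) ≤ (x i - x j)^2 := by
    intro i j; split
    · exact le_refl _
    · positivity
  have h2 : (∑ i, ∑ j, if G.Adj i j then (x i - x j)^2 else 0)
      ≤ ∑ i : Fin n, ∑ j : Fin n, (x i - x j)^2 :=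
    Finset.sum_le_sum fun i _ => Finset.sum_le_sum fun j _ => h1 i j
  refine h2.trans ?_
  have expand : ∑ i : Fin n, ∑ j : Fin n, (x i - x j)^2
      = 2*(n:ℝ)*(∑ i, x i * x i) - 2*(∑ i, x i)^2 := by
    simp only [sub_sq, Finset.sum_add_distrib, Finset.sum_sub_distrib, Finset.sum_const,
      Finset.card_univ, Fintype.card_fin, nsmul_eq_mul, ← Finset.sum_mul, ← Finset.mul_sum]
    ring_nf
  rw [expand, dotProduct]
  nlinarith [sq_nonneg (∑ i, x i)]

section TestVec
variable (G : SimpleGraph (Fin n)) [DecidableRel G.Adj] (v : Fin n)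

noncomputable def tv : Fin n → ℝ :=
  fun u => if u = v then (G.degree v : ℝ) else if G.Adj v u then -1 else 0

noncomputable def tvF : Fin n → Fin n → ℝ :=
  fun i j => if G.Adj i j then (tv G v i - tv G v j)^2 else 0

lemma tvF_nonneg (i j : Fin n) : 0 ≤ tvF G v i j := by
  unfold tvF; split <;> positivity

lemma tv_norm : (tv G v) ⬝ᵥ (tv G v) = (G.degree v : ℝ)^2 + G.degree v := by
  classical
  have hg : ∀ u, tv G v u * tv G v u
      = if u = v then (G.degree v : ℝ)^2 else if G.Adj v u then 1 else 0 := by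
    intro u
    by_cases h : u = v <;> by_cases h2 : G.Adj v u <;> simp [tv, h, h2] <;> ring
  rw [dotProduct]
  simp_rw [hg]
  rw [← Finset.add_sum_erase _ _ (mem_univ v), if_pos rfl]
  congr 1
  have : ∀ u ∈ univ.erase v, (if u = v then ((G.degree v : ℝ))^2 else if G.Adj v u then 1 else 0)
      = if G.Adj v u then (1:ℝ) else 0 := by
    intro u hu
    rw [if_neg (Finset.ne_of_mem_erase hu)]
  rw [Finset.sum_congr rfl this, Finset.sum_erase _ (by simp)]
  rw [← SimpleGraph.degree_eq_sum_if_adj]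

lemma tv_indicator_sum :
    (∑ j, if G.Adj v j then ((G.degree v : ℝ)+1)^2 else 0)
      = (G.degree v : ℝ) * ((G.degree v : ℝ)+1)^2 := by
  rw [Finset.sum_ite, Finset.sum_const, Finset.sum_const_zero, add_zero, nsmul_eq_mul,
    ← SimpleGraph.neighborFinset_eq_filter]
  rfl

lemma tvF_row : ∑ j, tvF G v v j = (G.degree v : ℝ) * ((G.degree v : ℝ)+1)^2 := by
  have : ∀ j, tvF G v v j = if G.Adj v j then ((G.degree v : ℝ)+1)^2 else 0 := by
    intro j
    by_cases h : G.Adj v j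
    · have hjv : j ≠ v := fun hc => G.irrefl (hc ▸ h)
      simp [tvF, h, tv, hjv]
    · simp [tvF, h]
  simp_rw [this]
  exact tv_indicator_sum G v

lemma tvF_col : ∑ i ∈ univ.erase v, tvF G v i v = (G.degree v : ℝ) * ((G.degree v : ℝ)+1)^2 := by
  have : ∀ i ∈ univ.erase v, tvF G v i v = if G.Adj v i then ((G.degree v : ℝ)+1)^2 else 0 := by
    intro i hi
    have hiv : i ≠ v := Finset.ne_of_mem_erase hi
    by_cases h : G.Adj i v
    · simp [tvF, h, tv, hiv, h.symm]
      ring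
    · have h' : ¬ G.Adj v i := fun hc => h hc.symm
      simp [tvF, h, h']
  rw [Finset.sum_congr rfl this, Finset.sum_erase _ (by simp)]
  exact tv_indicator_sum G v

lemma tv_quad_ge :
    2*(G.degree v:ℝ)*((G.degree v:ℝ)+1)^2 ≤ ∑ i, ∑ j, tvF G v i j := by
  have hsplit : ∑ i, ∑ j, tvF G v i j = ∑ j, tvF G v v j + ∑ i ∈ univ.erase v, ∑ j, tvF G v i j :=
    (Finset.add_sum_erase _ _ (mem_univ v)).symm
  have hrows : ∑ i ∈ univ.erase v, tvF G v i v ≤ ∑ i ∈ univ.erase v, ∑ j, tvF G v i j :=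
    Finset.sum_le_sum fun i _ => Finset.single_le_sum (fun j _ => tvF_nonneg G v i j) (mem_univ v)
  calc 2*(G.degree v:ℝ)*((G.degree v:ℝ)+1)^2
      = (G.degree v:ℝ)*((G.degree v:ℝ)+1)^2 + (G.degree v:ℝ)*((G.degree v:ℝ)+1)^2 := by ring
    _ ≤ ∑ j, tvF G v v j + ∑ i ∈ univ.erase v, ∑ j, tvF G v i j := by
        rw [tvF_row]
        exact add_le_add (le_refl _) ((tvF_col G v) ▸ hrows)
    _ = ∑ i, ∑ j, tvF G v i j := hsplit.symm

lemma tv_quad_ge_strict {a b : Fin n} (hva : G.Adj v a) (hab : G.Adj a b)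
    (hvb : ¬ G.Adj v b) (hbv : b ≠ v) :
    2*(G.degree v:ℝ)*((G.degree v:ℝ)+1)^2 + 2 ≤ ∑ i, ∑ j, tvF G v i j := by
  classical
  have hav : a ≠ v := fun hc => G.irrefl (hc ▸ hva)
  have hanb : a ≠ b := hab.ne
  have hxa : tv G v a = -1 := by simp [tv, hav, hva]
  have hxb : tv G v b = 0 := by simp [tv, hbv, hvb]
  have hFab : tvF G v a b = 1 := by simp [tvF, hab, hxa, hxb]
  have hFba : tvF G v b a = 1 := by simp [tvF, hab.symm, hxa, hxb]
  have hrow : ∀ i ∈ univ.erase v,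
      tvF G v i v + ((if i = a then (1:ℝ) else 0) + (if i = b then (1:ℝ) else 0))
        ≤ ∑ j, tvF G v i j := by
    intro i hi
    by_cases hia : i = a
    · subst hia
      rw [if_pos rfl, if_neg hanb]
      have hsub : ∑ j ∈ ({v, b} : Finset (Fin n)), tvF G v i j ≤ ∑ j, tvF G v i j :=
        Finset.sum_le_sum_of_subset_of_nonneg (Finset.subset_univ _)
          (fun j _ _ => tvF_nonneg G v i j)
      rw [Finset.sum_pair (Ne.symm hbv)] at hsub
      rw [hFab] at hsub
      linarith
    · by_cases hib : i = b
      · subst hib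
        rw [if_neg hia, if_pos rfl]
        have hsub : ∑ j ∈ ({v, a} : Finset (Fin n)), tvF G v i j ≤ ∑ j, tvF G v i j :=
          Finset.sum_le_sum_of_subset_of_nonneg (Finset.subset_univ _)
            (fun j _ _ => tvF_nonneg G v i j)
        rw [Finset.sum_pair (Ne.symm hav)] at hsub
        rw [hFba] at hsub
        linarith
      · rw [if_neg hia, if_neg hib]
        simpa using Finset.single_le_sum (fun j _ => tvF_nonneg G v i j) (mem_univ v)
  have hsum : ∑ i ∈ univ.erase v,
      (tvF G v i v + ((if i = a then (1:ℝ) else 0) + (if i = b then (1:ℝ) else 0)))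
      = (G.degree v:ℝ)*((G.degree v:ℝ)+1)^2 + 2 := by
    rw [Finset.sum_add_distrib, Finset.sum_add_distrib, tvF_col,
      Finset.sum_ite_eq' _ a (fun _ => (1:ℝ)), Finset.sum_ite_eq' _ b (fun _ => (1:ℝ))]
    rw [if_pos (Finset.mem_erase.mpr ⟨hav, mem_univ a⟩),
      if_pos (Finset.mem_erase.mpr ⟨hbv, mem_univ b⟩)]
    ring
  have hrows : (G.degree v:ℝ)*((G.degree v:ℝ)+1)^2 + 2
      ≤ ∑ i ∈ univ.erase v, ∑ j, tvF G v i j := by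
    rw [← hsum]
    exact Finset.sum_le_sum hrow
  have hsplit : ∑ i, ∑ j, tvF G v i j
      = ∑ j, tvF G v v j + ∑ i ∈ univ.erase v, ∑ j, tvF G v i j :=
    (Finset.add_sum_erase _ _ (mem_univ v)).symm
  rw [hsplit, tvF_row]
  linarith

end TestVec

lemma walk_cross {V : Type*} {G : SimpleGraph V} {S : Set V} :
    ∀ {u w : V}, G.Walk u w → u ∈ S → w ∉ S → ∃ a b, G.Adj a b ∧ a ∈ S ∧ b ∉ S := by
  intro u w p
  induction p with
  | nil => exact fun h h' => absurd h h'
  | @cons u x w hadj p ih =>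
    intro hu hw
    by_cases hx : x ∈ S
    · exact ih hx hw
    · exact ⟨u, x, hadj, hu, hx⟩

end LapAux

/-- `μ₁(G) ≥ Δ + 1`; for connected `G`, equality holds iff `Δ = n - 1`. -/
theorem lap_spectral_radius_ge_maxDegree {n : ℕ} (hn : 0 < n)
    (G : SimpleGraph (Fin n)) [DecidableRel G.Adj] (he : G.edgeSet.Nonempty) :
    ((G.maxDegree : ℝ) + 1 ≤ mu G ⟨0, hn⟩) ∧
    (G.Connected → (mu G ⟨0, hn⟩ = (G.maxDegree : ℝ) + 1 ↔ G.maxDegree = n - 1)) := by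
  open LapAux Matrix SimpleGraph in
  have : Nonempty (Fin n) := ⟨⟨0, hn⟩⟩
  -- classical laplacian and its hermitian structure
  set Lc : Matrix (Fin n) (Fin n) ℝ :=
    @SimpleGraph.lapMatrix (Fin n) ℝ _ G (Classical.decRel G.Adj) _ _ with hLc
  have hH : Lc.IsHermitian :=
    (@SimpleGraph.posSemidef_lapMatrix (Fin n) ℝ _ G (Classical.decRel G.Adj) _ _ _ _).1
  have hEig : lapEigs G = hH.eigenvalues := rfl
  have hLL : Lc = G.lapMatrix ℝ := lapMatrix_eq G _ _
  set Λ : ℝ := mu G ⟨0, hn⟩ with hΛ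
  -- Rayleigh: quadratic form bounded by Λ
  have hray : ∀ x : Fin n → ℝ, x ⬝ᵥ (G.lapMatrix ℝ *ᵥ x) ≤ Λ * (x ⬝ᵥ x) := by
    intro x
    rw [← hLL]
    exact rayleigh_le hH Λ (fun i => by rw [← hEig]; exact mu_zero_ge hn G i) x
  -- all eigenvalues ≤ n
  have hupper : ∀ i, lapEigs G i ≤ (n : ℝ) := by
    rw [hEig]
    exact eig_le_of_forall hH n (fun x => by rw [hLL]; exact quad_le_card G x)
  -- a vertex of maximal degree
  obtain ⟨v, hv⟩ := G.exists_maximal_degree_vertex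
  -- max degree at least 1
  have hd1 : 1 ≤ G.maxDegree := by
    obtain ⟨e, hee⟩ := he
    induction e with
    | h u w =>
      rw [SimpleGraph.mem_edgeSet] at hee
      have : 0 < G.degree u := by
        rw [G.degree_pos_iff_exists_adj u]
        exact ⟨w, hee⟩
      exact le_trans this (G.degree_le_maxDegree u)
  set d : ℕ := G.degree v with hdv
  have hdΛ : (d : ℝ) * ((d:ℝ)+1)^2 ≤ Λ * ((d:ℝ)^2 + d) := by
    have h1 := tv_quad_ge G v
    have h2 := hray (tv G v)
    rw [lap_quad, tv_norm] at h2
    have h3 : (∑ i, ∑ j, if G.Adj i j then (tv G v i - tv G v j)^2 else 0)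
        = ∑ i, ∑ j, tvF G v i j := rfl
    rw [h3] at h2
    linarith
  have hdpos : (1:ℝ) ≤ (d:ℝ) := by
    have := hv ▸ hd1
    exact_mod_cast this
  have part1 : (G.maxDegree : ℝ) + 1 ≤ Λ := by
    rw [hv]
    push_cast
    nlinarith [hdΛ, hdpos]
  refine ⟨part1, fun hconn => ⟨fun heq => ?_, fun heq => ?_⟩⟩
  · -- equality ⇒ Δ = n - 1
    by_contra hne
    have hlt : G.maxDegree < n - 1 := by
      have h1 : G.maxDegree < n := by
        have := G.maxDegree_lt_card_verts
        simpa using this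
      omega
    -- S = closed neighborhood of v
    classical
    set S : Finset (Fin n) := insert v (G.neighborFinset v) with hS
    have hvS : v ∉ G.neighborFinset v := by
      rw [SimpleGraph.mem_neighborFinset]
      exact G.irrefl
    have hcard : S.card = d + 1 := by
      rw [hS, Finset.card_insert_of_notMem hvS]
      rfl
    have hcard_lt : S.card < n := by
      rw [hcard]
      have : d < n - 1 := hv ▸ hlt
      omega
    obtain ⟨w, hw⟩ : ∃ w, w ∉ S := by
      by_contra hc
      push_neg at hc
      have : S = Finset.univ := Finset.eq_univ_iff_forall.mpr hc
      rw [this, Finset.card_univ, Fintype.card_fin] at hcard_lt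
      omega
    obtain ⟨p⟩ := hconn v w
    obtain ⟨a, b, hab, haS, hbS⟩ :=
      walk_cross (S := (↑S : Set (Fin n))) p (by simp [hS]) (by simpa using hw)
    have hbv : b ≠ v := fun hc => hbS (by simp [hS, hc])
    have hvb : ¬ G.Adj v b := fun hc => hbS (by simp [hS, SimpleGraph.mem_neighborFinset, hc])
    have hva : G.Adj v a := by
      rcases Finset.mem_insert.mp (Finset.mem_coe.mp haS) with h | h
      · exfalso
        subst h
        exact hvb hab
      · exact (SimpleGraph.mem_neighborFinset _ _ _).mp h
    have hstrict := tv_quad_ge_strict G v hva hab hvb hbv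
    have h2 := hray (tv G v)
    rw [lap_quad, tv_norm] at h2
    have h3 : (∑ i, ∑ j, if G.Adj i j then (tv G v i - tv G v j)^2 else 0)
        = ∑ i, ∑ j, tvF G v i j := rfl
    rw [h3] at h2
    have hΛeq : Λ = (d : ℝ) + 1 := by rw [heq, hv]
    rw [hΛeq] at h2
    nlinarith [hstrict, h2, hdpos]
  · -- Δ = n - 1 ⇒ equality
    have hΛle : Λ ≤ (n : ℝ) := by
      obtain ⟨u, hu⟩ := mu_zero_mem hn G
      rw [hΛ, hu]
      exact hupper u
    have hcast : (G.maxDegree : ℝ) + 1 = (n : ℝ) := by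
      rw [heq]
      have h1 : (1:ℕ) ≤ n := hn
      push_cast [Nat.cast_sub h1]
      ring
    have : (n : ℝ) ≤ Λ := by rw [← hcast]; exact part1
    rw [hcast]
    linarith
end

section
/- Maclaurin's symmetric mean inequality: for positive reals a₁, …, aₙ, the sequence A₁ ≥ A₂^{1/2} ≥ A₃^{1/3} ≥ ⋯ ≥ Aₙ^{1/n} holds, where A_k is the k-th elementary symmetric polynomial of a₁,…,aₙ divided by C(n,k). Equality throughout holds if and only if all aᵢ are equal. -/
open Finset

/-- The `k`-th Maclaurin symmetric mean: `e_k(a) / C(n,k)`. -/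
noncomputable def symmMean {n : ℕ} (a : Fin n → ℝ) (k : ℕ) : ℝ :=
  (∑ t ∈ Finset.univ.powersetCard k, ∏ i ∈ t, a i) / (n.choose k)

lemma esymm_rec (n k : ℕ) (a : Fin (n+1) → ℝ) :
    ∑ t ∈ (univ : Finset (Fin (n+1))).powersetCard (k+1), ∏ i ∈ t, a i
    = (∑ t ∈ (univ : Finset (Fin n)).powersetCard (k+1), ∏ i ∈ t, a i.castSucc)
      + a (Fin.last n) *
        ∑ t ∈ (univ : Finset (Fin n)).powersetCard k, ∏ i ∈ t, a i.castSucc := by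
  have hx : Fin.last n ∉ (univ : Finset (Fin n)).map Fin.castSuccEmb := by
    simp only [mem_map, not_exists]
    rintro x ⟨-, h⟩
    exact absurd (congrArg Fin.val h) x.isLt.ne
  rw [Fin.univ_castSuccEmb, cons_eq_insert, powersetCard_succ_insert hx, sum_union, sum_image]
  · congr 1
    · rw [powersetCard_map, sum_map]
      refine sum_congr rfl fun t _ => ?_
      rw [RelEmbedding.coe_toEmbedding, mapEmbedding_apply, prod_map]; rfl
    · rw [powersetCard_map, sum_map, mul_sum]
      refine sum_congr rfl fun t _ => ?_
      rw [RelEmbedding.coe_toEmbedding, mapEmbedding_apply, prod_insert, prod_map]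
      · rfl
      · simp only [mem_map, not_exists]
        rintro x ⟨-, h⟩
        exact absurd (congrArg Fin.val h) x.isLt.ne
  · intro u hu v hv huv
    have hu' : Fin.last n ∉ u := fun h => hx ((mem_powersetCard.1 hu).1 h)
    have hv' : Fin.last n ∉ v := fun h => hx ((mem_powersetCard.1 hv).1 h)
    rw [← erase_insert hu', ← erase_insert hv', huv]
  · rw [disjoint_left]
    intro t ht ht'
    obtain ⟨u, hu, rfl⟩ := mem_image.1 ht'
    exact hx ((mem_powersetCard.1 ht).1 (mem_insert_self _ _))

lemma symmMean_zero {n : ℕ} (a : Fin n → ℝ) : symmMean a 0 = 1 := by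
  simp [symmMean]

lemma symmMean_zero_of_gt {n k : ℕ} (a : Fin n → ℝ) (h : n < k) : symmMean a k = 0 := by
  rw [symmMean, powersetCard_eq_empty.2 (by simpa using h)]
  simp

lemma symmMean_pos {n k : ℕ} (a : Fin n → ℝ) (ha : ∀ i, 0 < a i) (h : k ≤ n) :
    0 < symmMean a k := by
  apply div_pos
  · apply sum_pos
    · exact fun t _ => prod_pos fun i _ => ha i
    · exact powersetCard_nonempty.2 (by simpa using h)
  · exact_mod_cast Nat.choose_pos h

lemma symmMean_nonneg {n k : ℕ} (a : Fin n → ℝ) (ha : ∀ i, 0 < a i) :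
    0 ≤ symmMean a k := by
  rcases le_or_gt k n with h | h
  · exact (symmMean_pos a ha h).le
  · rw [symmMean_zero_of_gt a h]

lemma choose_id1 (n m : ℕ) (hm : m ≤ n) :
    ((n:ℝ) + 1) * (n.choose (m+1)) = ((n:ℝ) - m) * ((n+1).choose (m+1)) := by
  have h1 : n.choose (m+1) * (m+1) = n.choose m * (n - m) := Nat.choose_succ_right_eq n m
  have h2 : (n+1).choose (m+1) = n.choose m + n.choose (m+1) := Nat.choose_succ_succ n m
  have hd : (n:ℝ) - m = ((n - m : ℕ) : ℝ) := by
    push_cast [hm]; ring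
  rw [hd, h2]
  push_cast
  have h1' : ((n.choose (m+1) : ℝ)) * (m+1) = n.choose m * ((n - m : ℕ) : ℝ) := by
    exact_mod_cast congrArg (Nat.cast : ℕ → ℝ) h1
  have : ((n:ℝ)+1) = ((m:ℝ)+1) + ((n-m:ℕ):ℝ) := by push_cast [hm]; ring
  rw [this]
  nlinarith [h1']

lemma choose_id2 (n m : ℕ) :
    ((n:ℝ) + 1) * (n.choose m) = ((m:ℝ) + 1) * ((n+1).choose (m+1)) := by
  have h : ((n+1) * n.choose m : ℕ) = ((n+1).choose (m+1) * (m+1) : ℕ) := by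
    simpa [Nat.succ_eq_add_one] using Nat.add_one_mul_choose_eq n m
  have h2 := congrArg (Nat.cast (R:=ℝ)) h
  push_cast at h2
  linarith

lemma symmMean_rec {n : ℕ} (a : Fin (n+1) → ℝ) (m : ℕ) (hm : m ≤ n) :
    ((n:ℝ)+1) * symmMean a (m+1)
      = ((n:ℝ) - m) * symmMean (fun i => a i.castSucc) (m+1)
        + ((m:ℝ)+1) * a (Fin.last n) * symmMean (fun i => a i.castSucc) m := by
  rcases eq_or_lt_of_le hm with rfl | hlt
  · rw [symmMean, symmMean, symmMean, esymm_rec]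
    rw [powersetCard_eq_empty.2 (by simp), sum_empty, zero_add]
    simp only [sub_self, zero_mul, zero_add, Nat.choose_self, Nat.cast_one, div_one]
    ring
  · have hc1 : (0:ℝ) < (n+1).choose (m+1) := by exact_mod_cast Nat.choose_pos (by omega)
    have hc2 : (0:ℝ) < n.choose (m+1) := by exact_mod_cast Nat.choose_pos (by omega)
    have hc3 : (0:ℝ) < n.choose m := by exact_mod_cast Nat.choose_pos (by omega)
    rw [symmMean, symmMean, symmMean, esymm_rec]
    have e1 := choose_id1 n m hm
    have e2 := choose_id2 n m
    field_simp
    linear_combination (∑ t ∈ powersetCard (m+1) (univ : Finset (Fin n)), ∏ i ∈ t, a i.castSucc) * (n.choose m : ℝ) * e1 + a (Fin.last n) * (∑ t ∈ powersetCard m (univ : Finset (Fin n)), ∏ i ∈ t, a i.castSucc) * (n.choose (m+1) : ℝ) * e2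

lemma symmMean_rec' {n : ℕ} (a : Fin (n+1) → ℝ) (j : ℕ) (hj : j ≤ n+1) :
    ((n:ℝ)+1) * symmMean a j
      = ((n:ℝ)+1-(j:ℝ)) * symmMean (fun i => a i.castSucc) j
        + (j:ℝ) * a (Fin.last n) * symmMean (fun i => a i.castSucc) (j-1) := by
  cases j with
  | zero => simp [symmMean_zero]
  | succ m =>
    have := symmMean_rec a m (by omega)
    push_cast
    push_cast at this
    rw [show (n:ℝ)+1-((m:ℝ)+1) = (n:ℝ)-m by ring]
    exact this

set_option maxHeartbeats 2000000 in
lemma newton : ∀ (n : ℕ) (a : Fin n → ℝ), (∀ i, 0 < a i) → ∀ k : ℕ, 1 ≤ k →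
    symmMean a (k-1) * symmMean a (k+1) ≤ symmMean a k ^ 2 := by
  intro n
  induction n with
  | zero =>
    intro a ha k hk
    rw [symmMean_zero_of_gt a (by omega : (0:ℕ) < k+1)]
    simpa using sq_nonneg (symmMean a k)
  | succ n IH =>
    intro a ha k hk
    by_cases hkn : k + 1 ≤ n + 1
    case neg =>
      rw [symmMean_zero_of_gt a (by omega : n+1 < k+1)]
      simpa using sq_nonneg (symmMean a k)
    case pos =>
      obtain ⟨m, rfl⟩ := Nat.exists_eq_add_of_le hk
      -- k = 1 + m, with m + 2 ≤ n + 1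
      have hmn : m + 1 ≤ n := by omega
      set a' : Fin n → ℝ := fun i => a i.castSucc with ha'def
      have ha' : ∀ i, 0 < a' i := fun i => ha _
      set x := a (Fin.last n) with hxdef
      have hx : 0 < x := ha _
      set p : ℕ → ℝ := fun j => symmMean a' j with hpdef
      have pm_pos : 0 < p m := symmMean_pos a' ha' (by omega)
      have pm1_pos : 0 < p (m+1) := symmMean_pos a' ha' (by omega)
      have pmm_pos : 0 < p (m-1) := symmMean_pos a' ha' (by omega)
      have pm2_nonneg : 0 ≤ p (m+2) := symmMean_nonneg a' ha'
      have r0 := symmMean_rec' a m (by omega)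
      have r1 := symmMean_rec' a (m+1) (by omega)
      have r2 := symmMean_rec' a (m+2) (by omega)
      have IH2 : p m * p (m+2) ≤ p (m+1) ^ 2 := by
        have := IH a' ha' (m+1) (by omega)
        simpa using this
      have IH1 : (m:ℝ) * (p (m-1) * p (m+1)) ≤ (m:ℝ) * (p m ^ 2) := by
        rcases Nat.eq_zero_or_pos m with rfl | hm
        · simp
        · have h := IH a' ha' m (by omega)
          have h' : p (m-1) * p (m+1) ≤ p m ^ 2 := by
            have : m - 1 + 1 = m := by omega
            simpa [this] using h
          exact mul_le_mul_of_nonneg_left h' (by positivity)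
      have IH3 : (m:ℝ) * (p (m-1) * p (m+2)) ≤ (m:ℝ) * (p m * p (m+1)) := by
        rcases Nat.eq_zero_or_pos m with rfl | hm
        · simp
        · have h1 : p (m-1) * p (m+1) ≤ p m ^ 2 := by
            have h := IH a' ha' m (by omega)
            have : m - 1 + 1 = m := by omega
            simpa [this] using h
          have key : p (m-1) * p (m+2) ≤ p m * p (m+1) := by
            have hmul : (p (m-1) * p (m+1)) * (p m * p (m+2)) ≤ p m ^ 2 * p (m+1) ^ 2 :=
              mul_le_mul h1 IH2 (by positivity) (by positivity)
            refine le_of_mul_le_mul_right ?_ (by positivity : (0:ℝ) < p (m+1) * p m)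
            nlinarith [hmul]
          exact mul_le_mul_of_nonneg_left key (by positivity)
      -- coefficients
      have hB : (0:ℝ) ≤ (n:ℝ) - m - 1 := by
        have : (m:ℝ) + 1 ≤ n := by exact_mod_cast hmn
        linarith
      have hnm1 : (1:ℝ) ≤ (n:ℝ) - m := by linarith
      -- the three recursion formulas, simplified
      have goal' : ((n:ℝ)+1)^2 * (symmMean a m * symmMean a (m+2))
          ≤ ((n:ℝ)+1)^2 * (symmMean a (m+1) ^ 2) := by
        have e0 : ((n:ℝ)+1) * symmMean a m
            = ((n:ℝ)+1-m) * p m + (m:ℝ) * x * p (m-1) := r0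
        have e1 : ((n:ℝ)+1) * symmMean a (m+1)
            = ((n:ℝ)-m) * p (m+1) + ((m:ℝ)+1) * x * p m := by
          rw [r1]; push_cast; simp only [hpdef, ha'def, hxdef]; ring_nf
        have e2 : ((n:ℝ)+1) * symmMean a (m+2)
            = ((n:ℝ)-m-1) * p (m+2) + ((m:ℝ)+2) * x * p (m+1) := by
          rw [r2]; push_cast; simp only [hpdef, ha'def, hxdef]; ring_nf
        have expand : ((n:ℝ)+1)^2 * (symmMean a m * symmMean a (m+2))
            = (((n:ℝ)+1) * symmMean a m) * (((n:ℝ)+1) * symmMean a (m+2)) := by ring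
        have expand2 : ((n:ℝ)+1)^2 * (symmMean a (m+1) ^ 2)
            = (((n:ℝ)+1) * symmMean a (m+1)) ^ 2 := by ring
        rw [expand, expand2, e0, e1, e2]
        have t1 : (0:ℝ) ≤ x^2 * ((m:ℝ)+2) * ((m:ℝ) * (p m ^ 2) - (m:ℝ) * (p (m-1) * p (m+1))) :=
          mul_nonneg (mul_nonneg (sq_nonneg x) (by positivity)) (sub_nonneg.2 IH1)
        have t2 : (0:ℝ) ≤ x * ((n:ℝ)-m-1) * ((m:ℝ) * (p m * p (m+1)) - (m:ℝ) * (p (m-1) * p (m+2))) :=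
          mul_nonneg (mul_nonneg hx.le hB) (sub_nonneg.2 IH3)
        have t3 : (0:ℝ) ≤ (((n:ℝ)-m)^2 - 1) * (p (m+1)^2 - p m * p (m+2)) :=
          mul_nonneg (by nlinarith [hnm1]) (sub_nonneg.2 IH2)
        have t4 : (0:ℝ) ≤ (x * p m - p (m+1))^2 := sq_nonneg _
        nlinarith [t1, t2, t3, t4]
      have h2 : (1 + m) - 1 = m := by omega
      have h3 : (1 + m) + 1 = m + 2 := by omega
      have h4 : 1 + m = m + 1 := by omega
      rw [h2, h3, h4]
      exact le_of_mul_le_mul_left goal' (by positivity)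

lemma maclaurin_pow {n : ℕ} (a : Fin n → ℝ) (ha : ∀ i, 0 < a i) :
    ∀ k : ℕ, 1 ≤ k → k + 1 ≤ n → symmMean a (k+1) ^ k ≤ symmMean a k ^ (k+1) := by
  intro k
  induction k with
  | zero => omega
  | succ j IHj =>
    intro _ hkn
    rcases Nat.eq_zero_or_pos j with rfl | hj
    · -- k = 1 : p2 ≤ p1^2 from newton at k = 1
      have h := newton n a ha 1 le_rfl
      simpa [symmMean_zero] using h
    · -- k = j+1, j ≥ 1
      have IH : symmMean a (j+1) ^ j ≤ symmMean a j ^ (j+1) := IHj hj (by omega)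
      have hN := newton n a ha (j+1) (by omega)
      have hNj : symmMean a j * symmMean a (j+2) ≤ symmMean a (j+1) ^ 2 := by
        simpa using hN
      have p0 : 0 < symmMean a j := symmMean_pos a ha (by omega)
      have p1 : 0 < symmMean a (j+1) := symmMean_pos a ha (by omega)
      have p2 : 0 < symmMean a (j+2) := symmMean_pos a ha (by omega)
      -- (p_{j+2} p_j)^{j+1} ≤ (p_{j+1}^2)^{j+1}
      have step1 : (symmMean a j * symmMean a (j+2)) ^ (j+1)
          ≤ (symmMean a (j+1) ^ 2) ^ (j+1) :=
        pow_le_pow_left₀ (by positivity) hNj _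
      -- p_{j+1}^j ≤ p_j^{j+1}  (IH)
      -- want: p_{j+2}^{j+1} ≤ p_{j+1}^{j+2}
      -- p_{j+2}^{j+1} * p_j^{j+1} * p_{j+1}^j ≤ p_{j+1}^{2j+2} * p_{j+1}^j
      --                                       and p_{j+1}^j ≤ p_j^{j+1}
      refine le_of_mul_le_mul_right ?_ (show (0:ℝ) < symmMean a j ^ (j+1) by positivity)
      calc symmMean a (j+2) ^ (j+1) * symmMean a j ^ (j+1)
          = (symmMean a j * symmMean a (j+2)) ^ (j+1) := by rw [mul_pow]; ring
        _ ≤ (symmMean a (j+1) ^ 2) ^ (j+1) := step1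
        _ = symmMean a (j+1) ^ (j+2) * symmMean a (j+1) ^ j := by
            rw [← pow_mul, ← pow_add]; ring_nf
        _ ≤ symmMean a (j+1) ^ (j+2) * symmMean a j ^ (j+1) := by
            exact mul_le_mul_of_nonneg_left IH (by positivity)

lemma esymm_one {n : ℕ} (a : Fin n → ℝ) :
    ∑ t ∈ (univ : Finset (Fin n)).powersetCard 1, ∏ i ∈ t, a i = ∑ i, a i := by
  rw [powersetCard_one, sum_map]
  simp

lemma esymm_two : ∀ (n : ℕ) (a : Fin n → ℝ),
    2 * ∑ t ∈ (univ : Finset (Fin n)).powersetCard 2, ∏ i ∈ t, a i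
      = (∑ i, a i)^2 - ∑ i, (a i)^2 := by
  intro n
  induction n with
  | zero => intro a; rw [powersetCard_eq_empty.2 (by simp)]; simp
  | succ n IH =>
    intro a
    have h := esymm_rec n 1 a
    rw [show (1:ℕ)+1 = 2 from rfl] at h
    rw [h, esymm_one, Fin.sum_univ_castSucc (f := a), Fin.sum_univ_castSucc (f := fun i => (a i)^2)]
    have := IH (fun i => a i.castSucc)
    nlinarith [this]

lemma symmMean_one {n : ℕ} (a : Fin n → ℝ) : symmMean a 1 = (∑ i, a i) / n := by
  rw [symmMean, esymm_one, Nat.choose_one_right]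

lemma symmMean_two {n : ℕ} (a : Fin n → ℝ) :
    symmMean a 2 = ((∑ i, a i)^2 - ∑ i, (a i)^2) / ((n:ℝ) * ((n:ℝ)-1)) := by
  rw [symmMean, Nat.cast_choose_two, div_div_eq_mul_div, mul_comm, esymm_two n a]

lemma symmMean_const {n k : ℕ} (a : Fin n → ℝ) (c : ℝ) (hconst : ∀ i, a i = c)
    (h : k ≤ n) : symmMean a k = c ^ k := by
  rw [symmMean]
  have : ∀ t ∈ (univ : Finset (Fin n)).powersetCard k, ∏ i ∈ t, a i = c ^ k := by
    intro t ht
    rw [prod_congr rfl (fun i _ => hconst i), prod_const, (mem_powersetCard.1 ht).2]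
  rw [sum_congr rfl this, sum_const, card_powersetCard, card_univ, Fintype.card_fin,
    nsmul_eq_mul]
  have hC : ((n.choose k : ℝ)) ≠ 0 := by exact_mod_cast (Nat.choose_pos h).ne'
  field_simp

lemma sum_sq_expand {n : ℕ} (a : Fin n → ℝ) :
    ∑ i, ∑ j, (a i - a j)^2
      = 2*(n:ℝ)*(∑ i, (a i)^2) - 2*(∑ i, a i)^2 := by
  have h : ∀ i, ∑ j, (a i - a j)^2
      = (n:ℝ)*(a i)^2 - 2*(a i)*(∑ j, a j) + ∑ j, (a j)^2 := by
    intro i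
    have : ∀ j, (a i - a j)^2 = (a i)^2 - 2*(a i)*(a j) + (a j)^2 := fun j => by ring
    rw [sum_congr rfl fun j _ => this j]
    rw [sum_add_distrib, sum_sub_distrib, sum_const, card_univ, Fintype.card_fin,
      ← mul_sum]
    push_cast
    ring
  rw [sum_congr rfl fun i _ => h i]
  rw [sum_add_distrib, sum_sub_distrib, sum_const, card_univ, Fintype.card_fin,
    ← mul_sum, ← sum_mul, ← mul_sum]
  push_cast
  ring


/-- Maclaurin's symmetric mean inequality, with the equality case. -/
theorem maclaurin_symm_mean {n : ℕ} (a : Fin n → ℝ) (ha : ∀ i, 0 < a i) :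
    (∀ k, 1 ≤ k → k + 1 ≤ n →
      symmMean a (k + 1) ^ ((1 : ℝ) / (k + 1)) ≤ symmMean a k ^ ((1 : ℝ) / k)) ∧
    ((∀ k, 1 ≤ k → k + 1 ≤ n →
      symmMean a (k + 1) ^ ((1 : ℝ) / (k + 1)) = symmMean a k ^ ((1 : ℝ) / k)) ↔
      ∀ i j, a i = a j) := by

  constructor
  · intro k hk hkn
    have h := maclaurin_pow a ha k hk hkn
    have p0 : 0 < symmMean a k := symmMean_pos a ha (by omega)
    have p1 : 0 < symmMean a (k+1) := symmMean_pos a ha hkn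
    have hk0 : ((k:ℝ)) ≠ 0 := Nat.cast_ne_zero.2 (by omega)
    have h' : symmMean a (k+1) ^ ((k:ℝ)) ≤ symmMean a k ^ ((k:ℝ)+1) := by
      rw [show ((k:ℝ)+1) = (((k+1 : ℕ)) : ℝ) by push_cast; ring,
        Real.rpow_natCast, Real.rpow_natCast]
      exact h
    have e : (0:ℝ) ≤ 1 / ((k:ℝ) * ((k:ℝ)+1)) := by positivity
    have h2 := Real.rpow_le_rpow (by positivity) h' e
    rw [← Real.rpow_mul p1.le, ← Real.rpow_mul p0.le] at h2
    rw [show (k:ℝ) * (1/((k:ℝ)*((k:ℝ)+1))) = 1/((k:ℝ)+1) by field_simp,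
      show ((k:ℝ)+1) * (1/((k:ℝ)*((k:ℝ)+1))) = 1/(k:ℝ) by field_simp] at h2
    exact h2
  constructor
  · intro hEq i j
    rcases le_or_gt n 1 with hn | hn
    · exact congrArg a (Fin.ext (by have := i.isLt; have := j.isLt; omega))
    · have h := hEq 1 le_rfl (by omega)
      have p1 : 0 < symmMean a 1 := symmMean_pos a ha (by omega)
      have p2 : 0 < symmMean a 2 := symmMean_pos a ha (by omega)
      have h2 : symmMean a 2 = symmMean a 1 ^ (2:ℕ) := by
        have h' : symmMean a 2 ^ ((1:ℝ)/((1:ℝ)+1)) = symmMean a 1 := by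
          have h1eq : ((1:ℕ):ℝ) = (1:ℝ) := by norm_num
          rw [show ((1:ℕ)+1 : ℕ) = 2 from rfl] at h
          calc symmMean a 2 ^ ((1:ℝ)/((1:ℝ)+1))
              = symmMean a 2 ^ ((1:ℝ)/(((1:ℕ):ℝ)+1)) := by norm_num
            _ = symmMean a 1 ^ ((1:ℝ)/((1:ℕ):ℝ)) := h
            _ = symmMean a 1 := by norm_num
        have := congrArg (fun t : ℝ => t ^ (2:ℝ)) h'
        rw [← Real.rpow_mul p2.le] at this
        norm_num at this
        rw [← this]
      rw [symmMean_one, symmMean_two] at h2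
      set S1 := ∑ i, a i with hS1
      set S2 := ∑ i, (a i)^2 with hS2
      have hn2 : (2:ℝ) ≤ (n:ℝ) := by exact_mod_cast hn
      have hnz : (n:ℝ) ≠ 0 := by linarith
      have hnz1 : (n:ℝ) - 1 ≠ 0 := by linarith
      have key : (n:ℝ) * S2 = S1^2 := by
        field_simp at h2
        apply mul_left_cancel₀ hnz
        apply mul_left_cancel₀ hnz1
        linear_combination (-(n:ℝ)*((n:ℝ)-1)) * h2
      have hzero : ∑ i, ∑ j, (a i - a j)^2 = 0 := by
        rw [sum_sq_expand]
        rw [← hS1, ← hS2]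
        linarith [key]
      have hterm : ∀ i ∈ (univ : Finset (Fin n)), ∑ j, (a i - a j)^2 = 0 := by
        rw [← sum_eq_zero_iff_of_nonneg (fun i _ => by positivity)]
        exact hzero
      have hterm2 := (sum_eq_zero_iff_of_nonneg (fun j _ => by positivity)).1
        (hterm i (mem_univ i)) j (mem_univ j)
      have := pow_eq_zero_iff (n := 2) (by norm_num) |>.1 hterm2
      linarith [this]
  · intro hall k hk hkn
    have hn : 0 < n := by omega
    have hc : 0 < a ⟨0, hn⟩ := ha _
    set c := a ⟨0, hn⟩ with hcdef
    rw [symmMean_const a c (fun i => hall i _) hkn,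
      symmMean_const a c (fun i => hall i _) (by omega)]
    rw [← Real.rpow_natCast c (k+1), ← Real.rpow_natCast c k,
      ← Real.rpow_mul hc.le, ← Real.rpow_mul hc.le]
    congr 1
    push_cast
    field_simp
end

section
/- For 2 ≤ p ≤ ⌊n/2⌋ and any connected graph G obtained by deleting p edges from Kₙ, the Kirchhoff index satisfies Kf(G) ≥ n − 1 + 2p/(n − 2), with equality if and only if G ≅ Kₙ − pK₂ (the p deleted edges form a perfect matching on 2p vertices). -/
open Finset

open Matrix

section Spectral

variable {m : Type*} [Fintype m] [DecidableEq m] {A : Matrix m m ℝ} (hA : A.IsHermitian)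

lemma sum_eigs_eq_trace : ∑ i, hA.eigenvalues i = A.trace := by
  have h := hA.spectral_theorem
  have : A.trace = (Matrix.diagonal (RCLike.ofReal ∘ hA.eigenvalues) : Matrix m m ℝ).trace := by
    conv_lhs => rw [h, Unitary.conjStarAlgAut_apply]
    rw [Matrix.trace_mul_cycle, (Matrix.mem_unitaryGroup_iff').mp (hA.eigenvectorUnitary).2,
      Matrix.one_mul]
  rw [this, Matrix.trace_diagonal]
  simp

lemma sum_sq_eigs_eq_trace_sq : ∑ i, (hA.eigenvalues i)^2 = (A * A).trace := by
  have h := hA.conjStarAlgAut_star_eigenvectorUnitary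
  rw [Unitary.conjStarAlgAut_apply, Unitary.coe_star, star_star] at h
  have hU : (hA.eigenvectorUnitary : Matrix m m ℝ) * (star (hA.eigenvectorUnitary : Matrix m m ℝ)) = 1 :=
    (Matrix.mem_unitaryGroup_iff).mp (hA.eigenvectorUnitary).2
  have h2 : (Matrix.diagonal (RCLike.ofReal ∘ hA.eigenvalues) : Matrix m m ℝ)
      * (Matrix.diagonal (RCLike.ofReal ∘ hA.eigenvalues)) =
      star (hA.eigenvectorUnitary : Matrix m m ℝ) * (A * A) * (hA.eigenvectorUnitary : Matrix m m ℝ) := by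
    rw [← h]
    simp only [Matrix.mul_assoc]
    congr 2
    rw [← Matrix.mul_assoc, ← Matrix.mul_assoc, hU]
    simp [Matrix.mul_assoc]
  have := congrArg Matrix.trace h2
  rw [Matrix.diagonal_mul_diagonal, Matrix.trace_diagonal] at this
  rw [Matrix.trace_mul_cycle, ← Matrix.mul_assoc, hU, Matrix.one_mul] at this
  rw [← this]
  simp [sq]

lemma eigvec_dot_self (i : m) :
    (⇑(hA.eigenvectorBasis i) : m → ℝ) ⬝ᵥ (⇑(hA.eigenvectorBasis i) : m → ℝ) = 1 := by
  have h1 : ‖hA.eigenvectorBasis i‖ = 1 := hA.eigenvectorBasis.orthonormal.1 i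
  have h2 : (inner ℝ (hA.eigenvectorBasis i) (hA.eigenvectorBasis i) : ℝ) = 1 := by
    rw [real_inner_self_eq_norm_sq, h1]; norm_num
  rw [← h2, PiLp.inner_apply]
  simp [dotProduct, sq]

lemma eig_le_of_psd {c : ℝ} (h : (c • (1 : Matrix m m ℝ) - A).PosSemidef) (i : m) :
    hA.eigenvalues i ≤ c := by
  set v : m → ℝ := ⇑(hA.eigenvectorBasis i) with hv
  have hAv : A *ᵥ v = hA.eigenvalues i • v := hA.mulVec_eigenvectorBasis i
  have h0 := h.re_dotProduct_nonneg v
  simp only [RCLike.re_to_real] at h0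
  rw [Matrix.sub_mulVec, Matrix.smul_mulVec, Matrix.one_mulVec, hAv,
    dotProduct_sub, dotProduct_smul, dotProduct_smul] at h0
  have hsv : star v = v := by simp
  rw [hsv, eigvec_dot_self] at h0
  simp only [smul_eq_mul, mul_one] at h0
  linarith

lemma eig_cubic_root {a b : ℝ} (h : A * A * A + a • (A * A) + b • A = 0) (i : m) :
    (hA.eigenvalues i)^3 + a * (hA.eigenvalues i)^2 + b * (hA.eigenvalues i) = 0 := by
  set μ := hA.eigenvalues i
  set v : m → ℝ := ⇑(hA.eigenvectorBasis i) with hv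
  have hAv : A *ᵥ v = μ • v := hA.mulVec_eigenvectorBasis i
  have hA2 : (A * A) *ᵥ v = (μ^2) • v := by
    rw [← Matrix.mulVec_mulVec, hAv, Matrix.mulVec_smul, hAv, smul_smul]; ring_nf
  have hA3 : (A * A * A) *ᵥ v = (μ^3) • v := by
    rw [← Matrix.mulVec_mulVec, hAv, Matrix.mulVec_smul, hA2, smul_smul]; ring_nf
  have h0 := congrArg (fun M => M *ᵥ v) h
  simp only [Matrix.add_mulVec, Matrix.smul_mulVec, hA2, hA3, hAv,
    Matrix.zero_mulVec, smul_smul] at h0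
  have hcomb : (μ^3 + a * μ^2 + b * μ) • v = 0 := by
    rw [add_smul, add_smul, h0]
  have hvne : v ≠ 0 := by
    intro hc
    have := eigvec_dot_self hA i
    rw [← hv, hc] at this
    simp [dotProduct] at this
  rcases smul_eq_zero.mp hcomb with h' | h'
  · exact h'
  · exact absurd h' hvne

lemma card_zero_eigs (hrank : A.rank = Fintype.card m - 1) (hm : 1 ≤ Fintype.card m) :
    (univ.filter fun i => hA.eigenvalues i = 0).card = 1 := by
  have h1 : Fintype.card {i // hA.eigenvalues i ≠ 0} = Fintype.card m - 1 := by
    rw [← hA.rank_eq_card_non_zero_eigs]; exact hrank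
  have h2 : (univ.filter fun i => ¬ hA.eigenvalues i = 0).card = Fintype.card m - 1 := by
    rw [← h1, Fintype.card_subtype]
  have h3 := Finset.card_filter_add_card_filter_not
    (s := (univ : Finset m)) (p := fun i => hA.eigenvalues i = 0)
  rw [Finset.card_univ] at h3
  omega

end Spectral

section GraphAux

variable {n : ℕ} (G : SimpleGraph (Fin n)) [DecidableRel G.Adj]

lemma lap_trace : (G.lapMatrix ℝ).trace = ∑ v, (G.degree v : ℝ) := by
  unfold Matrix.trace
  apply Finset.sum_congr rfl
  intro v _
  simp [Matrix.diag, SimpleGraph.lapMatrix, SimpleGraph.degMatrix]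

lemma lap_row_sq (v : Fin n) :
    ∑ w, (G.lapMatrix ℝ v w)^2 = (G.degree v : ℝ)^2 + G.degree v := by
  have hpt : ∀ w, (G.lapMatrix ℝ v w)^2
      = (if v = w then (G.degree v : ℝ)^2 else 0) + (if G.Adj v w then 1 else 0) := by
    intro w
    by_cases h : v = w
    · subst h
      simp [SimpleGraph.lapMatrix, SimpleGraph.degMatrix]
    · simp only [SimpleGraph.lapMatrix, Matrix.sub_apply, SimpleGraph.degMatrix,
        Matrix.diagonal_apply_ne _ h, SimpleGraph.adjMatrix_apply, if_neg h]
      by_cases ha : G.Adj v w <;> simp [ha]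
  rw [Finset.sum_congr rfl (fun w _ => hpt w), Finset.sum_add_distrib]
  rw [Finset.sum_ite_eq (Finset.univ : Finset (Fin n)) v (fun _ => (G.degree v : ℝ)^2)]
  rw [← SimpleGraph.degree_eq_sum_if_adj]
  simp

lemma lap_trace_sq : (G.lapMatrix ℝ * G.lapMatrix ℝ).trace
    = ∑ v, ((G.degree v : ℝ)^2 + G.degree v) := by
  unfold Matrix.trace
  apply Finset.sum_congr rfl
  intro v _
  rw [← lap_row_sq G v]
  simp only [Matrix.diag, Matrix.mul_apply]
  apply Finset.sum_congr rfl
  intro w _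
  rw [sq]
  congr 1
  exact ((G.isSymm_lapMatrix (R := ℝ)).apply v w)

lemma lap_mul_ones : G.lapMatrix ℝ * Matrix.of (fun _ _ : Fin n => (1:ℝ)) = 0 := by
  ext u v
  simp only [Matrix.mul_apply, Matrix.of_apply, mul_one, Matrix.zero_apply]
  have := congrFun (G.lapMatrix_mulVec_const_eq_zero (R := ℝ)) u
  simpa [Matrix.mulVec, dotProduct] using this

lemma ones_mul_lap : Matrix.of (fun _ _ : Fin n => (1:ℝ)) * G.lapMatrix ℝ = 0 := by
  ext u v
  simp only [Matrix.mul_apply, Matrix.of_apply, one_mul, Matrix.zero_apply]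
  have := congrFun (G.lapMatrix_mulVec_const_eq_zero (R := ℝ)) v
  simp only [Matrix.mulVec, dotProduct, mul_one, Pi.zero_apply] at this
  rw [← this]
  apply Finset.sum_congr rfl
  intro w _
  exact ((G.isSymm_lapMatrix (R := ℝ)).apply w v).symm

lemma ones_mul_ones : (Matrix.of (fun _ _ : Fin n => (1:ℝ))) * (Matrix.of (fun _ _ : Fin n => (1:ℝ)))
    = (n : ℝ) • Matrix.of (fun _ _ : Fin n => (1:ℝ)) := by
  ext u v
  simp [Matrix.mul_apply]

lemma ones_posSemidef : (Matrix.of (fun _ _ : Fin n => (1:ℝ))).PosSemidef := by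
  have : (Matrix.of (fun _ _ : Fin n => (1:ℝ)))
      = (Matrix.of (fun (_ : Unit) (_ : Fin n) => (1:ℝ)))ᴴ * (Matrix.of (fun (_ : Unit) (_ : Fin n) => (1:ℝ))) := by
    ext u v
    simp [Matrix.mul_apply]
  rw [this]
  exact Matrix.posSemidef_conjTranspose_mul_self _

end GraphAux

section GraphAux2

variable {n : ℕ} (G : SimpleGraph (Fin n)) [DecidableRel G.Adj]

lemma lap_compl_repr :
    (n:ℝ) • (1 : Matrix (Fin n) (Fin n) ℝ) - G.lapMatrix ℝ
      = Gᶜ.lapMatrix ℝ + Matrix.of (fun _ _ : Fin n => (1:ℝ)) := by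
  ext u v
  have hdc : Gᶜ.degree u = n - 1 - G.degree u := by
    have := SimpleGraph.degree_compl (G := G) (v := u)
    simpa using this
  have hdlt : G.degree u < n := by
    have := G.degree_lt_card_verts u
    simpa using this
  by_cases h : u = v
  · subst h
    simp only [Matrix.sub_apply, Matrix.smul_apply, Matrix.one_apply_eq, Matrix.add_apply,
      Matrix.of_apply, SimpleGraph.lapMatrix, SimpleGraph.degMatrix, Matrix.diagonal_apply_eq,
      SimpleGraph.adjMatrix_apply, SimpleGraph.irrefl, if_false, smul_eq_mul, mul_one]
    rw [hdc]
    have h1 : 1 ≤ n := by omega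
    have h2 : G.degree u ≤ n - 1 := by omega
    push_cast [Nat.cast_sub h2, Nat.cast_sub h1]
    ring
  · simp only [Matrix.sub_apply, Matrix.smul_apply, Matrix.one_apply_ne h, Matrix.add_apply,
      Matrix.of_apply, SimpleGraph.lapMatrix, SimpleGraph.degMatrix,
      Matrix.diagonal_apply_ne _ h, SimpleGraph.adjMatrix_apply, smul_eq_mul, mul_zero]
    have hcadj : Gᶜ.Adj u v ↔ ¬ G.Adj u v := by
      rw [SimpleGraph.compl_adj]
      exact ⟨fun ⟨_, h2⟩ => h2, fun h2 => ⟨h, h2⟩⟩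
    by_cases ha : G.Adj u v
    · rw [if_pos ha, if_neg (by rw [hcadj]; exact not_not_intro ha)]
      ring
    · rw [if_neg ha, if_pos (hcadj.mpr ha)]
      ring

lemma matching_lap_sq (h : ∀ v, G.degree v ≤ 1) :
    G.lapMatrix ℝ * G.lapMatrix ℝ = (2:ℝ) • G.lapMatrix ℝ := by
  have hAA : ∀ u v, (G.adjMatrix ℝ * G.adjMatrix ℝ) u v
      = if u = v then (G.degree u : ℝ) else 0 := by
    intro u v
    by_cases huv : u = v
    · subst huv
      rw [if_pos rfl]
      exact G.adjMatrix_mul_self_apply_self u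
    · rw [if_neg huv, SimpleGraph.adjMatrix_mul_apply]
      apply Finset.sum_eq_zero
      intro w hw
      rw [SimpleGraph.mem_neighborFinset] at hw
      simp only [SimpleGraph.adjMatrix_apply, ite_eq_right_iff, one_ne_zero]
      intro hwv
      have hsub : ({u, v} : Finset (Fin n)) ⊆ G.neighborFinset w := by
        intro x hx
        rw [Finset.mem_insert, Finset.mem_singleton] at hx
        rw [SimpleGraph.mem_neighborFinset]
        rcases hx with rfl | rfl
        · exact hw.symm
        · exact hwv
      have hc2 : ({u, v} : Finset (Fin n)).card = 2 := by
        rw [Finset.card_insert_of_notMem (by simpa using huv), Finset.card_singleton]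
      have := Finset.card_le_card hsub
      rw [hc2] at this
      have hdw := h w
      rw [SimpleGraph.degree] at hdw
      omega
  ext u v
  simp only [SimpleGraph.lapMatrix, Matrix.sub_mul, Matrix.mul_sub, Matrix.sub_apply,
    Matrix.smul_apply, smul_eq_mul]
  rw [hAA]
  have hDD : (G.degMatrix ℝ * G.degMatrix ℝ) u v
      = if u = v then (G.degree u : ℝ)^2 else 0 := by
    simp only [SimpleGraph.degMatrix, Matrix.diagonal_mul_diagonal, Matrix.diagonal_apply, sq]
  have hDA : (G.degMatrix ℝ * G.adjMatrix ℝ) u v = (G.degree u : ℝ) * (G.adjMatrix ℝ) u v := by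
    rw [SimpleGraph.degMatrix, Matrix.diagonal_mul]
  have hAD : (G.adjMatrix ℝ * G.degMatrix ℝ) u v = (G.adjMatrix ℝ) u v * (G.degree v : ℝ) := by
    rw [SimpleGraph.degMatrix, Matrix.mul_diagonal]
  rw [hDD, hDA, hAD]
  simp only [SimpleGraph.degMatrix, Matrix.diagonal_apply, SimpleGraph.adjMatrix_apply]
  by_cases huv : u = v
  · subst huv
    simp only [if_pos rfl, SimpleGraph.irrefl, if_false]
    have hdu := h u
    interval_cases hdu2 : (G.degree u) <;> norm_num
  · simp only [if_neg huv]
    by_cases ha : G.Adj u v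
    · have hdu : G.degree u = 1 := by
        have h1 : 0 < G.degree u := by
          rw [← SimpleGraph.card_neighborFinset_eq_degree, Finset.card_pos]
          exact ⟨v, (SimpleGraph.mem_neighborFinset G u v).mpr ha⟩
        have := h u; omega
      have hdv : G.degree v = 1 := by
        have h1 : 0 < G.degree v := by
          rw [← SimpleGraph.card_neighborFinset_eq_degree, Finset.card_pos]
          exact ⟨u, (SimpleGraph.mem_neighborFinset G v u).mpr ha.symm⟩
        have := h v; omega
      rw [if_pos ha, hdu, hdv]
      norm_num
    · rw [if_neg ha]
      norm_num

end GraphAux2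

section GraphAux3

variable {n p : ℕ} (G : SimpleGraph (Fin n)) [DecidableRel G.Adj]

lemma compl_degree_sum (hpe : Gᶜ.edgeSet.ncard = p) : ∑ v, Gᶜ.degree v = 2 * p := by
  rw [SimpleGraph.sum_degrees_eq_twice_card_edges]
  congr 1
  rw [← hpe, SimpleGraph.edgeFinset, Set.ncard_eq_toFinset_card']

lemma connected_of_compl_edges (hp2 : 2 ≤ p) (hpn : 2 * p ≤ n)
    (hpe : Gᶜ.edgeSet.ncard = p) : G.Connected := by
  classical
  have hn4 : 4 ≤ n := le_trans (by omega) hpn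
  rw [SimpleGraph.connected_iff]
  refine ⟨?_, ⟨⟨0, by omega⟩⟩⟩
  intro u v
  by_contra hnr
  set S : Finset (Fin n) := univ.filter (fun w => G.Reachable u w) with hS
  have hu : u ∈ S := by
    rw [hS, Finset.mem_filter]
    exact ⟨Finset.mem_univ u, SimpleGraph.Reachable.refl u⟩
  have hv : v ∉ S := by simp [hS, hnr]
  have hadj : ∀ a ∈ S, ∀ b ∈ univ \ S, Gᶜ.Adj a b := by
    intro a ha b hb
    rw [Finset.mem_sdiff] at hb
    rw [hS, Finset.mem_filter] at ha
    have hbn : ¬ G.Reachable u b := by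
      intro hr; exact hb.2 (by simp [hS, hr])
    constructor
    · rintro rfl; exact hbn ha.2
    · intro hab; exact hbn (ha.2.trans hab.reachable)
  have hmaps : ∀ ab ∈ S ×ˢ (univ \ S), s(ab.1, ab.2) ∈ Gᶜ.edgeFinset := by
    rintro ⟨a, b⟩ hab
    rw [Finset.mem_product] at hab
    rw [SimpleGraph.mem_edgeFinset, SimpleGraph.mem_edgeSet]
    exact hadj a hab.1 b hab.2
  have hinj : Set.InjOn (fun ab : Fin n × Fin n => s(ab.1, ab.2)) ↑(S ×ˢ (univ \ S)) := by
    rintro ⟨a, b⟩ hab ⟨a', b'⟩ hab' heq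
    rw [Finset.mem_coe, Finset.mem_product] at hab hab'
    rw [Finset.mem_sdiff] at hab hab'
    simp only [Sym2.eq, Sym2.rel_iff', Prod.mk.injEq, Prod.swap_prod_mk] at heq
    rcases heq with ⟨rfl, rfl⟩ | ⟨rfl, rfl⟩
    · rfl
    · exact absurd hab.1 hab'.2.2
  have hcard := Finset.card_le_card_of_injOn _ hmaps hinj
  rw [Finset.card_product, Finset.card_sdiff_of_subset (Finset.subset_univ S), Finset.card_univ,
    Fintype.card_fin] at hcard
  have hcard2 : Gᶜ.edgeFinset.card = p := by
    rw [← hpe, SimpleGraph.edgeFinset, Set.ncard_eq_toFinset_card']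
  rw [hcard2] at hcard
  have hs1 : 1 ≤ S.card := Finset.card_pos.mpr ⟨u, hu⟩
  have hs2 : S.card ≤ n - 1 := by
    have : S ⊂ univ := Finset.ssubset_univ_iff.mpr (fun hC => hv (hC ▸ Finset.mem_univ v))
    have := Finset.card_lt_card this
    rw [Finset.card_univ, Fintype.card_fin] at this
    omega
  obtain ⟨s', hs'⟩ := Nat.exists_eq_add_of_le hs1
  have ht1 : 1 ≤ n - S.card := by omega
  obtain ⟨t', ht'⟩ := Nat.exists_eq_add_of_le ht1
  have hexp : S.card * (n - S.card) = (1 + s') * (1 + t') := by rw [← hs', ← ht']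
  have : n - 1 ≤ p := by
    have h1 : (1 + s') * (1 + t') = 1 + s' + t' + s' * t' := by ring
    omega
  omega

lemma rank_lap_of_connected (hc : G.Connected) : (G.lapMatrix ℝ).rank = n - 1 := by
  classical
  have hcard : Fintype.card G.ConnectedComponent = 1 := by
    rw [Fintype.card_eq_one_iff]
    obtain ⟨w⟩ := hc.nonempty
    refine ⟨G.connectedComponentMk w, ?_⟩
    intro y
    induction y using SimpleGraph.ConnectedComponent.ind with
    | _ w' => exact SimpleGraph.ConnectedComponent.eq.mpr (hc.preconnected w' w)
  have hker := G.card_connectedComponent_eq_finrank_ker_toLin'_lapMatrix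
  rw [hcard] at hker
  have hrn : (G.lapMatrix ℝ).rank
      + Module.finrank ℝ (LinearMap.ker (Matrix.toLin' (G.lapMatrix ℝ))) = n := by
    rw [Matrix.rank, ← Matrix.toLin'_apply']
    rw [LinearMap.finrank_range_add_finrank_ker]
    simp [Module.finrank_fintype_fun_eq_card]
  omega

end GraphAux3

section GraphAux4

variable {n : ℕ} (G : SimpleGraph (Fin n)) [DecidableRel G.Adj]

lemma lap_cubic (h2 : Gᶜ.lapMatrix ℝ * Gᶜ.lapMatrix ℝ = (2:ℝ) • Gᶜ.lapMatrix ℝ) :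
    G.lapMatrix ℝ * G.lapMatrix ℝ * G.lapMatrix ℝ
      + (-(2*(n:ℝ)-2)) • (G.lapMatrix ℝ * G.lapMatrix ℝ)
      + ((n:ℝ)*((n:ℝ)-2)) • G.lapMatrix ℝ = 0 := by
  set A := G.lapMatrix ℝ with hA
  set L := Gᶜ.lapMatrix ℝ with hL
  set J := Matrix.of (fun _ _ : Fin n => (1:ℝ)) with hJ
  have hrepr : A = (n:ℝ) • (1 : Matrix (Fin n) (Fin n) ℝ) - J - L := by
    have := lap_compl_repr G
    rw [← hJ, ← hA, ← hL] at this
    have h := this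
    linear_combination (norm := module) -h
  have hJJ : J * J = (n:ℝ) • J := ones_mul_ones
  have hLJ : L * J = 0 := lap_mul_ones Gᶜ
  have hJL : J * L = 0 := ones_mul_lap Gᶜ
  rw [hrepr]
  simp only [Matrix.sub_mul, Matrix.mul_sub, Matrix.smul_mul, Matrix.mul_smul,
    Matrix.one_mul, Matrix.mul_one, hJJ, hLJ, hJL, h2, smul_zero, Matrix.zero_mul,
    Matrix.mul_zero, sub_zero, zero_sub, smul_neg, Matrix.neg_mul,
    Matrix.mul_neg, neg_neg, smul_smul]
  module

end GraphAux4

lemma natCast_le_sq (k : ℕ) : (k:ℝ) ≤ (k:ℝ)^2 := by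
  rcases Nat.eq_zero_or_pos k with h | h
  · simp [h]
  · have h1 : (1:ℝ) ≤ (k:ℝ) := by exact_mod_cast h
    nlinarith

lemma natCast_lt_sq {k : ℕ} (h : 2 ≤ k) : (k:ℝ) < (k:ℝ)^2 := by
  have h1 : (2:ℝ) ≤ (k:ℝ) := by exact_mod_cast h
  nlinarith

set_option maxHeartbeats 1000000 in

/-- Lower bound for the Kirchhoff index of `Kₙ` minus `p` edges; equality iff the
deleted edges form a matching `pK₂`. -/
theorem kf_complete_minus_p_edges_lower {n p : ℕ} (G : SimpleGraph (Fin n))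
    (hp2 : 2 ≤ p) (hpn : 2 * p ≤ n) (hpe : Gᶜ.edgeSet.ncard = p) :
    ((n : ℝ) - 1 + 2 * p / ((n : ℝ) - 2) ≤ kf G) ∧
    (kf G = (n : ℝ) - 1 + 2 * p / ((n : ℝ) - 2) ↔
      ∀ v, (Gᶜ.neighborSet v).ncard ≤ 1) := by
  letI : DecidableRel G.Adj := Classical.decRel G.Adj
  have hn4 : 4 ≤ n := le_trans (by omega) hpn
  have hN4 : (4:ℝ) ≤ (n:ℝ) := by exact_mod_cast hn4
  have hN0 : (n:ℝ) ≠ 0 := by linarith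
  have hN2 : (n:ℝ) - 2 ≠ 0 := by linarith
  have hPSD := SimpleGraph.posSemidef_lapMatrix ℝ G
  have hA : (G.lapMatrix ℝ).IsHermitian := hPSD.1
  set μ : Fin n → ℝ := hA.eigenvalues with hμdef
  have hkfeq : kf G = (n:ℝ) * ∑ i, (μ i)⁻¹ := by
    have h1 : lapEigs G = μ := rfl
    rw [kf, h1, Fintype.card_fin]
  -- degrees
  have hdegle : ∀ v, G.degree v ≤ n - 1 := by
    intro v
    have := G.degree_lt_card_verts v
    rw [Fintype.card_fin] at this
    omega
  have hdeg : ∀ v, (G.degree v : ℝ) = (n:ℝ) - 1 - (Gᶜ.degree v : ℝ) := by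
    intro v
    have hdc : Gᶜ.degree v = n - 1 - G.degree v := by
      have := SimpleGraph.degree_compl (G := G) (v := v)
      simpa using this
    rw [hdc]
    push_cast [Nat.cast_sub (hdegle v), Nat.cast_sub (show 1 ≤ n by omega)]
    ring
  have hesumN : ∑ v, Gᶜ.degree v = 2 * p := compl_degree_sum G hpe
  have hesum : ∑ v, (Gᶜ.degree v : ℝ) = 2 * (p:ℝ) := by exact_mod_cast congrArg Nat.cast hesumN
  set E2 : ℝ := ∑ v, (Gᶜ.degree v : ℝ)^2 with hE2def
  -- eigenvalue power sums
  have hS1 : ∑ i, μ i = (n:ℝ)*((n:ℝ)-1) - 2*(p:ℝ) := by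
    rw [sum_eigs_eq_trace hA, lap_trace G]
    rw [Finset.sum_congr rfl (fun v _ => hdeg v), Finset.sum_sub_distrib, Finset.sum_const,
      Finset.card_univ, Fintype.card_fin, hesum]
    push_cast
    ring
  have hS2 : ∑ i, (μ i)^2
      = ((n:ℝ)*((n:ℝ)-1)^2 - 4*(p:ℝ)*((n:ℝ)-1) + E2) + ((n:ℝ)*((n:ℝ)-1) - 2*(p:ℝ)) := by
    rw [sum_sq_eigs_eq_trace_sq hA, lap_trace_sq G]
    rw [Finset.sum_add_distrib]
    have hsq : ∑ v, (G.degree v : ℝ)^2 = (n:ℝ)*((n:ℝ)-1)^2 - 4*(p:ℝ)*((n:ℝ)-1) + E2 := by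
      have hpt : ∀ v, (G.degree v : ℝ)^2
          = ((n:ℝ)-1)^2 - 2*((n:ℝ)-1)*(Gᶜ.degree v : ℝ) + (Gᶜ.degree v : ℝ)^2 := by
        intro v; rw [hdeg v]; ring
      rw [Finset.sum_congr rfl (fun v _ => hpt v)]
      rw [Finset.sum_add_distrib, Finset.sum_sub_distrib, Finset.sum_const, Finset.card_univ,
        Fintype.card_fin, ← Finset.mul_sum, hesum, ← hE2def]
      push_cast
      ring
    have hd1 : ∑ v, (G.degree v : ℝ) = (n:ℝ)*((n:ℝ)-1) - 2*(p:ℝ) := by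
      rw [Finset.sum_congr rfl (fun v _ => hdeg v), Finset.sum_sub_distrib, Finset.sum_const,
        Finset.card_univ, Fintype.card_fin, hesum]
      push_cast
      ring
    rw [hsq, hd1]
  have hμ0 : ∀ i, 0 ≤ μ i := fun i => hPSD.eigenvalues_nonneg i
  have hμN : ∀ i, μ i ≤ (n:ℝ) := by
    have hpsd2 : ((n:ℝ) • (1 : Matrix (Fin n) (Fin n) ℝ) - G.lapMatrix ℝ).PosSemidef := by
      rw [lap_compl_repr G]
      exact (SimpleGraph.posSemidef_lapMatrix ℝ Gᶜ).add (ones_posSemidef)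
    exact fun i => eig_le_of_psd hA hpsd2 i
  have hconn : G.Connected := connected_of_compl_edges G hp2 hpn hpe
  have hcz : (Finset.univ.filter fun i => μ i = 0).card = 1 :=
    card_zero_eigs hA (by simpa using rank_lap_of_connected G hconn)
      (by rw [Fintype.card_fin]; omega)
  -- the master decomposition
  set c0 : ℝ := 1/(n:ℝ) + 2/((n:ℝ)-2) with hc0
  set B : ℝ := -(1/((n:ℝ)*((n:ℝ)-2)) + (2*(n:ℝ)-2)/((n:ℝ)*((n:ℝ)-2)^2)) with hB
  set C : ℝ := 1/((n:ℝ)*((n:ℝ)-2)^2) with hC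
  set rem : Fin n → ℝ :=
    fun i => ((n:ℝ) - μ i)*((n:ℝ) - 2 - μ i)^2/((n:ℝ) * μ i * ((n:ℝ)-2)^2) with hrem
  have hkey : ∀ x : ℝ, x ≠ 0 →
      x⁻¹ = c0 + B*x + C*x^2 + ((n:ℝ) - x)*((n:ℝ) - 2 - x)^2/((n:ℝ) * x * ((n:ℝ)-2)^2) := by
    intro x hx
    rw [hc0, hB, hC]
    field_simp
    ring
  set Znz : Finset (Fin n) := Finset.univ.filter (fun i => ¬ μ i = 0) with hZnz
  set R : ℝ := ∑ i ∈ Znz, rem i with hR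
  have hsplit : ∑ i, (μ i)⁻¹ = ∑ i ∈ Znz, (μ i)⁻¹ := by
    rw [← Finset.sum_filter_add_sum_filter_not Finset.univ (fun i => μ i = 0)]
    have hz : ∑ i ∈ Finset.univ.filter (fun i => μ i = 0), (μ i)⁻¹ = 0 := by
      apply Finset.sum_eq_zero
      intro i hi
      rw [Finset.mem_filter] at hi
      rw [hi.2]
      simp
    rw [hz, zero_add]
  have hpoly : ∑ i, (c0 + B * μ i + C * (μ i)^2)
      = (n:ℝ)*c0 + B*(∑ i, μ i) + C*(∑ i, (μ i)^2) := by
    rw [Finset.sum_add_distrib, Finset.sum_add_distrib, Finset.sum_const, Finset.card_univ,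
      Fintype.card_fin, ← Finset.mul_sum, ← Finset.mul_sum]
    push_cast
    ring
  have hzsum : ∑ i ∈ Finset.univ.filter (fun i => μ i = 0), (c0 + B * μ i + C * (μ i)^2)
      = c0 := by
    have : ∀ i ∈ Finset.univ.filter (fun i => μ i = 0), (c0 + B * μ i + C * (μ i)^2) = c0 := by
      intro i hi
      rw [Finset.mem_filter] at hi
      rw [hi.2]
      ring
    rw [Finset.sum_congr rfl this, Finset.sum_const, hcz, one_smul]
  have hsum2 : ∑ i ∈ Znz, (μ i)⁻¹
      = ((n:ℝ)*c0 + B*(∑ i, μ i) + C*(∑ i, (μ i)^2) - c0) + R := by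
    have h1 : ∀ i ∈ Znz, (μ i)⁻¹ = (c0 + B * μ i + C * (μ i)^2) + rem i := by
      intro i hi
      rw [hZnz, Finset.mem_filter] at hi
      exact hkey (μ i) hi.2
    rw [Finset.sum_congr rfl h1, Finset.sum_add_distrib, ← hR]
    congr 1
    have h2 : ∑ i ∈ Znz, (c0 + B * μ i + C * (μ i)^2)
        = ∑ i, (c0 + B * μ i + C * (μ i)^2)
          - ∑ i ∈ Finset.univ.filter (fun i => μ i = 0), (c0 + B * μ i + C * (μ i)^2) := by
      rw [← Finset.sum_filter_add_sum_filter_not Finset.univ (fun i => μ i = 0)]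
      rw [hZnz]
      ring
    rw [h2, hzsum, hpoly]
  have hmaster : kf G = ((n:ℝ) - 1 + 2*(p:ℝ)/((n:ℝ)-2))
      + (E2 - 2*(p:ℝ))/((n:ℝ)-2)^2 + (n:ℝ) * R := by
    rw [hkfeq, hsplit, hsum2, hS1, hS2, hc0, hB, hC]
    field_simp
    ring
  -- positivity facts
  have hE2ge : 2*(p:ℝ) ≤ E2 := by
    rw [hE2def, ← hesum]
    apply Finset.sum_le_sum
    intro v _
    exact natCast_le_sq _
  have hRnn : 0 ≤ R := by
    rw [hR]
    apply Finset.sum_nonneg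
    intro i hi
    rw [hZnz, Finset.mem_filter] at hi
    have hpos : 0 < μ i := lt_of_le_of_ne (hμ0 i) (Ne.symm hi.2)
    rw [hrem]
    apply div_nonneg
    · exact mul_nonneg (by linarith [hμN i]) (sq_nonneg _)
    · have : (0:ℝ) < (n:ℝ) * μ i * ((n:ℝ)-2)^2 := by
        apply mul_pos (mul_pos (by linarith) hpos)
        have : (0:ℝ) < (n:ℝ) - 2 := by linarith
        positivity
      linarith
  have hfirst : (0:ℝ) ≤ (E2 - 2*(p:ℝ))/((n:ℝ)-2)^2 := by
    apply div_nonneg (by linarith)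
    positivity
  have hNR : (0:ℝ) ≤ (n:ℝ) * R := mul_nonneg (by linarith) hRnn
  -- ncard = degree
  have hncard : ∀ v, (Gᶜ.neighborSet v).ncard = Gᶜ.degree v := by
    intro v
    rw [Set.ncard_eq_toFinset_card']
    congr 1
  constructor
  · rw [hmaster]; linarith
  constructor
  · intro heq
    have hz : (E2 - 2*(p:ℝ))/((n:ℝ)-2)^2 + (n:ℝ) * R = 0 := by
      rw [hmaster] at heq; linarith
    have hE2eq : E2 = 2*(p:ℝ) := by
      have h1 : (E2 - 2*(p:ℝ))/((n:ℝ)-2)^2 = 0 := by linarith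
      have h2 : ((n:ℝ)-2)^2 ≠ 0 := pow_ne_zero 2 hN2
      field_simp at h1
      linarith
    -- each complement degree ≤ 1
    intro v
    rw [hncard]
    by_contra hge
    push_neg at hge
    have h2le : 2 ≤ Gᶜ.degree v := hge
    have hsumlt : ∑ w, (Gᶜ.degree w : ℝ) < ∑ w, (Gᶜ.degree w : ℝ)^2 := by
      apply Finset.sum_lt_sum
      · intro w _
        exact natCast_le_sq _
      · exact ⟨v, Finset.mem_univ v, natCast_lt_sq h2le⟩
    rw [hesum] at hsumlt
    rw [hE2def] at hE2eq
    linarith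
  · intro hdle
    have he1 : ∀ v, Gᶜ.degree v ≤ 1 := by
      intro v
      have := hdle v
      rwa [hncard v] at this
    have hE2eq : E2 = 2*(p:ℝ) := by
      rw [hE2def, ← hesum]
      apply Finset.sum_congr rfl
      intro v _
      have hv := he1 v
      interval_cases h : (Gᶜ.degree v) <;> norm_num
    have hcub := lap_cubic G (matching_lap_sq Gᶜ he1)
    have hroots : ∀ i, μ i ≠ 0 → μ i = (n:ℝ) - 2 ∨ μ i = (n:ℝ) := by
      intro i hne
      have := eig_cubic_root hA hcub i
      have hfac : μ i * ((μ i - ((n:ℝ)-2)) * (μ i - (n:ℝ))) = 0 := by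
        linear_combination this
      rcases mul_eq_zero.mp hfac with h | h
      · exact absurd h hne
      · rcases mul_eq_zero.mp h with h | h
        · left; linarith
        · right; linarith
    have hR0 : R = 0 := by
      rw [hR]
      apply Finset.sum_eq_zero
      intro i hi
      rw [hZnz, Finset.mem_filter] at hi
      have hnum : ((n:ℝ) - μ i)*((n:ℝ) - 2 - μ i)^2 = 0 := by
        rcases hroots i hi.2 with h | h <;> rw [h] <;> ring
      rw [hrem]
      simp only [hnum, zero_div]
    rw [hmaster, hE2eq, hR0]
    ring
end

section
/- The Laplacian spectrum of Kₙ − K_{1,p} (complete graph minus a star with p edges, p ≤ n − 2) is n with multiplicity n − p − 1, n − 1 with multiplicity p − 1, and n − p − 1 and 0 each with multiplicity 1; consequently Kf(Kₙ − K_{1,p}) = n − p − 1 + n(p−1)/(n−1) + n/(n−p−1). -/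
open Finset Polynomial Matrix

open Finset Polynomial Matrix

theorem aux_charpoly_conj {m : Type*} [Fintype m] [DecidableEq m] {R : Type*} [CommRing R]
    (P Q A : Matrix m m R) (h : Q * P = 1) :
    (P * A * Q).charpoly = A.charpoly := by
  have h2 : P * Q = 1 := mul_eq_one_comm.mp h
  have hmapQP : (C : R →+* R[X]).mapMatrix Q * (C : R →+* R[X]).mapMatrix P = 1 := by
    rw [← _root_.map_mul, h, _root_.map_one]
  have hmapPQ : (C : R →+* R[X]).mapMatrix P * (C : R →+* R[X]).mapMatrix Q = 1 := by
    rw [← _root_.map_mul, h2, _root_.map_one]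
  have key : charmatrix (P * A * Q) =
      (C : R →+* R[X]).mapMatrix P * charmatrix A * (C : R →+* R[X]).mapMatrix Q := by
    unfold charmatrix
    rw [mul_sub, sub_mul, ← _root_.map_mul, ← _root_.map_mul]
    congr 1
    rw [mul_assoc, (Matrix.scalar_commute (X : R[X]) (fun r => Commute.all _ r) _).eq,
      ← mul_assoc, hmapPQ, one_mul]
  rw [Matrix.charpoly, key, det_mul, det_mul, mul_comm, ← mul_assoc, ← det_mul, hmapQP,
    det_one, one_mul, Matrix.charpoly]

theorem aux_charpoly_diagonal {m : Type*} [Fintype m] [DecidableEq m] {R : Type*} [CommRing R]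
    (d : m → R) :
    (Matrix.diagonal d).charpoly = ∏ i, (X - C (d i)) := by
  have : charmatrix (Matrix.diagonal d) = Matrix.diagonal fun i => X - C (d i) := by
    ext i j
    rcases eq_or_ne i j with rfl | hij
    · simp
    · simp [hij, Matrix.diagonal_apply_ne _ hij]
  rw [Matrix.charpoly, this, det_diagonal]

theorem aux_charpoly_hermitian {m : Type*} [Fintype m] [DecidableEq m]
    {A : Matrix m m ℝ} (hA : A.IsHermitian) :
    A.charpoly = ∏ i, (X - C (hA.eigenvalues i)) := by
  have hsp := hA.spectral_theorem
  have hU : star (hA.eigenvectorUnitary : Matrix m m ℝ) * (hA.eigenvectorUnitary : Matrix m m ℝ) = 1 := by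
    simpa using (hA.eigenvectorUnitary.2.1)
  have : A.charpoly = (Matrix.diagonal (RCLike.ofReal ∘ hA.eigenvalues)).charpoly := by
    conv_lhs => rw [hsp]
    exact aux_charpoly_conj _ _ _ hU
  rw [this]
  rw [show (RCLike.ofReal ∘ hA.eigenvalues : m → ℝ) = hA.eigenvalues by
    funext i; simp [RCLike.ofReal]]
  exact aux_charpoly_diagonal _


open Finset

/-- Laplacian spectrum and Kirchhoff index of `Kₙ - K_{1,p}` (complete graph minus
a star with `p` edges). -/
theorem lap_spectrum_complete_minus_star {n p : ℕ} (G : SimpleGraph (Fin n))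
    (hp1 : 1 ≤ p) (hpn : p + 2 ≤ n) (hpe : Gᶜ.edgeSet.ncard = p)
    (hstar : ∃ c : Fin n, ∀ u v : Fin n, Gᶜ.Adj u v → u = c ∨ v = c) :
    Finset.univ.val.map (lapEigs G) =
      Multiset.replicate (n - p - 1) (n : ℝ) + Multiset.replicate (p - 1) ((n : ℝ) - 1) +
        {((n : ℝ) - p - 1), (0 : ℝ)} ∧
    kf G = (n : ℝ) - p - 1 + n * ((p : ℝ) - 1) / ((n : ℝ) - 1) + n / ((n : ℝ) - p - 1) := by
  letI : DecidableRel G.Adj := Classical.decRel G.Adj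
  obtain ⟨c, hstar⟩ := hstar
  set S : Finset (Fin n) := Gᶜ.neighborFinset c with hS
  have hcS : c ∉ S := by simp [hS]
  have hmemS : ∀ {v}, v ∈ S ↔ Gᶜ.Adj c v := fun {v} => by
    simp [hS, SimpleGraph.mem_neighborFinset]
  have hadj : ∀ u v, Gᶜ.Adj u v ↔ (u = c ∧ v ∈ S) ∨ (v = c ∧ u ∈ S) := by
    intro u v
    constructor
    · intro h
      rcases hstar u v h with rfl | rfl
      · exact Or.inl ⟨rfl, hmemS.2 h⟩
      · exact Or.inr ⟨rfl, hmemS.2 h.symm⟩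
    · rintro (⟨rfl, hv⟩ | ⟨rfl, hu⟩)
      · exact hmemS.1 hv
      · exact (hmemS.1 hu).symm
  have himg : Gᶜ.edgeSet = (fun s => s(c, s)) '' (S : Set (Fin n)) := by
    ext e
    induction e with
    | _ u v =>
      simp only [SimpleGraph.mem_edgeSet, Set.mem_image, Finset.mem_coe]
      constructor
      · intro h
        rcases hstar u v h with rfl | rfl
        · exact ⟨v, hmemS.2 h, rfl⟩
        · exact ⟨u, hmemS.2 h.symm, Sym2.eq_swap⟩
      · rintro ⟨s, hs, he⟩
        have : Gᶜ.Adj c s := hmemS.1 hs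
        rw [← SimpleGraph.mem_edgeSet, he, SimpleGraph.mem_edgeSet] at this
        exact this
  have hScard : S.card = p := by
    rw [himg, Set.ncard_image_of_injOn, Set.ncard_coe_finset] at hpe
    · exact hpe
    · intro a ha b hb hab
      simp only [Sym2.eq, Sym2.rel_iff', Prod.mk.injEq, Prod.swap_prod_mk] at hab
      rcases hab with ⟨-, h⟩ | ⟨h1, h2⟩
      · exact h
      · exact absurd (h2 ▸ Finset.mem_coe.1 ha) hcS
  -- degrees of the complement
  have hdegc : ∀ i, Gᶜ.degree i = (if i = c then p else if i ∈ S then 1 else 0) := by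
    intro i
    by_cases hic : i = c
    · subst hic
      simp only [if_true]
      rw [← hScard]
      rfl
    · by_cases his : i ∈ S
      · have h1 : Gᶜ.neighborFinset i = {c} := by
          ext w
          simp only [SimpleGraph.mem_neighborFinset, hadj, Finset.mem_singleton]
          constructor
          · rintro (⟨h, -⟩ | ⟨h, -⟩)
            · exact absurd h hic
            · exact h
          · rintro rfl
            exact Or.inr ⟨rfl, his⟩
        rw [SimpleGraph.degree, h1]
        simp [hic, his]
      · have h1 : Gᶜ.neighborFinset i = ∅ := by
          ext w
          simp only [SimpleGraph.mem_neighborFinset, hadj, Finset.notMem_empty, iff_false]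
          rintro (⟨h, -⟩ | ⟨-, h⟩)
          · exact hic h
          · exact his h
        rw [SimpleGraph.degree, h1]
        simp [hic, his]
  have hdeg : ∀ i, (G.degree i : ℝ) =
      (n : ℝ) - 1 - (if i = c then (p : ℝ) else if i ∈ S then 1 else 0) := by
    intro i
    have h4 : Gᶜᶜ.neighborFinset i = G.neighborFinset i := by
      ext w
      simp only [SimpleGraph.mem_neighborFinset, compl_compl]
    have h2' : (Gᶜ)ᶜ.degree i = Fintype.card (Fin n) - 1 - Gᶜ.degree i :=
      SimpleGraph.degree_compl (Gᶜ) (v := i)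
    rw [Fintype.card_fin] at h2'
    have h2 : G.degree i = n - 1 - Gᶜ.degree i := by
      rw [← h2', SimpleGraph.degree, SimpleGraph.degree, h4]
    have h3 : Gᶜ.degree i ≤ p := by rw [hdegc i]; split_ifs <;> omega
    rw [h2, hdegc i]
    split_ifs with h4 h5
    · rw [Nat.cast_sub (by omega), Nat.cast_sub (by omega)]
      push_cast
      ring
    · rw [Nat.cast_sub (by omega), Nat.cast_sub (by omega)]
      push_cast
      ring
    · rw [Nat.cast_sub (by omega), Nat.cast_sub (by omega)]
      push_cast
      ring
  -- key formula for Laplacian action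
  have key : ∀ (v : Fin n → ℝ) (i), ∑ k, G.lapMatrix ℝ i k * v k =
      (n : ℝ) * v i - (∑ k, v k) -
        (if i = c then (p : ℝ) else if i ∈ S then 1 else 0) * v i +
        (if i = c then ∑ k ∈ S, v k else if i ∈ S then v c else 0) := by
    intro v i
    have hE : ∀ k, G.lapMatrix ℝ i k * v k =
        (n : ℝ) * (if k = i then v k else 0) - v k -
          (if k = i then (if i = c then (p : ℝ) else if i ∈ S then 1 else 0) * v k else 0) +
          (if i = c then (if k ∈ S then v k else 0)
            else if i ∈ S then (if k = c then v k else 0) else 0) := by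
      intro k
      have hentry : G.lapMatrix ℝ i k =
          (if i = k then (G.degree i : ℝ) else 0) - (if G.Adj i k then 1 else 0) := by
        simp [SimpleGraph.lapMatrix, SimpleGraph.degMatrix, Matrix.diagonal_apply]
      rw [hentry]
      by_cases hik : k = i
      · subst hik
        simp only [if_pos rfl, SimpleGraph.irrefl, if_false, if_neg (G.loopless.irrefl k)]
        rw [hdeg k]
        by_cases hkc : k = c
        · subst hkc
          simp [hcS]
          ring
        · by_cases hkS : k ∈ S
          · simp [hkc, hkS]
            ring
          · simp [hkc, hkS]
            ring
      · have hik' : ¬(i = k) := fun h => hik h.symm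
        have hGc : Gᶜ.Adj i k ↔ (i = c ∧ k ∈ S) ∨ (k = c ∧ i ∈ S) := hadj i k
        have hGadj : G.Adj i k ↔ i ≠ k ∧ ¬Gᶜ.Adj i k := by
          conv_lhs => rw [← compl_compl G]
          exact SimpleGraph.compl_adj Gᶜ i k
        have hthird : (if i = c then (if k ∈ S then v k else 0)
            else if i ∈ S then (if k = c then v k else 0) else 0) =
            if Gᶜ.Adj i k then v k else 0 := by
          by_cases hic : i = c
          · subst hic
            by_cases hkS : k ∈ S
            · simp [hkS, hGc.2 (Or.inl ⟨rfl, hkS⟩)]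
            · have : ¬Gᶜ.Adj i k := by
                rw [hGc]
                rintro (⟨-, h⟩ | ⟨rfl, h⟩)
                · exact hkS h
                · exact hcS h
              simp [hkS, this]
          · by_cases hiS : i ∈ S
            · by_cases hkc : k = c
              · subst hkc
                simp [hic, hiS, hGc.2 (Or.inr ⟨rfl, hiS⟩)]
              · have : ¬Gᶜ.Adj i k := by
                  rw [hGc]
                  rintro (⟨h, -⟩ | ⟨h, -⟩)
                  · exact hic h
                  · exact hkc h
                simp [hic, hiS, hkc, this]
            · have : ¬Gᶜ.Adj i k := by
                rw [hGc]
                rintro (⟨h, -⟩ | ⟨-, h⟩)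
                · exact hic h
                · exact hiS h
              simp [hic, hiS, this]
        rw [hthird]
        by_cases hGcadj : Gᶜ.Adj i k
        · have : ¬G.Adj i k := by rw [hGadj]; tauto
          simp [hik, hik', this, hGcadj]
        · have : G.Adj i k := by rw [hGadj]; exact ⟨hik', hGcadj⟩
          simp [hik, hik', this, hGcadj]
    rw [Finset.sum_congr rfl (fun k _ => hE k)]
    rw [Finset.sum_add_distrib, Finset.sum_sub_distrib, Finset.sum_sub_distrib]
    congr 1
    · congr 1
      · congr 1
        rw [← Finset.mul_sum, Finset.sum_ite_eq' Finset.univ i v]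
        simp
      · rw [Finset.sum_ite_eq' Finset.univ i _]
        simp
    · by_cases hic : i = c
      · simp only [hic, if_true]
        rw [Finset.sum_ite_mem, Finset.univ_inter]
      · by_cases hiS : i ∈ S
        · simp only [hic, hiS, if_false, if_true]
          rw [Finset.sum_ite_eq' Finset.univ c v]
          simp
        · simp [hic, hiS]
  obtain ⟨s0, hs0⟩ : ∃ s, s ∈ S := Finset.card_pos.1 (by omega)
  have hs0c : s0 ≠ c := fun h => hcS (h ▸ hs0)
  set P : Matrix (Fin n) (Fin n) ℝ := fun k j =>
    if j = c then 1
    else if j = s0 then (if k = c then (p : ℝ) else 0) - (if k ∈ S then 1 else 0)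
    else if j ∈ S then (if k = j then 1 else 0) - (if k = s0 then 1 else 0)
    else (if k = j then (p : ℝ) + 1 else 0) - (if k = c then 1 else 0) -
      (if k ∈ S then 1 else 0) with hP
  have hsumS : ∀ x : ℝ, (∑ k, if k ∈ S then x else 0) = p * x := by
    intro x
    rw [Finset.sum_ite_mem, Finset.univ_inter, Finset.sum_const, hScard, nsmul_eq_mul]
  have hsumSind : ∀ (a : Fin n) (x : ℝ), (∑ k ∈ S, if k = a then x else 0) =
      if a ∈ S then x else 0 := by
    intro a x
    rw [Finset.sum_ite_eq' S a (fun _ => x)]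
  have hA : ∀ j, ∑ k, P k j = if j = c then (n : ℝ) else 0 := by
    intro j
    by_cases hjc : j = c
    · simp [hP, hjc, Finset.card_univ]
    · by_cases hjs : j = s0
      · simp only [hP, hjc, hjs, if_false, if_true, Finset.sum_sub_distrib, hsumS]
        simp [hjc, hScard]
      · by_cases hjS : j ∈ S
        · simp only [hP, hjc, hjs, hjS, if_false, if_true, Finset.sum_sub_distrib, hsumS]
          simp [hjc, hScard]
        · simp only [hP, hjc, hjs, hjS, if_false, if_true, Finset.sum_sub_distrib, hsumS]
          simp [hjc, hScard]
  have hB : ∀ j, ∑ k ∈ S, P k j =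
      if j = c then (p : ℝ) else if j = s0 then -(p : ℝ) else if j ∈ S then 0 else -(p : ℝ) := by
    intro j
    by_cases hjc : j = c
    · simp [hP, hjc, hScard]
    · by_cases hjs : j = s0
      · simp only [hP, hjc, hjs, if_false, if_true, Finset.sum_sub_distrib, hsumSind]
        simp [hjc, hcS, hScard]
      · by_cases hjS : j ∈ S
        · simp only [hP, hjc, hjs, hjS, if_false, if_true, Finset.sum_sub_distrib, hsumSind]
          simp [hjc, hjS, hs0]
        · simp only [hP, hjc, hjs, hjS, if_false, if_true, Finset.sum_sub_distrib, hsumSind]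
          simp [hjc, hjS, hcS, hScard]
  set Q : Matrix (Fin n) (Fin n) ℝ := fun i k =>
    if i = c then 1 / n
    else if i = s0 then (if k = c then 1 / ((p : ℝ) + 1) else 0) -
      (if k ∈ S then 1 / ((p : ℝ) * (p + 1)) else 0)
    else if i ∈ S then (if k = i then 1 else 0) - (if k ∈ S then 1 / (p : ℝ) else 0)
    else (if k = i then 1 / ((p : ℝ) + 1) else 0) - 1 / ((n : ℝ) * (p + 1)) with hQ
  set d : Fin n → ℝ := fun j =>
    if j = c then 0
    else if j = s0 then (n : ℝ) - p - 1
    else if j ∈ S then (n : ℝ) - 1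
    else (n : ℝ) with hd
  have hn0 : (n : ℝ) ≠ 0 := Nat.cast_ne_zero.2 (by omega)
  have hp0 : (p : ℝ) ≠ 0 := Nat.cast_ne_zero.2 (by omega)
  have hp1' : (p : ℝ) + 1 ≠ 0 := by positivity
  have hcs0 : ¬(c = s0) := fun h => hs0c h.symm
  -- master identity for L*P = P*D
  have hmaster : ∀ i j, (n : ℝ) * P i j - (if j = c then (n : ℝ) else 0)
      - (if i = c then (p : ℝ) else if i ∈ S then 1 else 0) * P i j
      + (if i = c then
          (if j = c then (p : ℝ) else if j = s0 then -(p : ℝ) else if j ∈ S then 0 else -(p : ℝ))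
         else if i ∈ S then P c j else 0)
      = P i j * d j := by
    intro i j
    by_cases hjc : j = c
    · by_cases hic : i = c
      · simp [hP, hd, hjc, hic, hcS, hs0c, hs0, hcS] <;> ring
      · by_cases hiS : i ∈ S <;> simp [hP, hd, hjc, hic, hiS, hcS, hs0c, hs0, hcS] <;> ring
    · by_cases hjs : j = s0
      · by_cases hic : i = c
        · simp [hP, hd, hjs, hic, hjc, hcS, hcs0, hs0c, hs0, hcS] <;> ring
        · by_cases hiS : i ∈ S
          · by_cases his0 : i = s0
            · simp [hP, hd, hjs, hic, hiS, his0, hjc, hcS, hcs0, hs0c, hs0, hcS] <;> ring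
            · simp [hP, hd, hjs, hic, hiS, his0, hjc, hcS, hcs0, hs0c, hs0, hcS] <;> ring
          · have his0 : ¬(i = s0) := fun h => hiS (h ▸ hs0)
            simp [hP, hd, hjs, hic, hiS, his0, hjc, hcS, hcs0, hs0c, hs0, hcS] <;> ring
      · by_cases hjS : j ∈ S
        · have hcj : ¬(c = j) := fun h => hjc h.symm
          by_cases hic : i = c
          · simp [hP, hd, hic, hjc, hjs, hjS, hcj, hcs0, hs0c, hs0, hcS]
          · by_cases hiS : i ∈ S
            · by_cases hij : i = j
              · simp [hP, hd, hic, hiS, hij, hjc, hjs, hjS, hcj, hcs0, hs0c, hs0, hcS] <;> ring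
              · by_cases his0 : i = s0
                · simp [hP, hd, hic, hiS, hij, his0, hjc, hjs, hjS, hcj, hcs0, hs0c, hs0, hcS] <;> ring
                · simp [hP, hd, hic, hiS, hij, his0, hjc, hjs, hjS, hcj, hcs0, hs0c, hs0, hcS] <;> ring
            · have hij : ¬(i = j) := fun h => hiS (h ▸ hjS)
              have his0 : ¬(i = s0) := fun h => hiS (h ▸ hs0)
              simp [hP, hd, hic, hiS, hij, his0, hjc, hjs, hjS, hcj, hcs0, hs0c, hs0, hcS] <;> ring
        · have hcj : ¬(c = j) := fun h => hjc h.symm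
          have hs0j : ¬(s0 = j) := fun h => hjs h.symm
          by_cases hic : i = c
          · simp [hP, hd, hic, hjc, hjs, hjS, hcj, hs0j, hcS, hs0c, hs0, hcS] <;> ring
          · by_cases hiS : i ∈ S
            · have hij : ¬(i = j) := fun h => hjS (h ▸ hiS)
              simp [hP, hd, hic, hiS, hij, hjc, hjs, hjS, hcj, hs0j, hs0c, hs0, hcS] <;> ring
            · by_cases hij : i = j
              · simp [hP, hd, hic, hiS, hij, hjc, hjs, hjS, hcj, hs0j, hs0c, hs0, hcS] <;> ring
              · simp [hP, hd, hic, hiS, hij, hjc, hjs, hjS, hcj, hs0j, hs0c, hs0, hcS] <;> ring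
  -- Q * P = 1 pointwise
  have hQPentry : ∀ i j, (∑ k, Q i k * P k j) = if i = j then (1 : ℝ) else 0 := by
    intro i j
    by_cases hic : i = c
    · have h1 : ∀ k, Q i k * P k j = (1 / (n : ℝ)) * P k j := by
        intro k; simp [hQ, hic]
      rw [Finset.sum_congr rfl fun k _ => h1 k, ← Finset.mul_sum, hA j]
      by_cases hjc : j = c
      · rw [if_pos hjc, if_pos (hic.trans hjc.symm)]
        field_simp <;> ring_nf
      · rw [if_neg hjc, if_neg (fun h : i = j => hjc (h ▸ hic ▸ rfl))]
        ring
    · by_cases his0 : i = s0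
      · have h1 : ∀ k, Q i k * P k j =
            (if k = c then (1 / ((p : ℝ) + 1)) * P k j else 0) -
              (if k ∈ S then (1 / ((p : ℝ) * (p + 1))) * P k j else 0) := by
          intro k
          simp only [hQ, hic, his0, hs0c, hs0, if_false, if_true]
          split_ifs <;> ring
        rw [Finset.sum_congr rfl fun k _ => h1 k, Finset.sum_sub_distrib,
          Finset.sum_ite_eq' Finset.univ c fun k => (1 / ((p : ℝ) + 1)) * P k j,
          Finset.sum_ite_mem, Finset.univ_inter, ← Finset.mul_sum, hB j]
        simp only [Finset.mem_univ, if_true]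
        by_cases hjc : j = c
        · simp [hP, his0, hjc, hs0c, hs0, hcS, hcs0]
          field_simp <;> ring_nf
        · by_cases hjs : j = s0
          · simp [hP, his0, hjs, hjc, hs0c, hs0, hcS, hcs0]
            field_simp <;> ring
          · by_cases hjS : j ∈ S
            · have hcj : ¬(c = j) := fun h => hjc h.symm
              have hs0j : ¬(s0 = j) := fun h => hjs h.symm
              simp [hP, his0, hjs, hjc, hjS, hcj, hs0j, hs0c, hs0, hcS, hcs0]
            · have hcj : ¬(c = j) := fun h => hjc h.symm
              have hs0j : ¬(s0 = j) := fun h => hjs h.symm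
              simp [hP, his0, hjs, hjc, hjS, hcj, hs0j, hs0c, hs0, hcS, hcs0]
              field_simp <;> ring_nf
      · by_cases hiS : i ∈ S
        · have h1 : ∀ k, Q i k * P k j =
              (if k = i then P k j else 0) - (if k ∈ S then (1 / (p : ℝ)) * P k j else 0) := by
            intro k
            simp only [hQ, hic, his0, hiS, if_false, if_true]
            split_ifs <;> ring
          rw [Finset.sum_congr rfl fun k _ => h1 k, Finset.sum_sub_distrib,
            Finset.sum_ite_eq' Finset.univ i fun k => P k j,
            Finset.sum_ite_mem, Finset.univ_inter, ← Finset.mul_sum, hB j]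
          simp only [Finset.mem_univ, if_true]
          by_cases hjc : j = c
          · have hij : ¬(i = j) := fun h => hic (h.trans hjc)
            simp [hP, hjc, hij, hic, his0, hiS, hcS]
            field_simp <;> ring_nf
          · by_cases hjs : j = s0
            · have hij : ¬(i = j) := fun h => his0 (h.trans hjs)
              simp [hP, hjs, hjc, hij, hic, his0, hiS, hcS, hs0c, hs0]
              field_simp <;> ring_nf
            · by_cases hjS : j ∈ S
              · have hcj : ¬(c = j) := fun h => hjc h.symm
                by_cases hij : i = j
                · simp [hP, hjs, hjc, hjS, hij, hic, his0, hiS, hcS, hs0c, hs0, hcj]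
                · simp [hP, hjs, hjc, hjS, hij, hic, his0, hiS, hcS, hs0c, hs0, hcj]
              · have hij : ¬(i = j) := fun h => hjS (h ▸ hiS)
                simp [hP, hjs, hjc, hjS, hij, hic, his0, hiS, hcS, hs0c, hs0]
                field_simp <;> ring_nf
        · have h1 : ∀ k, Q i k * P k j =
              (if k = i then (1 / ((p : ℝ) + 1)) * P k j else 0) -
                (1 / ((n : ℝ) * (p + 1))) * P k j := by
            intro k
            simp only [hQ, hic, his0, hiS, if_false, if_true]
            split_ifs <;> ring
          rw [Finset.sum_congr rfl fun k _ => h1 k, Finset.sum_sub_distrib,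
            Finset.sum_ite_eq' Finset.univ i fun k => (1 / ((p : ℝ) + 1)) * P k j,
            ← Finset.mul_sum, hA j]
          simp only [Finset.mem_univ, if_true]
          by_cases hjc : j = c
          · have hij : ¬(i = j) := fun h => hic (h.trans hjc)
            simp [hP, hjc, hij, hic, his0, hiS, hcS]
            field_simp <;> ring_nf
          · by_cases hjs : j = s0
            · have hij : ¬(i = j) := fun h => his0 (h.trans hjs)
              simp [hP, hjs, hjc, hij, hic, his0, hiS, hcS, hs0c, hs0]
            · by_cases hjS : j ∈ S
              · have hij : ¬(i = j) := fun h => hiS (h ▸ hjS)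
                have hcj : ¬(c = j) := fun h => hjc h.symm
                simp [hP, hjs, hjc, hjS, hij, hic, his0, hiS, hcS, hs0c, hs0, hcj]
              · by_cases hij : i = j
                · simp [hP, hjs, hjc, hjS, hij, hic, his0, hiS, hcS, hs0c, hs0]
                  field_simp <;> ring
                · simp [hP, hjs, hjc, hjS, hij, hic, his0, hiS, hcS, hs0c, hs0]
  have hQP : Q * P = 1 := by
    ext i j
    rw [Matrix.mul_apply, Matrix.one_apply]
    exact hQPentry i j
  have hLP : G.lapMatrix ℝ * P = P * Matrix.diagonal d := by
    ext i j
    rw [Matrix.mul_apply, Matrix.mul_diagonal]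
    refine (key (fun k => P k j) i).trans ?_
    beta_reduce
    rw [hA j, hB j]
    exact hmaster i j
  have hPQ : P * Q = 1 := mul_eq_one_comm.mp hQP
  have hL : G.lapMatrix ℝ = P * Matrix.diagonal d * Q := by
    calc G.lapMatrix ℝ = G.lapMatrix ℝ * (P * Q) := by rw [hPQ, mul_one]
    _ = (G.lapMatrix ℝ * P) * Q := by rw [mul_assoc]
    _ = P * Matrix.diagonal d * Q := by rw [hLP]
  have hcp : (G.lapMatrix ℝ).charpoly = ∏ i, (X - C (d i)) := by
    rw [hL, aux_charpoly_conj P Q _ hQP, aux_charpoly_diagonal]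
  have hcp2 : (G.lapMatrix ℝ).charpoly = ∏ i, (X - C (lapEigs G i)) := by
    have := aux_charpoly_hermitian (SimpleGraph.posSemidef_lapMatrix ℝ G).1
    convert this using 2
    rfl
  have hmain : Finset.univ.val.map (lapEigs G) = Finset.univ.val.map d := by
    have h1 : ((Finset.univ.val.map (lapEigs G)).map fun a => X - C a).prod =
        ((Finset.univ.val.map d).map fun a => X - C a).prod := by
      rw [Multiset.map_map, Multiset.map_map]
      calc (Finset.univ.val.map fun i => X - C (lapEigs G i)).prod
          = ∏ i, (X - C (lapEigs G i)) := rfl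
        _ = ∏ i, (X - C (d i)) := by rw [← hcp2, hcp]
        _ = (Finset.univ.val.map fun i => X - C (d i)).prod := rfl
    have := congrArg Polynomial.roots h1
    rwa [Polynomial.roots_multiset_prod_X_sub_C, Polynomial.roots_multiset_prod_X_sub_C] at this
  have hdmap : Finset.univ.val.map d =
      Multiset.replicate (n - p - 1) (n : ℝ) + Multiset.replicate (p - 1) ((n : ℝ) - 1) +
        {((n : ℝ) - p - 1), (0 : ℝ)} := by
    set T : Finset (Fin n) := Finset.univ \ insert c S with hT
    have hTcard : T.card = n - p - 1 := by
      rw [hT, Finset.card_sdiff_of_subset (Finset.subset_univ _), Finset.card_univ, Fintype.card_fin,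
        Finset.card_insert_of_notMem hcS, hScard]
      omega
    have h1 : (insert c S).val ≤ Finset.univ.val :=
      Finset.val_le_iff.2 (Finset.subset_univ _)
    have h2 : T.val = Finset.univ.val - (insert c S).val := by
      rw [hT, Finset.sdiff_val]
    have h3 : Finset.univ.val = T.val + (insert c S).val := by
      rw [h2, tsub_add_cancel_of_le h1]
    have h4 : (insert c S).val = c ::ₘ S.val := by
      rw [Finset.insert_val_of_notMem hcS]
    have h5 : S.val = s0 ::ₘ (S.erase s0).val := by
      conv_lhs => rw [← Finset.insert_erase hs0]
      rw [Finset.insert_val_of_notMem (Finset.notMem_erase s0 S)]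
    have hmapT : T.val.map d = Multiset.replicate (n - p - 1) (n : ℝ) := by
      rw [Multiset.map_congr rfl (fun x hx => ?_), Multiset.map_const', ← hTcard]
      · rfl
      · have hx' : x ∈ T := hx
        rw [hT, Finset.mem_sdiff, Finset.mem_insert] at hx'
        have hxc : ¬(x = c) := fun h => hx'.2 (Or.inl h)
        have hxS : ¬(x ∈ S) := fun h => hx'.2 (Or.inr h)
        have hxs0 : ¬(x = s0) := fun h => hxS (h ▸ hs0)
        simp [hd, hxc, hxS, hxs0]
    have hmapE : (S.erase s0).val.map d = Multiset.replicate (p - 1) ((n : ℝ) - 1) := by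
      rw [Multiset.map_congr rfl (fun x hx => ?_), Multiset.map_const']
      · have : (S.erase s0).card = p - 1 := by
          rw [Finset.card_erase_of_mem hs0, hScard]
        rw [← this]
        rfl
      · have hx' : x ∈ S.erase s0 := hx
        rw [Finset.mem_erase] at hx'
        have hxc : ¬(x = c) := fun h => hcS (h ▸ hx'.2)
        simp [hd, hxc, hx'.1, hx'.2]
    rw [h3, h4, h5, Multiset.map_add, Multiset.map_cons, Multiset.map_cons, hmapT, hmapE]
    have hdc : d c = 0 := by simp [hd]
    have hds0 : d s0 = (n : ℝ) - p - 1 := by simp [hd, hs0c]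
    rw [hdc, hds0]
    rw [show ({((n : ℝ) - p - 1), (0 : ℝ)} : Multiset ℝ) =
      ((n : ℝ) - p - 1) ::ₘ (0 : ℝ) ::ₘ 0 from rfl]
    simp only [← Multiset.singleton_add, add_zero]
    abel
  -- kf computation
  have hn0 : (n : ℝ) ≠ 0 := Nat.cast_ne_zero.2 (by omega)
  have hn1 : (n : ℝ) - 1 ≠ 0 := by
    have : (2 : ℝ) ≤ n := by exact_mod_cast (by omega : 2 ≤ n)
    intro h; linarith
  have hnp2 : (p : ℝ) + 2 ≤ n := by exact_mod_cast hpn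
  have hnp1 : (n : ℝ) - p - 1 ≠ 0 := by intro h; linarith
  have hspec := hmain.trans hdmap
  refine ⟨hspec, ?_⟩
  have hkf : (n : ℝ) * ∑ v, (lapEigs G v)⁻¹ =
      (n : ℝ) - p - 1 + n * ((p : ℝ) - 1) / ((n : ℝ) - 1) + n / ((n : ℝ) - p - 1) := by
    have h6 : ∑ v, (lapEigs G v)⁻¹ = ((Finset.univ.val.map (lapEigs G)).map fun x => x⁻¹).sum := by
      rw [Multiset.map_map]
      rfl
    rw [h6, hspec]
    simp only [Multiset.map_add, Multiset.sum_add, Multiset.map_replicate,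
      Multiset.sum_replicate, Multiset.insert_eq_cons, Multiset.map_cons, Multiset.map_singleton,
      Multiset.sum_cons, Multiset.sum_singleton, nsmul_eq_mul]
    have hc1 : ((n - p - 1 : ℕ) : ℝ) = (n : ℝ) - p - 1 := by
      rw [Nat.cast_sub (by omega), Nat.cast_sub (by omega)]
      push_cast
      ring
    have hc2 : ((p - 1 : ℕ) : ℝ) = (p : ℝ) - 1 := by
      rw [Nat.cast_sub (by omega)]
      push_cast
      ring
    rw [hc1, hc2]
    field_simp
    ring
  have : kf G = (n : ℝ) * ∑ v, (lapEigs G v)⁻¹ := by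
    simp only [kf, Fintype.card_fin]
  rw [this, hkf]
end

section
/- If x is a cut vertex of a connected graph G with G = G₁ ∪ G₂, V(G₁) ∩ V(G₂) = {x}, |V(Gᵢ)| = nᵢ, then Kf(G) = Kf(G₁) + Kf(G₂) + (n₁ − 1)·Kf_x(G₂) + (n₂ − 1)·Kf_x(G₁), where Kf_x(H) = Σ_{v ≠ x} r_H(x, v). -/
open Finset

section aux
open Matrix

variable {V : Type*} [Fintype V] [DecidableEq V]

/-- Laplacian with classical decidability, matching `resist`. -/
noncomputable def lapC (G : SimpleGraph V) : Matrix V V ℝ :=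
  letI := Classical.decRel G.Adj
  G.lapMatrix ℝ

noncomputable def NMat (G : SimpleGraph V) : Matrix V V ℝ :=
  lapC G + (Fintype.card V : ℝ)⁻¹ • Matrix.of (fun _ _ : V => (1 : ℝ))

lemma resist_eq_NMat (G : SimpleGraph V) (u v : V) :
    resist G u v = (NMat G)⁻¹ u u + (NMat G)⁻¹ v v - (NMat G)⁻¹ u v - (NMat G)⁻¹ v u := rfl

lemma lapC_mulVec_apply (G : SimpleGraph V) (f : V → ℝ) (w : V) :
    (lapC G *ᵥ f) w = ∑ z, (letI := Classical.decRel G.Adj; if G.Adj w z then f w - f z else 0) := by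
  letI := Classical.decRel G.Adj
  rw [lapC, SimpleGraph.lapMatrix_mulVec_apply]
  have hnf : G.neighborFinset w = Finset.univ.filter (G.Adj w) := by
    ext z; simp
  have : (∑ z, if G.Adj w z then f w - f z else 0)
      = ∑ z ∈ G.neighborFinset w, (f w - f z) := by
    rw [hnf, Finset.sum_filter]
  rw [this, Finset.sum_sub_distrib, Finset.sum_const, ← SimpleGraph.card_neighborFinset_eq_degree]
  ring

lemma lapC_posSemidef (G : SimpleGraph V) : (lapC G).PosSemidef := by
  letI := Classical.decRel G.Adj
  exact SimpleGraph.posSemidef_lapMatrix ℝ G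

lemma lapC_mulVec_const (G : SimpleGraph V) : lapC G *ᵥ (fun _ => (1:ℝ)) = 0 := by
  letI := Classical.decRel G.Adj
  exact SimpleGraph.lapMatrix_mulVec_const_eq_zero G

lemma NMat_isUnit {G : SimpleGraph V} (hG : G.Connected) : IsUnit (NMat G) := by
  letI := Classical.decRel G.Adj
  have hne : (Fintype.card V : ℝ) ≠ 0 := by
    have : Nonempty V := hG.nonempty
    exact_mod_cast Fintype.card_ne_zero
  rw [← Matrix.mulVec_injective_iff_isUnit]
  intro f g hfg
  -- reduce to kernel
  suffices h : ∀ f : V → ℝ, NMat G *ᵥ f = 0 → f = 0 by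
    have := h (f - g) (by rw [Matrix.mulVec_sub, hfg, sub_self])
    exact sub_eq_zero.mp this
  intro f hf
  have hquad : f ⬝ᵥ (NMat G *ᵥ f) = 0 := by rw [hf, dotProduct_zero]
  have hsplit : f ⬝ᵥ (NMat G *ᵥ f)
      = f ⬝ᵥ (lapC G *ᵥ f) + (Fintype.card V : ℝ)⁻¹ * (∑ v, f v)^2 := by
    rw [NMat, Matrix.add_mulVec, dotProduct_add, Matrix.smul_mulVec,
      dotProduct_smul]
    congr 1
    simp only [Matrix.mulVec, dotProduct, Finset.mul_sum, Finset.sum_mul, sq,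
      smul_eq_mul, Pi.smul_apply, Matrix.of_apply, one_mul]
    rw [Finset.sum_comm]
  have h1 : (0:ℝ) ≤ f ⬝ᵥ (lapC G *ᵥ f) := by
    have := (lapC_posSemidef G).dotProduct_mulVec_nonneg f
    simpa using this
  have h2 : (0:ℝ) ≤ (Fintype.card V : ℝ)⁻¹ * (∑ v, f v)^2 := by positivity
  have hL : f ⬝ᵥ (lapC G *ᵥ f) = 0 := by linarith [hsplit ▸ hquad]
  have hS : (∑ v, f v) = 0 := by
    have : (Fintype.card V : ℝ)⁻¹ * (∑ v, f v)^2 = 0 := by linarith [hsplit ▸ hquad]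
    have := (mul_eq_zero.mp this).resolve_left (inv_ne_zero hne)
    exact pow_eq_zero_iff (n := 2) (by norm_num) |>.mp this
  -- f is constant
  have hconst : ∀ i j : V, f i = f j := by
    intro i j
    have : Matrix.toLinearMap₂' ℝ (G.lapMatrix ℝ) f f = 0 := by
      rw [Matrix.toLinearMap₂'_apply']
      exact hL
    exact (SimpleGraph.lapMatrix_toLinearMap₂'_apply'_eq_zero_iff_forall_reachable G f).mp this
      i j (hG.preconnected i j)
  funext w
  have : (∑ v, f v) = (Fintype.card V : ℝ) * f w := by
    rw [Finset.sum_congr rfl (fun v _ => hconst v w)]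
    simp [Finset.sum_const, mul_comm]
  have := hS ▸ this
  simp only [Pi.zero_apply]
  rcases mul_eq_zero.mp this.symm with h | h
  · exact absurd h hne
  · exact h

lemma vecMul_one_NMat {G : SimpleGraph V} (hG : G.Connected) :
    (fun _ => (1:ℝ)) ᵥ* NMat G = fun _ => (1:ℝ) := by
  have hne : (Fintype.card V : ℝ) ≠ 0 := by
    have : Nonempty V := hG.nonempty
    exact_mod_cast Fintype.card_ne_zero
  have hsym := (lapC_posSemidef G).1
  funext w
  have hzw : ∀ z, lapC G z w = lapC G w z := by
    intro z
    conv_lhs => rw [← hsym]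
    simp [Matrix.conjTranspose_apply]
  have hcol : ∑ z, lapC G z w = 0 := by
    have h0 := congrFun (lapC_mulVec_const G) w
    simp only [Matrix.mulVec, dotProduct, mul_one, Pi.zero_apply] at h0
    rw [Finset.sum_congr rfl (fun z _ => hzw z)]
    exact h0
  show ∑ z, (1:ℝ) * (NMat G) z w = 1
  simp only [NMat, Matrix.add_apply, Matrix.smul_apply, Matrix.of_apply, smul_eq_mul,
    mul_one, one_mul, Finset.sum_add_distrib, hcol, zero_add, Finset.sum_const,
    Finset.card_univ, nsmul_eq_mul]
  field_simp

/-- If `f` is a potential for the unit current from `u` to `v`, then the effective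
resistance is the potential difference. -/
lemma resist_eq_of_potential {G : SimpleGraph V} (hG : G.Connected) (u v : V) (f : V → ℝ)
    (hf : lapC G *ᵥ f = Pi.single u 1 - Pi.single v 1) :
    resist G u v = f u - f v := by
  have hne : (Fintype.card V : ℝ) ≠ 0 := by
    have : Nonempty V := hG.nonempty
    exact_mod_cast Fintype.card_ne_zero
  set b : V → ℝ := Pi.single u 1 - Pi.single v 1 with hb
  set c : ℝ := (∑ w, f w) / (Fintype.card V) with hc
  set g : V → ℝ := f - fun _ => c with hgdef
  have hNg : NMat G *ᵥ g = b := by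
    rw [NMat, Matrix.add_mulVec, Matrix.smul_mulVec]
    have hLg : lapC G *ᵥ g = b := by
      rw [hgdef, Matrix.mulVec_sub, hf]
      have hconst : (fun _ => c : V → ℝ) = c • (fun _ => (1:ℝ)) := by
        funext z; simp
      have : (lapC G *ᵥ fun _ => c) = 0 := by
        rw [hconst, Matrix.mulVec_smul, lapC_mulVec_const, smul_zero]
      rw [this, sub_zero]
    have hJg : (Matrix.of (fun _ _ : V => (1:ℝ))) *ᵥ g = 0 := by
      funext w
      have hsum : ∑ z, g z = 0 := by
        simp only [hgdef, Pi.sub_apply, Finset.sum_sub_distrib, Finset.sum_const]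
        rw [hc]
        rw [Finset.card_univ, nsmul_eq_mul]
        field_simp
        ring
      show ∑ z, (1:ℝ) * g z = 0
      simp only [one_mul]
      exact hsum
    rw [hLg, hJg, smul_zero, add_zero]
  have hunit := NMat_isUnit hG
  have hg : g = (NMat G)⁻¹ *ᵥ b := by
    rw [← hNg, Matrix.mulVec_mulVec, Matrix.nonsing_inv_mul _ ((Matrix.isUnit_iff_isUnit_det _).mp hunit), Matrix.one_mulVec]
  have h1 : ((NMat G)⁻¹ *ᵥ b) u = (NMat G)⁻¹ u u - (NMat G)⁻¹ u v := by
    simp [hb, Matrix.mulVec, dotProduct, Pi.single_apply, mul_sub,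
      Finset.sum_sub_distrib, mul_ite, mul_one, mul_zero, Finset.sum_ite_eq',
      Finset.sum_ite_eq]
  have h2 : ((NMat G)⁻¹ *ᵥ b) v = (NMat G)⁻¹ v u - (NMat G)⁻¹ v v := by
    simp [hb, Matrix.mulVec, dotProduct, Pi.single_apply, mul_sub,
      Finset.sum_sub_distrib, mul_ite, mul_one, mul_zero, Finset.sum_ite_eq',
      Finset.sum_ite_eq]
  have hgu : g u = (NMat G)⁻¹ u u - (NMat G)⁻¹ u v := by rw [hg]; exact h1
  have hgv : g v = (NMat G)⁻¹ v u - (NMat G)⁻¹ v v := by rw [hg]; exact h2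
  have : f u - f v = g u - g v := by simp [hgdef]
  rw [resist_eq_NMat, this, hgu, hgv]
  ring

/-- Existence of a potential. -/
lemma exists_potential {G : SimpleGraph V} (hG : G.Connected) (u v : V) :
    ∃ f : V → ℝ, lapC G *ᵥ f = Pi.single u 1 - Pi.single v 1 := by
  have hne : (Fintype.card V : ℝ) ≠ 0 := by
    have : Nonempty V := hG.nonempty
    exact_mod_cast Fintype.card_ne_zero
  set b : V → ℝ := Pi.single u 1 - Pi.single v 1 with hb
  have hunit := NMat_isUnit hG
  refine ⟨(NMat G)⁻¹ *ᵥ b, ?_⟩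
  have hNf : NMat G *ᵥ ((NMat G)⁻¹ *ᵥ b) = b := by
    rw [Matrix.mulVec_mulVec, Matrix.mul_nonsing_inv _ ((Matrix.isUnit_iff_isUnit_det _).mp hunit), Matrix.one_mulVec]
  have hsum : ∑ z, ((NMat G)⁻¹ *ᵥ b) z = 0 := by
    have h1 : (fun _ => (1:ℝ)) ᵥ* (NMat G)⁻¹ = fun _ => (1:ℝ) := by
      have := vecMul_one_NMat hG
      calc (fun _ => (1:ℝ)) ᵥ* (NMat G)⁻¹
          = ((fun _ => (1:ℝ)) ᵥ* NMat G) ᵥ* (NMat G)⁻¹ := by rw [this]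
        _ = (fun _ => (1:ℝ)) ᵥ* (NMat G * (NMat G)⁻¹) := by rw [Matrix.vecMul_vecMul]
        _ = fun _ => (1:ℝ) := by
            rw [Matrix.mul_nonsing_inv _ ((Matrix.isUnit_iff_isUnit_det _).mp hunit),
              Matrix.vecMul_one]
    have key : ∑ z, ((NMat G)⁻¹ *ᵥ b) z = (fun _ => (1:ℝ)) ⬝ᵥ ((NMat G)⁻¹ *ᵥ b) := by
      simp [dotProduct]
    rw [key, Matrix.dotProduct_mulVec, h1]
    simp [hb, dotProduct, Pi.single_apply, Finset.sum_sub_distrib]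
  have : lapC G *ᵥ ((NMat G)⁻¹ *ᵥ b)
      = NMat G *ᵥ ((NMat G)⁻¹ *ᵥ b)
        - (Fintype.card V : ℝ)⁻¹ • ((Matrix.of (fun _ _ : V => (1:ℝ))) *ᵥ ((NMat G)⁻¹ *ᵥ b)) := by
    rw [NMat, Matrix.add_mulVec, Matrix.smul_mulVec]
    abel
  rw [this, hNf]
  have hJ : (Matrix.of (fun _ _ : V => (1:ℝ))) *ᵥ ((NMat G)⁻¹ *ᵥ b) = 0 := by
    funext w
    show ∑ z, (1:ℝ) * ((NMat G)⁻¹ *ᵥ b) z = 0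
    simp only [one_mul]
    exact hsum
  rw [hJ, smul_zero, sub_zero]

lemma sumSetCoe {S : Finset V} {M : Type*} [AddCommMonoid M] (g : ↥(S : Set V) → M) :
    ∑ z, g z = ∑ z ∈ S.attach, g ⟨z.1, Finset.mem_coe.mpr z.2⟩ := by
  have := Fintype.sum_equiv (Equiv.subtypeEquivRight (fun z => (Finset.mem_coe (s := S)).symm))
    (fun z : ↥S => g ⟨z.1, Finset.mem_coe.mpr z.2⟩) g (fun z => rfl)
  rw [← this, Finset.univ_eq_attach]

lemma lapC_mulVec_apply' (G : SimpleGraph V) [DecidableRel G.Adj] (f : V → ℝ) (w : V) :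
    (lapC G *ᵥ f) w = ∑ z, if G.Adj w z then f w - f z else 0 := by
  rw [lapC_mulVec_apply]
  refine Finset.sum_congr rfl fun z _ => ?_
  by_cases h : G.Adj w z <;> simp [h]

section glue

variable (G : SimpleGraph V) (A B : Finset V) (x : V)

/-- Gluing potentials across a cut vertex. -/
lemma lap_glue (hA : x ∈ A) (hB : x ∈ B)
    (hU : ∀ v, v ∈ A ∨ v ∈ B) (hI : A ∩ B = {x})
    (hE : ∀ u v, G.Adj u v → (u ∈ A ∧ v ∈ A) ∨ (u ∈ B ∧ v ∈ B))
    (f₁ : ↥(A : Set V) → ℝ) (f₂ : ↥(B : Set V) → ℝ)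
    (hmatch : f₁ ⟨x, Finset.mem_coe.mpr hA⟩ = f₂ ⟨x, Finset.mem_coe.mpr hB⟩)
    (w : V) :
    (lapC G *ᵥ (fun z => if h : z ∈ A then f₁ ⟨z, Finset.mem_coe.mpr h⟩
        else f₂ ⟨z, Finset.mem_coe.mpr ((hU z).resolve_left h)⟩)) w
    = (if h : w ∈ A then (lapC (G.induce (A : Set V)) *ᵥ f₁) ⟨w, Finset.mem_coe.mpr h⟩ else 0)
      + (if h : w ∈ B then (lapC (G.induce (B : Set V)) *ᵥ f₂) ⟨w, Finset.mem_coe.mpr h⟩ else 0) := by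
  classical
  set f : V → ℝ := fun z => if h : z ∈ A then f₁ ⟨z, Finset.mem_coe.mpr h⟩
      else f₂ ⟨z, Finset.mem_coe.mpr ((hU z).resolve_left h)⟩ with hfdef
  -- f agrees with f₁ on A and with f₂ on B
  have hfA : ∀ z (hz : z ∈ A), f z = f₁ ⟨z, Finset.mem_coe.mpr hz⟩ := by
    intro z hz; simp [hfdef, hz]
  have hfB : ∀ z (hz : z ∈ B), f z = f₂ ⟨z, Finset.mem_coe.mpr hz⟩ := by
    intro z hz
    by_cases hzA : z ∈ A
    · have hzx : z = x := by
        have : z ∈ A ∩ B := Finset.mem_inter.mpr ⟨hzA, hz⟩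
        rwa [hI, Finset.mem_singleton] at this
      subst hzx
      simp [hfdef, hzA, hmatch]
    · simp [hfdef, hzA]
  letI : DecidableRel (G.induce (A : Set V)).Adj := fun a b => Classical.propDecidable _
  letI : DecidableRel (G.induce (B : Set V)).Adj := fun a b => Classical.propDecidable _
  -- the sums over A and B compute the induced Laplacians
  have hsumA : ∀ (hw : w ∈ A),
      (∑ z ∈ A, if G.Adj w z then f w - f z else 0)
        = (lapC (G.induce (A : Set V)) *ᵥ f₁) ⟨w, Finset.mem_coe.mpr hw⟩ := by
    intro hw
    rw [lapC_mulVec_apply', sumSetCoe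
      (g := fun z : ↥(A : Set V) => if (G.induce (A : Set V)).Adj ⟨w, Finset.mem_coe.mpr hw⟩ z
        then f₁ ⟨w, Finset.mem_coe.mpr hw⟩ - f₁ z else 0)]
    rw [← Finset.sum_attach A (fun z => if G.Adj w z then f w - f z else 0)]
    refine Finset.sum_congr rfl ?_
    intro z _
    have h1 : f w = f₁ ⟨w, Finset.mem_coe.mpr hw⟩ := hfA w hw
    have h2 : f z.1 = f₁ ⟨z.1, Finset.mem_coe.mpr z.2⟩ := hfA z.1 z.2
    rw [h1, h2]
    by_cases h : G.Adj w ↑z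
    · rw [if_pos h]; exact (if_pos h).symm
    · rw [if_neg h]; exact (if_neg h).symm
  have hsumB : ∀ (hw : w ∈ B),
      (∑ z ∈ B, if G.Adj w z then f w - f z else 0)
        = (lapC (G.induce (B : Set V)) *ᵥ f₂) ⟨w, Finset.mem_coe.mpr hw⟩ := by
    intro hw
    rw [lapC_mulVec_apply', sumSetCoe
      (g := fun z : ↥(B : Set V) => if (G.induce (B : Set V)).Adj ⟨w, Finset.mem_coe.mpr hw⟩ z
        then f₂ ⟨w, Finset.mem_coe.mpr hw⟩ - f₂ z else 0)]
    rw [← Finset.sum_attach B (fun z => if G.Adj w z then f w - f z else 0)]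
    refine Finset.sum_congr rfl ?_
    intro z _
    have h1 : f w = f₂ ⟨w, Finset.mem_coe.mpr hw⟩ := hfB w hw
    have h2 : f z.1 = f₂ ⟨z.1, Finset.mem_coe.mpr z.2⟩ := hfB z.1 z.2
    rw [h1, h2]
    by_cases h : G.Adj w ↑z
    · rw [if_pos h]; exact (if_pos h).symm
    · rw [if_neg h]; exact (if_neg h).symm
  rw [lapC_mulVec_apply']
  by_cases hw : w ∈ A
  · by_cases hwx : w = x
    · subst hwx
      -- split the sum over univ into A and its complement
      rw [dif_pos hw, dif_pos hB]
      have hsplit : (∑ z, if G.Adj w z then f w - f z else 0)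
          = (∑ z ∈ A, if G.Adj w z then f w - f z else 0)
            + ∑ z ∈ Finset.univ.filter (· ∉ A), (if G.Adj w z then f w - f z else 0) := by
        rw [← Finset.sum_filter_add_sum_filter_not Finset.univ (· ∈ A)]
        congr 1
        refine Finset.sum_congr ?_ (fun _ _ => rfl)
        ext z; simp
      rw [hsplit, hsumA hw]
      congr 1
      -- the complement sum equals the B-sum minus the x-term (which is 0)
      have hBsum : (∑ z ∈ B, if G.Adj w z then f w - f z else 0)
          = ∑ z ∈ B.erase w, if G.Adj w z then f w - f z else 0 := by
        rw [← Finset.add_sum_erase B _ hB]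
        simp [SimpleGraph.irrefl]
      have hset : Finset.univ.filter (· ∉ A) = B.erase w := by
        ext z
        simp only [Finset.mem_filter, Finset.mem_univ, true_and, Finset.mem_erase]
        constructor
        · intro hz
          refine ⟨fun h => hz (h ▸ hA), (hU z).resolve_left hz⟩
        · rintro ⟨hzx, hzB⟩ hzA
          exact hzx (by
            have : z ∈ A ∩ B := Finset.mem_inter.mpr ⟨hzA, hzB⟩
            rwa [hI, Finset.mem_singleton] at this)
      rw [hset, ← hBsum, hsumB hB]
    · -- w ∈ A, w ≠ x : no edges leave A, and w ∉ B
      have hwB : w ∉ B := by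
        intro hwB
        exact hwx (by
          have : w ∈ A ∩ B := Finset.mem_inter.mpr ⟨hw, hwB⟩
          rwa [hI, Finset.mem_singleton] at this)
      rw [dif_pos hw, dif_neg hwB, add_zero, ← hsumA hw]
      refine (Finset.sum_subset (Finset.subset_univ A) ?_).symm
      intro z _ hzA
      by_cases hadj : G.Adj w z
      · rcases hE w z hadj with ⟨_, hzA'⟩ | ⟨hwB', _⟩
        · exact absurd hzA' hzA
        · exact absurd hwB' hwB
      · rw [if_neg hadj]
  · -- w ∉ A : w ∈ B, all neighbours in B
    have hwB : w ∈ B := (hU w).resolve_left hw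
    have hwx : w ≠ x := fun h => hw (h ▸ hA)
    rw [dif_neg hw, dif_pos hwB, zero_add, ← hsumB hwB]
    refine (Finset.sum_subset (Finset.subset_univ B) ?_).symm
    intro z _ hzB
    by_cases hadj : G.Adj w z
    · rcases hE w z hadj with ⟨hwA, _⟩ | ⟨_, hzB'⟩
      · exact absurd hwA hw
      · exact absurd hzB' hzB
    · rw [if_neg hadj]

end glue

lemma resist_symm (G : SimpleGraph V) (u v : V) : resist G u v = resist G v u := by
  simp only [resist]; ring

lemma resist_self (G : SimpleGraph V) (u : V) : resist G u u = 0 := by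
  simp only [resist]; ring

section cut
variable (G : SimpleGraph V) (A B : Finset V) (x : V)

lemma lap_const_zero (H : SimpleGraph V) (c : ℝ) : lapC H *ᵥ (fun _ => c) = 0 := by
  have : (fun _ => c : V → ℝ) = c • (fun _ => (1:ℝ)) := by funext z; simp
  rw [this, Matrix.mulVec_smul, lapC_mulVec_const, smul_zero]

variable (hA : x ∈ A) (hB : x ∈ B)
    (hU : ∀ v, v ∈ A ∨ v ∈ B) (hI : A ∩ B = {x})
    (hE : ∀ u v, G.Adj u v → (u ∈ A ∧ v ∈ A) ∨ (u ∈ B ∧ v ∈ B))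
    (hG : G.Connected)

include hA hB hU hI hE hG

lemma resist_restrictA (h1 : (G.induce (A : Set V)).Connected)
    (u v : ↥(A : Set V)) : resist G ↑u ↑v = resist (G.induce (A : Set V)) u v := by
  classical
  obtain ⟨f₁, hf₁⟩ := exists_potential h1 u v
  set c : ℝ := f₁ ⟨x, Finset.mem_coe.mpr hA⟩ with hc
  have hglue := lap_glue G A B x hA hB hU hI hE f₁ (fun _ => c) rfl
  set f : V → ℝ := fun z => if h : z ∈ A then f₁ ⟨z, Finset.mem_coe.mpr h⟩
      else (fun _ : ↥(B : Set V) => c) ⟨z, Finset.mem_coe.mpr ((hU z).resolve_left h)⟩ with hfdef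
  have hpot : lapC G *ᵥ f = Pi.single (↑u : V) 1 - Pi.single (↑v : V) 1 := by
    funext w
    rw [hfdef, hglue w, lap_const_zero]
    simp only [Pi.zero_apply, dite_eq_ite, ite_self, add_zero]
    by_cases hw : w ∈ A
    · rw [dif_pos hw]
      have h3 := congrFun hf₁ ⟨w, Finset.mem_coe.mpr hw⟩
      rw [h3]
      simp [Pi.sub_apply, Pi.single_apply, Subtype.ext_iff]
    · rw [dif_neg hw]
      have hwu : w ≠ ↑u := fun h => hw (Finset.mem_coe.mp (h ▸ u.2))
      have hwv : w ≠ ↑v := fun h => hw (Finset.mem_coe.mp (h ▸ v.2))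
      simp [Pi.single_apply, hwu, hwv]
  rw [resist_eq_of_potential hG ↑u ↑v f hpot, resist_eq_of_potential h1 u v f₁ hf₁]
  have hu' : f ↑u = f₁ u := by simp [hfdef, Finset.mem_coe.mp u.2]
  have hv' : f ↑v = f₁ v := by simp [hfdef, Finset.mem_coe.mp v.2]
  rw [hu', hv']

lemma resist_restrictB (h2 : (G.induce (B : Set V)).Connected)
    (u v : ↥(B : Set V)) : resist G ↑u ↑v = resist (G.induce (B : Set V)) u v := by
  have hI' : B ∩ A = {x} := by rwa [Finset.inter_comm]
  have hU' : ∀ v, v ∈ B ∨ v ∈ A := fun v => (hU v).symm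
  have hE' : ∀ u v, G.Adj u v → (u ∈ B ∧ v ∈ B) ∨ (u ∈ A ∧ v ∈ A) := fun u v h => (hE u v h).symm
  exact resist_restrictA G B A x hB hA hU' hI' hE' hG h2 u v

lemma resist_add' (h1 : (G.induce (A : Set V)).Connected) (h2 : (G.induce (B : Set V)).Connected)
    (u v : V) (hu : u ∈ A) (hv : v ∈ B) (hvx : v ≠ x) :
    resist G u v
      = resist (G.induce (A : Set V)) ⟨u, Finset.mem_coe.mpr hu⟩ ⟨x, Finset.mem_coe.mpr hA⟩
        + resist (G.induce (B : Set V)) ⟨x, Finset.mem_coe.mpr hB⟩ ⟨v, Finset.mem_coe.mpr hv⟩ := by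
  classical
  obtain ⟨f₁, hf₁⟩ := exists_potential h1 ⟨u, Finset.mem_coe.mpr hu⟩ ⟨x, Finset.mem_coe.mpr hA⟩
  obtain ⟨f₂, hf₂⟩ := exists_potential h2 ⟨x, Finset.mem_coe.mpr hB⟩ ⟨v, Finset.mem_coe.mpr hv⟩
  set c : ℝ := f₁ ⟨x, Finset.mem_coe.mpr hA⟩ - f₂ ⟨x, Finset.mem_coe.mpr hB⟩ with hc
  set g₂ : ↥(B : Set V) → ℝ := fun z => f₂ z + c with hg₂def
  have hmatch : f₁ ⟨x, Finset.mem_coe.mpr hA⟩ = g₂ ⟨x, Finset.mem_coe.mpr hB⟩ := by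
    rw [hg₂def, hc]; ring
  have hg₂ : lapC (G.induce (B : Set V)) *ᵥ g₂
      = Pi.single (⟨x, Finset.mem_coe.mpr hB⟩ : ↥(B : Set V)) 1
        - Pi.single (⟨v, Finset.mem_coe.mpr hv⟩ : ↥(B : Set V)) 1 := by
    have : g₂ = f₂ + (fun _ => c) := by funext z; rw [hg₂def]; rfl
    rw [this, Matrix.mulVec_add, lap_const_zero, add_zero, hf₂]
  have hglue := lap_glue G A B x hA hB hU hI hE f₁ g₂ hmatch
  set f : V → ℝ := fun z => if h : z ∈ A then f₁ ⟨z, Finset.mem_coe.mpr h⟩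
      else g₂ ⟨z, Finset.mem_coe.mpr ((hU z).resolve_left h)⟩ with hfdef
  have hvA : v ∉ A := by
    intro hvA
    exact hvx (by
      have : v ∈ A ∩ B := Finset.mem_inter.mpr ⟨hvA, hv⟩
      rwa [hI, Finset.mem_singleton] at this)
  have huv : u ≠ v := fun h => hvA (h ▸ hu)
  have hpot : lapC G *ᵥ f = Pi.single u 1 - Pi.single v 1 := by
    funext w
    rw [hfdef, hglue w]
    by_cases hw : w ∈ A
    · by_cases hwx : w = x
      · subst hwx
        rw [dif_pos hw, dif_pos hB, congrFun hf₁ ⟨w, Finset.mem_coe.mpr hw⟩,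
          congrFun hg₂ ⟨w, Finset.mem_coe.mpr hB⟩]
        have hwv : w ≠ v := Ne.symm hvx
        simp [Pi.single_apply, Subtype.ext_iff, hwv]
      · have hwB : w ∉ B := by
          intro hwB
          exact hwx (by
            have : w ∈ A ∩ B := Finset.mem_inter.mpr ⟨hw, hwB⟩
            rwa [hI, Finset.mem_singleton] at this)
        rw [dif_pos hw, dif_neg hwB, add_zero, congrFun hf₁ ⟨w, Finset.mem_coe.mpr hw⟩]
        have hwv : w ≠ v := fun h => hwB (h ▸ hv)
        simp [Pi.single_apply, Subtype.ext_iff, hwv, hwx]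
    · have hwB : w ∈ B := (hU w).resolve_left hw
      have hwx : w ≠ x := fun h => hw (h ▸ hA)
      have hwu : w ≠ u := fun h => hw (h ▸ hu)
      rw [dif_neg hw, dif_pos hwB, zero_add, congrFun hg₂ ⟨w, Finset.mem_coe.mpr hwB⟩]
      simp [Pi.single_apply, Subtype.ext_iff, hwu, hwx]
  rw [resist_eq_of_potential hG u v f hpot,
    resist_eq_of_potential h1 _ _ f₁ hf₁, resist_eq_of_potential h2 _ _ f₂ hf₂]
  have hu' : f u = f₁ ⟨u, Finset.mem_coe.mpr hu⟩ := by simp [hfdef, hu]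
  have hv' : f v = f₂ ⟨v, Finset.mem_coe.mpr hv⟩ + c := by simp [hfdef, hvA, hg₂def]
  rw [hu', hv', hc]
  ring

end cut

end aux

/-- Cut-vertex decomposition formula for the Kirchhoff index. -/
theorem kf_cut_vertex {V : Type*} [Fintype V] [DecidableEq V] (G : SimpleGraph V)
    (A B : Finset V) (x : V) (hA : x ∈ A) (hB : x ∈ B)
    (hU : ∀ v, v ∈ A ∨ v ∈ B) (hI : A ∩ B = {x})
    (hE : ∀ u v, G.Adj u v → (u ∈ A ∧ v ∈ A) ∨ (u ∈ B ∧ v ∈ B))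
    (hG : G.Connected) (h1 : (G.induce (A : Set V)).Connected)
    (h2 : (G.induce (B : Set V)).Connected) :
    kfR G = kfR (G.induce (A : Set V)) + kfR (G.induce (B : Set V)) +
      ((A.card : ℝ) - 1) * kfx (G.induce (B : Set V)) ⟨x, Finset.mem_coe.mpr hB⟩ +
      ((B.card : ℝ) - 1) * kfx (G.induce (A : Set V)) ⟨x, Finset.mem_coe.mpr hA⟩ := by
  classical
  set r := resist G with hr
  have hI' : B ∩ A = {x} := by rwa [Finset.inter_comm]
  have hU' : ∀ v, v ∈ B ∨ v ∈ A := fun v => (hU v).symm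
  have hE' : ∀ u v, G.Adj u v → (u ∈ B ∧ v ∈ B) ∨ (u ∈ A ∧ v ∈ A) := fun u v h => (hE u v h).symm
  have resA := resist_restrictA G A B x hA hB hU hI hE hG h1
  have resB := resist_restrictA G B A x hB hA hU' hI' hE' hG h2
  have resAdd := resist_add' G A B x hA hB hU hI hE hG h1 h2
  set P : ℝ := ∑ u ∈ A, r u x with hP
  set Q : ℝ := ∑ v ∈ B.erase x, r x v with hQ
  -- conversions of subtype sums
  have hkfx1 : kfx (G.induce (A : Set V)) ⟨x, Finset.mem_coe.mpr hA⟩ = P := by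
    rw [kfx, sumSetCoe, hP, ← Finset.sum_attach A (fun z => r z x)]
    refine Finset.sum_congr rfl fun z _ => ?_
    rw [← resA ⟨x, Finset.mem_coe.mpr hA⟩ ⟨z.1, Finset.mem_coe.mpr z.2⟩]
    exact resist_symm G x z.1
  have hkfx2 : kfx (G.induce (B : Set V)) ⟨x, Finset.mem_coe.mpr hB⟩ = Q := by
    rw [kfx, sumSetCoe]
    have : ∑ z ∈ B.attach, resist (G.induce (B : Set V)) ⟨x, Finset.mem_coe.mpr hB⟩
        ⟨z.1, Finset.mem_coe.mpr z.2⟩ = ∑ z ∈ B, r x z := by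
      rw [← Finset.sum_attach B (fun z => r x z)]
      exact Finset.sum_congr rfl fun z _ => (resB ⟨x, Finset.mem_coe.mpr hB⟩
        ⟨z.1, Finset.mem_coe.mpr z.2⟩).symm
    rw [this, ← Finset.add_sum_erase B (fun z => r x z) hB, hQ, hr, resist_self, zero_add]
  have hkfRA : 2 * kfR (G.induce (A : Set V)) = ∑ u ∈ A, ∑ v ∈ A, r u v := by
    rw [kfR, mul_div_cancel₀ _ (two_ne_zero), sumSetCoe,
      ← Finset.sum_attach A (fun u => ∑ v ∈ A, r u v)]
    refine Finset.sum_congr rfl fun u' _ => ?_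
    rw [sumSetCoe, ← Finset.sum_attach A (fun v => r u'.1 v)]
    exact Finset.sum_congr rfl fun v' _ => (resA ⟨u'.1, Finset.mem_coe.mpr u'.2⟩
      ⟨v'.1, Finset.mem_coe.mpr v'.2⟩).symm
  have hkfRB : 2 * kfR (G.induce (B : Set V)) = ∑ u ∈ B, ∑ v ∈ B, r u v := by
    rw [kfR, mul_div_cancel₀ _ (two_ne_zero), sumSetCoe,
      ← Finset.sum_attach B (fun u => ∑ v ∈ B, r u v)]
    refine Finset.sum_congr rfl fun u' _ => ?_
    rw [sumSetCoe, ← Finset.sum_attach B (fun v => r u'.1 v)]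
    exact Finset.sum_congr rfl fun v' _ => (resB ⟨u'.1, Finset.mem_coe.mpr u'.2⟩
      ⟨v'.1, Finset.mem_coe.mpr v'.2⟩).symm
  -- cross resistances
  have hcross : ∀ u ∈ A, ∀ v ∈ B.erase x, r u v = r u x + r x v := by
    intro u hu v hv
    rw [Finset.mem_erase] at hv
    rw [hr, resAdd u v hu hv.2 hv.1]
    congr 1
    · exact (resA ⟨u, Finset.mem_coe.mpr hu⟩ ⟨x, Finset.mem_coe.mpr hA⟩).symm
    · exact (resB ⟨x, Finset.mem_coe.mpr hB⟩ ⟨v, Finset.mem_coe.mpr hv.2⟩).symm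
  -- partition of the vertex set
  have huniv : (Finset.univ : Finset V) = A ∪ B.erase x := by
    ext z
    simp only [Finset.mem_univ, true_iff, Finset.mem_union, Finset.mem_erase]
    by_cases hz : z ∈ A
    · exact Or.inl hz
    · exact Or.inr ⟨fun h => hz (h ▸ hA), (hU z).resolve_left hz⟩
  have hdisj : Disjoint A (B.erase x) := by
    rw [Finset.disjoint_left]
    intro z hzA hzB
    rw [Finset.mem_erase] at hzB
    exact hzB.1 (by
      have : z ∈ A ∩ B := Finset.mem_inter.mpr ⟨hzA, hzB.2⟩
      rwa [hI, Finset.mem_singleton] at this)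
  have hsplit : ∀ g : V → ℝ, ∑ z, g z = ∑ z ∈ A, g z + ∑ z ∈ B.erase x, g z := by
    intro g
    rw [show (Finset.univ : Finset V) = A ∪ B.erase x from huniv, Finset.sum_union hdisj]
  -- the four blocks
  have hS : ∑ u, ∑ v, r u v
      = (∑ u ∈ A, ∑ v ∈ A, r u v) + (∑ u ∈ A, ∑ v ∈ B.erase x, r u v)
        + ((∑ u ∈ B.erase x, ∑ v ∈ A, r u v) + ∑ u ∈ B.erase x, ∑ v ∈ B.erase x, r u v) := by
    rw [hsplit (fun u => ∑ v, r u v)]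
    rw [Finset.sum_congr rfl (fun u _ => hsplit (fun v => r u v)),
      Finset.sum_congr (rfl : B.erase x = B.erase x) (fun u _ => hsplit (fun v => r u v))]
    rw [Finset.sum_add_distrib, Finset.sum_add_distrib]
  have e1 : ∑ u ∈ A, ∑ _v ∈ B.erase x, r u x = ((B.erase x).card : ℝ) * P := by
    simp only [Finset.sum_const, nsmul_eq_mul]
    rw [← Finset.mul_sum, hP]
  have e2 : ∑ _u ∈ A, ∑ v ∈ B.erase x, r x v = (A.card : ℝ) * Q := by
    rw [← hQ, Finset.sum_const, nsmul_eq_mul]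
  have hAB : ∑ u ∈ A, ∑ v ∈ B.erase x, r u v
      = ((B.erase x).card : ℝ) * P + (A.card : ℝ) * Q := by
    rw [Finset.sum_congr rfl (fun u hu => Finset.sum_congr rfl (fun v hv => hcross u hu v hv))]
    simp only [Finset.sum_add_distrib]
    rw [e1, e2]
  have hBA : ∑ u ∈ B.erase x, ∑ v ∈ A, r u v
      = ((B.erase x).card : ℝ) * P + (A.card : ℝ) * Q := by
    rw [Finset.sum_comm, ← hAB]
    exact Finset.sum_congr rfl fun u _ => Finset.sum_congr rfl fun v _ => resist_symm G v u
  -- the BB block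
  have hrxx : r x x = 0 := resist_self G x
  have hQ' : ∑ v ∈ B, r x v = Q := by
    rw [← Finset.add_sum_erase B (fun z => r x z) hB, hrxx, zero_add, hQ]
  have hQ'' : ∑ u ∈ B, r u x = Q := by
    rw [← hQ']
    exact Finset.sum_congr rfl fun u _ => resist_symm G u x
  have hBB : ∑ u ∈ B.erase x, ∑ v ∈ B.erase x, r u v
      = 2 * kfR (G.induce (B : Set V)) - 2 * Q := by
    have expand : ∑ u ∈ B, ∑ v ∈ B, r u v
        = (∑ v ∈ B, r x v) + ∑ u ∈ B.erase x, ((r u x) + ∑ v ∈ B.erase x, r u v) := by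
      rw [← Finset.add_sum_erase B (fun u => ∑ v ∈ B, r u v) hB]
      congr 1
      refine Finset.sum_congr rfl fun u _ => ?_
      rw [← Finset.add_sum_erase B (fun v => r u v) hB]
    have h3 : ∑ u ∈ B.erase x, r u x = Q - r x x := by
      have h4 := Finset.add_sum_erase B (fun u => r u x) hB
      rw [hQ''] at h4
      linarith
    rw [hkfRB, expand, hQ', Finset.sum_add_distrib, h3, hrxx]
    ring
  -- put it together
  have hcard : ((B.erase x).card : ℝ) = (B.card : ℝ) - 1 := by
    rw [Finset.card_erase_of_mem hB]
    have : 1 ≤ B.card := Finset.card_pos.mpr ⟨x, hB⟩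
    push_cast [this]
    ring
  rw [kfR, hS, hkfx1, hkfx2, hAB, hBA, hBB, ← hkfRA, hcard]
  ring
end

section
/- For any connected graph G, the Wiener index is at least the Kirchhoff index: W(G) ≥ Kf(G), with equality if and only if G is a tree. -/
open Finset

section Aux
open SimpleGraph Matrix

variable {V : Type*} [Fintype V] [DecidableEq V] (G : SimpleGraph V) [DecidableRel G.Adj]

noncomputable def Sm : Matrix V V ℝ :=
  G.lapMatrix ℝ + (Fintype.card V : ℝ)⁻¹ • Matrix.of (fun _ _ : V => (1 : ℝ))

noncomputable def Mm : Matrix V V ℝ := (Sm G)⁻¹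

noncomputable def pot (u v : V) : V → ℝ := Mm G *ᵥ (Pi.single u 1 - Pi.single v 1)

variable {G}

lemma quad_eq (x : V → ℝ) :
    x ⬝ᵥ (G.lapMatrix ℝ *ᵥ x) = (∑ i, ∑ j, if G.Adj i j then (x i - x j)^2 else 0) / 2 := by
  rw [← Matrix.toLinearMap₂'_apply', lapMatrix_toLinearMap₂']

lemma Sm_symm : (Sm G)ᵀ = Sm G := by
  have h1 : (G.lapMatrix ℝ).IsSymm := SimpleGraph.isSymm_lapMatrix (G := G) (R := ℝ)
  rw [Sm, Matrix.transpose_add, Matrix.transpose_smul]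
  exact congrArg₂ (· + ·) h1 rfl

lemma Sm_posDef (hG : G.Connected) : (Sm G).PosDef := by
  have hn : (0:ℝ) < (Fintype.card V : ℝ) := by
    have : Nonempty V := hG.nonempty
    exact_mod_cast Fintype.card_pos
  rw [Matrix.posDef_iff_dotProduct_mulVec]
  constructor
  · show (Sm G)ᴴ = Sm G
    rw [Matrix.conjTranspose_eq_transpose_of_trivial, Sm_symm]
  · intro x hx
    have hq : (0:ℝ) ≤ x ⬝ᵥ (G.lapMatrix ℝ *ᵥ x) := by
      have := (posSemidef_lapMatrix ℝ G).dotProduct_mulVec_nonneg x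
      simpa using this
    have hJ : x ⬝ᵥ ((Matrix.of (fun _ _ : V => (1 : ℝ))) *ᵥ x) = (∑ i, x i)^2 := by
      simp [Matrix.mulVec, dotProduct, Finset.mul_sum, sq, Finset.sum_mul, mul_comm]
    have hexp : x ⬝ᵥ (Sm G *ᵥ x) =
        x ⬝ᵥ (G.lapMatrix ℝ *ᵥ x) + (Fintype.card V : ℝ)⁻¹ * (∑ i, x i)^2 := by
      rw [Sm, Matrix.add_mulVec, dotProduct_add, Matrix.smul_mulVec,
        dotProduct_smul, hJ, smul_eq_mul]
    show 0 < star x ⬝ᵥ (Sm G *ᵥ x)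
    rw [star_trivial, hexp]
    rcases lt_or_eq_of_le hq with h | h
    · positivity
    · have hconst : ∀ i j : V, x i = x j := by
        intro i j
        have h0 : Matrix.toLinearMap₂' ℝ (G.lapMatrix ℝ) x x = 0 := by
          rw [Matrix.toLinearMap₂'_apply']; linarith
        exact (lapMatrix_toLinearMap₂'_apply'_eq_zero_iff_forall_reachable G x).mp h0 i j (hG i j)
      obtain ⟨i, hi⟩ := Function.ne_iff.mp hx
      have hsum : ∑ j, x j = (Fintype.card V : ℝ) * x i := by
        rw [Finset.sum_congr rfl (fun j _ => hconst j i)]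
        simp [Finset.sum_const, mul_comm]
      have : (0:ℝ) < (Fintype.card V : ℝ)⁻¹ * (∑ j, x j)^2 := by
        rw [hsum]
        have hxi : x i ≠ 0 := by simpa using hi
        positivity
      linarith

lemma Sm_mul_Mm (hG : G.Connected) : Sm G * Mm G = 1 :=
  Matrix.mul_nonsing_inv _ (isUnit_iff_ne_zero.mpr (Sm_posDef hG).det_pos.ne')

lemma Mm_mul_Sm (hG : G.Connected) : Mm G * Sm G = 1 :=
  Matrix.nonsing_inv_mul _ (isUnit_iff_ne_zero.mpr (Sm_posDef hG).det_pos.ne')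

lemma Mm_symm : (Mm G)ᵀ = Mm G := by
  rw [Mm, Matrix.transpose_nonsing_inv, Sm_symm]

lemma Sm_mulVec_one (hG : G.Connected) : Sm G *ᵥ (fun _ => (1:ℝ)) = fun _ => (1:ℝ) := by
  have hn : (0:ℝ) < (Fintype.card V : ℝ) := by
    have : Nonempty V := hG.nonempty
    exact_mod_cast Fintype.card_pos
  rw [Sm, Matrix.add_mulVec, lapMatrix_mulVec_const_eq_zero, Matrix.smul_mulVec]
  ext i
  simp [Matrix.mulVec, dotProduct]
  field_simp

lemma Mm_mulVec_one (hG : G.Connected) : Mm G *ᵥ (fun _ => (1:ℝ)) = fun _ => (1:ℝ) := by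
  conv_lhs => rw [← Sm_mulVec_one hG, Matrix.mulVec_mulVec, Mm_mul_Sm hG, Matrix.one_mulVec]

lemma sum_pot (hG : G.Connected) (u v : V) : ∑ w, pot G u v w = 0 := by
  have h1 : ∑ w, pot G u v w = (fun _ => (1:ℝ)) ⬝ᵥ (Mm G *ᵥ (Pi.single u 1 - Pi.single v 1)) := by
    simp [pot, dotProduct]
  rw [h1, Matrix.dotProduct_mulVec, ← Matrix.mulVec_transpose, Mm_symm, Mm_mulVec_one hG]
  simp [dotProduct, Pi.single_apply]

lemma lap_mulVec_pot (hG : G.Connected) (u v : V) :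
    G.lapMatrix ℝ *ᵥ pot G u v = Pi.single u 1 - Pi.single v 1 := by
  have hL : G.lapMatrix ℝ = Sm G - (Fintype.card V : ℝ)⁻¹ • Matrix.of (fun _ _ : V => (1 : ℝ)) := by
    rw [Sm]; abel
  rw [hL, Matrix.sub_mulVec]
  have h1 : Sm G *ᵥ pot G u v = Pi.single u 1 - Pi.single v 1 := by
    rw [pot, Matrix.mulVec_mulVec, Sm_mul_Mm hG, Matrix.one_mulVec]
  have h2 : (Matrix.of (fun _ _ : V => (1 : ℝ))) *ᵥ pot G u v = 0 := by
    ext i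
    simp [Matrix.mulVec, dotProduct]
    exact sum_pot hG u v
  rw [h1, Matrix.smul_mulVec, h2]
  simp

lemma pot_apply (u v w : V) : pot G u v w = Mm G w u - Mm G w v := by
  simp [pot, Matrix.mulVec_sub]

lemma resist_eq_pot (u v : V) :
    Mm G u u + Mm G v v - Mm G u v - Mm G v u = pot G u v u - pot G u v v := by
  rw [pot_apply, pot_apply]; ring

lemma pot_quad (hG : G.Connected) (u v : V) :
    pot G u v ⬝ᵥ (G.lapMatrix ℝ *ᵥ pot G u v) = pot G u v u - pot G u v v := by
  rw [lap_mulVec_pot hG]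
  simp only [dotProduct, Pi.sub_apply, Pi.single_apply, mul_sub]
  rw [Finset.sum_sub_distrib]
  congr 1 <;> simp [Finset.sum_ite_eq, mul_ite]

lemma resist_le_energy (hG : G.Connected) (u v : V) (f : V → V → ℝ)
    (hanti : ∀ a b, f a b = - f b a)
    (hsupp : ∀ a b, f a b ≠ 0 → G.Adj a b)
    (hdiv : ∀ a, ∑ b, f a b = (Pi.single u 1 - Pi.single v 1 : V → ℝ) a) :
    pot G u v u - pot G u v v ≤ (∑ a, ∑ b, (f a b)^2) / 2 := by
  set y := pot G u v with hy
  set r := y u - y v with hr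
  set E := ∑ a, ∑ b, (f a b)^2 with hE
  have hE0 : (0:ℝ) ≤ E := by positivity
  have hdiv' : ∀ a, ∑ b, f a b = (if a = u then (1:ℝ) else 0) - (if a = v then 1 else 0) := by
    intro a; rw [hdiv a]; simp [Pi.single_apply]
  have hsum_single : ∀ z : V → ℝ, ∑ a, z a * ((if a = u then (1:ℝ) else 0) - (if a = v then 1 else 0)) = z u - z v := by
    intro z
    simp only [mul_sub]
    rw [Finset.sum_sub_distrib]
    congr 1 <;> simp [mul_ite]
  have h2 : ∀ b, ∑ a, f a b = -((if b = u then (1:ℝ) else 0) - (if b = v then 1 else 0)) := by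
    intro b
    rw [← hdiv' b, ← Finset.sum_neg_distrib]
    exact Finset.sum_congr rfl fun a _ => by rw [hanti a b]
  have key : ∑ a, ∑ b, f a b * (y a - y b) = 2 * r := by
    have e1 : ∑ a, ∑ b, f a b * (y a - y b)
        = (∑ a, ∑ b, f a b * y a) - (∑ a, ∑ b, f a b * y b) := by
      simp [mul_sub, Finset.sum_sub_distrib]
    have e2 : (∑ a, ∑ b, f a b * y a) = r := by
      have : ∀ a, ∑ b, f a b * y a = y a * ((if a = u then (1:ℝ) else 0) - (if a = v then 1 else 0)) := by
        intro a
        rw [← hdiv' a, ← Finset.sum_mul, mul_comm]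
      rw [Finset.sum_congr rfl fun a _ => this a, hsum_single y]
    have e3 : (∑ a, ∑ b, f a b * y b) = -r := by
      rw [Finset.sum_comm]
      have : ∀ b, ∑ a, f a b * y b = -(y b * ((if b = u then (1:ℝ) else 0) - (if b = v then 1 else 0))) := by
        intro b
        rw [← Finset.sum_mul, h2 b]
        ring
      rw [Finset.sum_congr rfl fun b _ => this b, Finset.sum_neg_distrib, hsum_single y]
    rw [e1, e2, e3]; ring
  -- Cauchy-Schwarz
  set g : V → V → ℝ := fun a b => if G.Adj a b then y a - y b else 0 with hg
  have hfg : ∀ a b, f a b * (y a - y b) = f a b * g a b := by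
    intro a b
    by_cases h : G.Adj a b
    · simp [hg, h]
    · have : f a b = 0 := by
        by_contra hne
        exact h (hsupp a b hne)
      simp [this]
  have hgsum : ∑ a, ∑ b, (g a b)^2 = 2 * r := by
    have hq := quad_eq (G := G) y
    have hpq := pot_quad hG u v
    have : ∑ a, ∑ b, (g a b)^2 = ∑ i, ∑ j, if G.Adj i j then (y i - y j)^2 else 0 := by
      refine Finset.sum_congr rfl fun a _ => Finset.sum_congr rfl fun b _ => ?_
      by_cases h : G.Adj a b <;> simp [hg, h]
    rw [this]
    have h4 : y ⬝ᵥ SimpleGraph.lapMatrix ℝ G *ᵥ y = r := hpq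
    rw [hq] at h4
    linarith
  have hcs : (2*r)^2 ≤ E * (2*r) := by
    have := Finset.sum_mul_sq_le_sq_mul_sq (Finset.univ : Finset (V × V))
      (fun p => f p.1 p.2) (fun p => g p.1 p.2)
    rw [Fintype.sum_prod_type, Fintype.sum_prod_type, Fintype.sum_prod_type] at this
    have hL : ∑ a, ∑ b, f a b * g a b = 2*r := by
      rw [← key]
      exact Finset.sum_congr rfl fun a _ => Finset.sum_congr rfl fun b _ => (hfg a b).symm
    rw [hL, ← hE, hgsum] at this
    exact this
  nlinarith [hcs, hE0, sq_nonneg (2*r), sq_nonneg (E - 2*r)]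

def eflow (a b : V) : V → V → ℝ := fun x y =>
  (if x = a ∧ y = b then 1 else 0) - (if x = b ∧ y = a then 1 else 0)

omit [Fintype V] in
lemma eflow_anti (a b x y : V) : eflow a b x y = - eflow a b y x := by
  rcases eq_or_ne a b with rfl | hab
  · simp [eflow]
  · by_cases h1 : x = a <;> by_cases h2 : y = b <;> by_cases h3 : x = b <;> by_cases h4 : y = a <;>
      simp [eflow, h1, h2, h3, h4, hab, hab.symm]

lemma eflow_div (a b : V) (hab : a ≠ b) (x : V) :
    ∑ y, eflow a b x y = (if x = a then (1:ℝ) else 0) - (if x = b then 1 else 0) := by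
  simp only [eflow]
  rw [Finset.sum_sub_distrib]
  congr 1
  · by_cases h : x = a <;> simp [h, hab.symm, ite_and]
  · by_cases h : x = b <;> simp [h, hab, ite_and]

omit [Fintype V] in
lemma eflow_sq (a b : V) (hab : a ≠ b) (x y : V) :
    (eflow a b x y)^2 = (if x = a ∧ y = b then (1:ℝ) else 0) + (if x = b ∧ y = a then 1 else 0) := by
  by_cases h1 : x = a ∧ y = b
  · obtain ⟨rfl, rfl⟩ := h1
    have h2 : ¬(x = y ∧ y = x) := fun hc => hab hc.1
    simp [eflow, h2]
  · by_cases h2 : x = b ∧ y = a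
    · obtain ⟨rfl, rfl⟩ := h2
      simp [eflow, h1]
    · simp [eflow, h1, h2]

lemma ddelta (a b : V) : ∑ x, ∑ y, (if x = a ∧ y = b then (1:ℝ) else 0) = 1 := by
  simp [ite_and, Finset.sum_ite_eq]

lemma eflow_energy (a b : V) (hab : a ≠ b) :
    ∑ x, ∑ y, (eflow a b x y)^2 = 2 := by
  have : ∀ x y : V, (eflow a b x y)^2
      = (if x = a ∧ y = b then (1:ℝ) else 0) + (if x = b ∧ y = a then 1 else 0) :=
    eflow_sq a b hab
  simp only [this, Finset.sum_add_distrib]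
  rw [ddelta, ddelta]
  norm_num

variable (G)

def wflow : ∀ {a b : V}, G.Walk a b → V → V → ℝ
  | _, _, SimpleGraph.Walk.nil => fun _ _ => 0
  | a, _, @SimpleGraph.Walk.cons _ _ _ c _ _h p => eflow a c + wflow p

variable {G}

omit [Fintype V] in
lemma wflow_anti {a b : V} (p : G.Walk a b) (x y : V) : wflow G p x y = - wflow G p y x := by
  induction p with
  | nil => simp [wflow]
  | cons h q ih =>
    simp only [wflow, Pi.add_apply]
    rw [ih, eflow_anti]
    ring

omit [Fintype V] in
lemma wflow_supp {a b : V} (p : G.Walk a b) (x y : V) (h : wflow G p x y ≠ 0) :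
    s(x, y) ∈ p.edges := by
  induction p with
  | nil => simp [wflow] at h
  | @cons a' c' b' hadj q ih =>
    simp only [wflow, Pi.add_apply] at h
    rcases ne_or_eq (eflow a' c' x y) 0 with he | he
    · by_cases h1 : x = a' ∧ y = c'
      · rw [h1.1, h1.2]
        simp [SimpleGraph.Walk.edges_cons]
      · have h2 : x = c' ∧ y = a' := by
          by_contra h2
          simp [eflow, h1, h2] at he
        rw [h2.1, h2.2, Sym2.eq_swap]
        simp [SimpleGraph.Walk.edges_cons]
    · have hq : wflow G q x y ≠ 0 := by
        intro h0
        rw [he, h0] at h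
        simp at h
      simp [SimpleGraph.Walk.edges_cons, ih hq]

lemma wflow_div {a b : V} (p : G.Walk a b) (x : V) :
    ∑ y, wflow G p x y = (if x = a then (1:ℝ) else 0) - (if x = b then 1 else 0) := by
  induction p with
  | nil => simp [wflow]
  | @cons a' c' b' hadj q ih =>
    simp only [wflow, Pi.add_apply]
    rw [Finset.sum_add_distrib, ih, eflow_div _ _ hadj.ne]
    ring

lemma wflow_energy {a b : V} (p : G.Walk a b) (hp : p.IsPath) :
    ∑ x, ∑ y, (wflow G p x y)^2 = 2 * p.length := by
  induction p with
  | nil => simp [wflow]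
  | @cons a' c' b' hadj q ih =>
    rw [SimpleGraph.Walk.cons_isPath_iff] at hp
    have hnotedge : s(a', c') ∉ q.edges := by
      intro hmem
      exact hp.2 (q.fst_mem_support_of_mem_edges hmem)
    have hcross : ∀ x y : V, eflow a' c' x y * wflow G q x y = 0 := by
      intro x y
      by_cases h1 : x = a' ∧ y = c'
      · obtain ⟨rfl, rfl⟩ := h1
        have : wflow G q x y = 0 := by
          by_contra h0
          exact hnotedge (wflow_supp q x y h0)
        rw [this]; ring
      · by_cases h2 : x = c' ∧ y = a'
        · obtain ⟨rfl, rfl⟩ := h2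
          have : wflow G q x y = 0 := by
            by_contra h0
            have := wflow_supp q x y h0
            rw [Sym2.eq_swap] at this
            exact hnotedge this
          rw [this]; ring
        · have : eflow a' c' x y = 0 := by simp [eflow, h1, h2]
          rw [this]; ring
    have hexp : ∀ x y : V, (wflow G (SimpleGraph.Walk.cons hadj q) x y)^2
        = (eflow a' c' x y)^2 + 2 * (eflow a' c' x y * wflow G q x y) + (wflow G q x y)^2 := by
      intro x y
      simp only [wflow, Pi.add_apply]
      ring
    simp only [hexp, Finset.sum_add_distrib]
    rw [eflow_energy _ _ hadj.ne, ih hp.1]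
    have hz : ∑ x : V, ∑ y : V, 2 * (eflow a' c' x y * wflow G q x y) = 0 := by
      simp [hcross]
    rw [hz]
    simp [SimpleGraph.Walk.length_cons]
    ring

lemma pot_le_dist (hG : G.Connected) (u v : V) :
    pot G u v u - pot G u v v ≤ (G.dist u v : ℝ) := by
  obtain ⟨p, hp⟩ := hG.exists_walk_length_eq_dist u v
  set q := p.bypass with hq
  have h1 := resist_le_energy hG u v (wflow G q) (wflow_anti q)
    (fun a b h => q.adj_of_mem_edges (wflow_supp q a b h))
    (fun a => by rw [wflow_div]; simp [Pi.single_apply])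
  rw [wflow_energy q p.bypass_isPath] at h1
  have h2 : (q.length:ℝ) ≤ G.dist u v := by
    exact_mod_cast le_trans (SimpleGraph.Walk.length_bypass_le p) hp.le
  linarith

lemma pot_lt_dist_of_cycle (hG : G.Connected) {w : V} (c : G.Walk w w) (hc : c.IsCycle) :
    ∃ u v : V, pot G u v u - pot G u v v < (G.dist u v : ℝ) := by
  cases c with
  | nil => exact absurd rfl hc.ne_nil
  | @cons _ b _ hadj q =>
    have hc' := hc
    rw [SimpleGraph.Walk.cons_isCycle_iff] at hc'
    obtain ⟨hqpath, hedge⟩ := hc'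
    refine ⟨w, b, ?_⟩
    set m := q.length with hm
    have hm2 : 2 ≤ m := by
      have h3 := hc.three_le_length
      simp only [SimpleGraph.Walk.length_cons] at h3
      omega
    set t : ℝ := 1 / (m + 1) with ht
    have hmpos : (0:ℝ) < (m:ℝ) + 1 := by positivity
    have ht0 : 0 < t := by positivity
    have ht1 : t < 1 := by
      rw [ht, div_lt_one hmpos]
      have : (2:ℝ) ≤ (m:ℝ) := by exact_mod_cast hm2
      linarith
    set qr := q.reverse with hqr
    set f : V → V → ℝ := fun x y => (1 - t) * eflow w b x y + t * wflow G qr x y with hf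
    have hanti : ∀ x y, f x y = - f y x := by
      intro x y
      rw [hf]
      simp only
      rw [eflow_anti, wflow_anti]
      ring
    have hsupp : ∀ x y, f x y ≠ 0 → G.Adj x y := by
      intro x y h
      rcases ne_or_eq (eflow w b x y) 0 with he | he
      · by_cases h1 : x = w ∧ y = b
        · rw [h1.1, h1.2]; exact hadj
        · have h2 : x = b ∧ y = w := by
            by_contra h2
            simp [eflow, h1, h2] at he
          rw [h2.1, h2.2]; exact hadj.symm
      · have hw : wflow G qr x y ≠ 0 := by
          intro h0
          rw [hf] at h
          simp only at h
          rw [he, h0] at h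
          simp at h
        exact qr.adj_of_mem_edges (wflow_supp qr x y hw)
    have hdiv : ∀ x, ∑ y, f x y = (Pi.single w 1 - Pi.single b 1 : V → ℝ) x := by
      intro x
      rw [hf]
      simp only
      rw [Finset.sum_add_distrib, ← Finset.mul_sum, ← Finset.mul_sum,
        eflow_div _ _ hadj.ne, wflow_div]
      simp [Pi.single_apply]
      ring
    have hcross : ∀ x y : V, eflow w b x y * wflow G qr x y = 0 := by
      intro x y
      have hwb : s(w, b) ∉ qr.edges := by
        rw [hqr, SimpleGraph.Walk.edges_reverse, List.mem_reverse]
        exact hedge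
      by_cases h1 : x = w ∧ y = b
      · obtain ⟨rfl, rfl⟩ := h1
        have : wflow G qr x y = 0 := by
          by_contra h0
          exact hwb (wflow_supp qr x y h0)
        rw [this]; ring
      · by_cases h2 : x = b ∧ y = w
        · obtain ⟨rfl, rfl⟩ := h2
          have : wflow G qr x y = 0 := by
            by_contra h0
            have := wflow_supp qr x y h0
            rw [Sym2.eq_swap] at this
            exact hwb this
          rw [this]; ring
        · have : eflow w b x y = 0 := by simp [eflow, h1, h2]
          rw [this]; ring
    have henergy : ∑ x, ∑ y, (f x y)^2 = (1-t)^2 * 2 + t^2 * (2 * m) := by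
      have hexp : ∀ x y : V, (f x y)^2 = (1-t)^2 * (eflow w b x y)^2
          + 2 * ((1-t)*t) * (eflow w b x y * wflow G qr x y) + t^2 * (wflow G qr x y)^2 := by
        intro x y
        rw [hf]
        simp only
        ring
      simp only [hexp, Finset.sum_add_distrib, ← Finset.mul_sum]
      have e1 : ∑ x : V, ∑ y : V, (eflow w b x y)^2 = 2 := eflow_energy _ _ hadj.ne
      have e2 : ∑ x : V, ∑ y : V, (wflow G qr x y)^2 = 2 * qr.length :=
        wflow_energy qr (hqpath.reverse)
      have e4 : ∑ x : V, ∑ y : V, eflow w b x y * wflow G qr x y = 0 := by simp [hcross]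
      rw [e1, e2, e4]
      have e5 : qr.length = m := by rw [hqr, SimpleGraph.Walk.length_reverse]
      rw [e5]
      ring
    have hle := resist_le_energy hG w b f hanti hsupp hdiv
    rw [henergy] at hle
    have hdist : G.dist w b = 1 := SimpleGraph.dist_eq_one_iff_adj.mpr hadj
    rw [hdist]
    have harith : ((1-t)^2 * 2 + t^2 * (2 * m)) / 2 < 1 := by
      have hmr : (2:ℝ) ≤ (m:ℝ) := by exact_mod_cast hm2
      rw [ht]
      rw [div_lt_one (by norm_num)]
      field_simp
      ring_nf
      nlinarith [hmr]
    push_cast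
    linarith

lemma exists_shortest_path (hG : G.Connected) (u v : V) :
    ∃ p : G.Walk u v, p.IsPath ∧ p.length = G.dist u v := by
  obtain ⟨p, hp⟩ := hG.exists_walk_length_eq_dist u v
  exact ⟨p.bypass, p.bypass_isPath,
    le_antisymm (hp ▸ SimpleGraph.Walk.length_bypass_le p) (SimpleGraph.dist_le _)⟩

omit [Fintype V] [DecidableRel G.Adj] in
lemma support_split_le {w z y : V} (p : G.Walk w z) (hy : y ∈ p.support) :
    G.dist w y + G.dist y z ≤ p.length := by
  have h := congrArg SimpleGraph.Walk.length (p.take_spec hy)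
  rw [SimpleGraph.Walk.length_append] at h
  have h1 := SimpleGraph.dist_le (p.takeUntil y hy)
  have h2 := SimpleGraph.dist_le (p.dropUntil y hy)
  omega

omit [Fintype V] [DecidableRel G.Adj] in
lemma isPath_concat {u v : V} {p : G.Walk u v} (hp : p.IsPath) {w : V} (h : G.Adj v w)
    (hw : w ∉ p.support) : (p.concat h).IsPath := by
  have h1 : (SimpleGraph.Walk.cons h.symm p.reverse).IsPath := by
    apply SimpleGraph.Walk.IsPath.cons hp.reverse
    simpa using hw
  have h2 := h1.reverse
  rw [SimpleGraph.Walk.reverse_cons, SimpleGraph.Walk.reverse_reverse] at h2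
  exact h2

lemma tree_no_tie (hT : G.IsTree) {p q : V} (h : G.Adj p q) (w : V) :
    G.dist w p ≠ G.dist w q := by
  have hG := SimpleGraph.IsTree.isConnected hT
  intro heq
  obtain ⟨R, hRpath, hRlen⟩ := exists_shortest_path hG w p
  obtain ⟨S, hSpath, hSlen⟩ := exists_shortest_path hG w q
  have hqp : G.dist q p = 1 := by
    rw [SimpleGraph.dist_comm]; exact SimpleGraph.dist_eq_one_iff_adj.mpr h
  have hqR : q ∉ R.support := by
    intro hmem
    have h1 := support_split_le R hmem
    rw [hRlen] at h1
    omega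
  have hR' : (R.concat h).IsPath := isPath_concat hRpath h hqR
  have huniq := SimpleGraph.isAcyclic_iff_path_unique.mp (SimpleGraph.IsTree.IsAcyclic hT)
    ⟨R.concat h, hR'⟩ ⟨S, hSpath⟩
  have hwalk : R.concat h = S := congrArg Subtype.val huniq
  have hlen : (R.concat h).length = S.length := by rw [hwalk]
  rw [SimpleGraph.Walk.length_concat, hRlen, hSlen] at hlen
  omega

lemma adj_dist_cases (hT : G.IsTree) {p q : V} (h : G.Adj p q) (w : V) :
    G.dist w q = G.dist w p + 1 ∨ G.dist w p = G.dist w q + 1 := by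
  have hG := SimpleGraph.IsTree.isConnected hT
  have hpq : G.dist p q = 1 := SimpleGraph.dist_eq_one_iff_adj.mpr h
  have hqp : G.dist q p = 1 := by rw [SimpleGraph.dist_comm]; exact hpq
  have t1 : G.dist w q ≤ G.dist w p + 1 := by
    have := hG.dist_triangle (u := w) (v := p) (w := q); omega
  have t2 : G.dist w p ≤ G.dist w q + 1 := by
    have := hG.dist_triangle (u := w) (v := q) (w := p); omega
  have := tree_no_tie hT h w
  omega

lemma tree_crossing (hT : G.IsTree) {p q w w' : V} (hpq : G.Adj p q) (hww' : G.Adj w w')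
    (hw : G.dist w q = G.dist w p + 1) (hw' : G.dist w' p = G.dist w' q + 1) :
    w = p ∧ w' = q := by
  have hG := SimpleGraph.IsTree.isConnected hT
  have hwwd : G.dist w w' = 1 := SimpleGraph.dist_eq_one_iff_adj.mpr hww'
  have hwwd' : G.dist w' w = 1 := by rw [SimpleGraph.dist_comm]; exact hwwd
  have t2 : G.dist w' p ≤ G.dist w' w + G.dist w p := hG.dist_triangle
  have t3 : G.dist w q ≤ G.dist w w' + G.dist w' q := hG.dist_triangle
  have hab : G.dist w p = G.dist w' q := by omega
  rcases Nat.eq_zero_or_pos (G.dist w p) with h0 | hpos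
  · have hwp : w = p := hG.dist_eq_zero_iff.mp h0
    have hw'q : w' = q := hG.dist_eq_zero_iff.mp (by omega)
    exact ⟨hwp, hw'q⟩
  · exfalso
    set a := G.dist w p with ha
    obtain ⟨R, hRpath, hRlen⟩ := exists_shortest_path hG w p
    obtain ⟨T, hTpath, hTlen⟩ := exists_shortest_path hG w' q
    have hqR : q ∉ R.support := by
      intro hmem
      have h1 := support_split_le R hmem
      have hqp : G.dist q p = 1 := by
        rw [SimpleGraph.dist_comm]; exact SimpleGraph.dist_eq_one_iff_adj.mpr hpq
      rw [hRlen] at h1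
      omega
    have hR' : (R.concat hpq).IsPath := isPath_concat hRpath hpq hqR
    have hwT : w ∉ T.support := by
      intro hmem
      have h1 := support_split_le T hmem
      rw [hTlen] at h1
      omega
    have hT' : (SimpleGraph.Walk.cons hww' T).IsPath := SimpleGraph.Walk.IsPath.cons hTpath hwT
    have huniq := SimpleGraph.isAcyclic_iff_path_unique.mp (SimpleGraph.IsTree.IsAcyclic hT)
      ⟨R.concat hpq, hR'⟩ ⟨SimpleGraph.Walk.cons hww' T, hT'⟩
    have hwalk : R.concat hpq = SimpleGraph.Walk.cons hww' T := congrArg Subtype.val huniq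
    have hmem : w' ∈ (R.concat hpq).support := by
      rw [hwalk]
      simp [SimpleGraph.Walk.support_cons]
    rw [SimpleGraph.Walk.support_concat] at hmem
    rw [List.mem_append] at hmem
    rcases hmem with hmem' | hmem'
    swap
    · simp at hmem'
      subst hmem'
      omega
    · have h1 := support_split_le R hmem'
      rw [hRlen] at h1
      omega

lemma tree_cut (hT : G.IsTree) {p q : V} (hpq : G.Adj p q) :
    G.lapMatrix ℝ *ᵥ (fun w => if G.dist w q = G.dist w p + 1 then (1:ℝ) else 0)
      = Pi.single p 1 - Pi.single q 1 := by
  have hG := SimpleGraph.IsTree.isConnected hT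
  set χ : V → ℝ := fun w => if G.dist w q = G.dist w p + 1 then (1:ℝ) else 0 with hchi
  have hchip : χ p = 1 := by
    rw [hchi]
    simp [SimpleGraph.dist_eq_one_iff_adj.mpr hpq, SimpleGraph.dist_self]
  have hchiq : χ q = 0 := by
    rw [hchi]
    have : G.dist q p = 1 := by
      rw [SimpleGraph.dist_comm]; exact SimpleGraph.dist_eq_one_iff_adj.mpr hpq
    simp [this, SimpleGraph.dist_self]
  ext y
  rw [SimpleGraph.lapMatrix_mulVec_apply]
  have hdeg : (G.degree y : ℝ) * χ y = ∑ _z ∈ G.neighborFinset y, χ y := by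
    rw [Finset.sum_const, nsmul_eq_mul]
    rfl
  rw [hdeg, ← Finset.sum_sub_distrib]
  by_cases hyp : y = p
  · subst hyp
    have hterm : ∀ z ∈ G.neighborFinset y, χ y - χ z = if z = q then (1:ℝ) else 0 := by
      intro z hz
      rw [SimpleGraph.mem_neighborFinset] at hz
      by_cases hzq : z = q
      · subst hzq
        rw [hchip, hchiq]
        simp
      · have hzA : χ z = 1 := by
          rw [hchi]
          rcases adj_dist_cases hT hpq z with hc | hc
          · simp [hc]
          · exfalso
            rcases adj_dist_cases hT hpq y with hc2 | hc2
            · exact hzq (tree_crossing hT hpq hz hc2 hc).2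
            · have := tree_no_tie hT hpq y
              have hyy : G.dist y q = 1 := SimpleGraph.dist_eq_one_iff_adj.mpr hpq
              have hyp0 : G.dist y y = 0 := SimpleGraph.dist_self
              omega
        rw [hchip, hzA]
        simp [hzq]
    rw [Finset.sum_congr rfl hterm, Finset.sum_ite_eq' (G.neighborFinset y)]
    simp [SimpleGraph.mem_neighborFinset, hpq, Pi.single_apply, hpq.ne, hpq.ne']
  · by_cases hyq : y = q
    · subst hyq
      have hterm : ∀ z ∈ G.neighborFinset y, χ y - χ z = if z = p then (-1:ℝ) else 0 := by
        intro z hz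
        rw [SimpleGraph.mem_neighborFinset] at hz
        by_cases hzp : z = p
        · subst hzp
          rw [hchip, hchiq]
          simp
        · have hzA : χ z = 0 := by
            rw [hchi]
            rcases adj_dist_cases hT hpq z with hc | hc
            · exfalso
              exact hzp (tree_crossing hT hpq hz.symm hc (by
                have h1 : G.dist y p = 1 := by
                  rw [SimpleGraph.dist_comm]; exact SimpleGraph.dist_eq_one_iff_adj.mpr hpq
                have h2 : G.dist y y = 0 := SimpleGraph.dist_self
                omega)).1
            · simp only
              rw [if_neg (by omega)]
          rw [hchiq, hzA]
          simp [hzp]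
      rw [Finset.sum_congr rfl hterm, Finset.sum_ite_eq' (G.neighborFinset y)]
      simp [SimpleGraph.mem_neighborFinset, hpq.symm, Pi.single_apply, hyp]
    · have hterm : ∀ z ∈ G.neighborFinset y, χ y - χ z = 0 := by
        intro z hz
        rw [SimpleGraph.mem_neighborFinset] at hz
        rcases adj_dist_cases hT hpq y with hcy | hcy
        · rcases adj_dist_cases hT hpq z with hcz | hcz
          · rw [hchi]; simp [hcy, hcz]
          · exfalso
            exact hyp (tree_crossing hT hpq hz hcy hcz).1
        · rcases adj_dist_cases hT hpq z with hcz | hcz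
          · exfalso
            exact hyq (tree_crossing hT hpq hz.symm hcz hcy).2
          · rw [hchi]
            simp only
            rw [if_neg (by omega), if_neg (by omega)]
            ring
      rw [Finset.sum_congr rfl hterm]
      simp [Pi.single_apply, hyp, hyq]

omit [Fintype V] [DecidableRel G.Adj] in
lemma dist_getVert_le (hG : G.Connected) {a b : V} (p : G.Walk a b) (i : ℕ) :
    G.dist a (p.getVert i) ≤ i := by
  induction p generalizing i with
  | nil => simp [SimpleGraph.Walk.getVert, SimpleGraph.dist_self]
  | @cons a' c' b' h q ih =>
    cases i with
    | zero => simp [SimpleGraph.dist_self]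
    | succ i =>
      rw [SimpleGraph.Walk.getVert_cons_succ]
      have h2 := hG.dist_triangle (u := a') (v := c') (w := q.getVert i)
      have h3 : G.dist a' c' = 1 := SimpleGraph.dist_eq_one_iff_adj.mpr h
      have h4 := ih i
      omega

omit [Fintype V] [DecidableRel G.Adj] in
lemma dist_getVert_suffix_le (hG : G.Connected) {a b : V} (p : G.Walk a b) (i : ℕ)
    (hi : i ≤ p.length) : G.dist (p.getVert i) b ≤ p.length - i := by
  have h1 := dist_getVert_le hG p.reverse (p.length - i)
  rw [SimpleGraph.Walk.getVert_reverse] at h1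
  have h2 : p.length - (p.length - i) = i := by omega
  rw [h2] at h1
  rw [SimpleGraph.dist_comm]
  exact h1

omit [Fintype V] [DecidableRel G.Adj] in
lemma dist_getVert_eq (hG : G.Connected) {a b : V} (p : G.Walk a b)
    (hp : p.length = G.dist a b) (i : ℕ) (hi : i ≤ p.length) :
    G.dist a (p.getVert i) = i ∧ G.dist (p.getVert i) b = p.length - i := by
  have h1 := dist_getVert_le hG p i
  have h2 := dist_getVert_suffix_le hG p i hi
  have h3 := hG.dist_triangle (u := a) (v := p.getVert i) (w := b)
  omega

lemma pot_eq_dist_of_tree (hT : G.IsTree) (u v : V) :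
    pot G u v u - pot G u v v = (G.dist u v : ℝ) := by
  have hG := SimpleGraph.IsTree.isConnected hT
  obtain ⟨P, hPpath, hPlen⟩ := exists_shortest_path hG u v
  set k := G.dist u v with hk
  set x : V → ℝ := fun w => ∑ i ∈ Finset.range k,
    (if G.dist w (P.getVert (i+1)) = G.dist w (P.getVert i) + 1 then (1:ℝ) else 0) with hx
  have hadj : ∀ i, i < k → G.Adj (P.getVert i) (P.getVert (i+1)) := by
    intro i hi
    exact P.adj_getVert_succ (by omega : i < P.length)
  have hLx : G.lapMatrix ℝ *ᵥ x = Pi.single u 1 - Pi.single v 1 := by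
    have hxeq : x = ∑ i ∈ Finset.range k,
        (fun w => if G.dist w (P.getVert (i+1)) = G.dist w (P.getVert i) + 1 then (1:ℝ) else 0) := by
      ext w
      rw [hx]
      rw [Finset.sum_apply]
    rw [hxeq, ← Matrix.mulVecLin_apply, map_sum]
    have hterm : ∀ i ∈ Finset.range k,
        (Matrix.mulVecLin (G.lapMatrix ℝ))
          (fun w => if G.dist w (P.getVert (i+1)) = G.dist w (P.getVert i) + 1 then (1:ℝ) else 0)
        = Pi.single (P.getVert i) 1 - Pi.single (P.getVert (i+1)) 1 := by
      intro i hi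
      rw [Finset.mem_range] at hi
      rw [Matrix.mulVecLin_apply]
      exact tree_cut hT (hadj i hi)
    rw [Finset.sum_congr rfl hterm,
      Finset.sum_range_sub' (fun i => (Pi.single (P.getVert i) (1:ℝ) : V → ℝ)) k]
    rw [SimpleGraph.Walk.getVert_zero]
    have : P.getVert k = v := by
      rw [← hPlen]
      exact P.getVert_length
    rw [this]
  have hdiff : G.lapMatrix ℝ *ᵥ (x - pot G u v) = 0 := by
    rw [Matrix.mulVec_sub, hLx, lap_mulVec_pot hG, sub_self]
  have hconst : (x - pot G u v) u = (x - pot G u v) v := by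
    have := (SimpleGraph.lapMatrix_toLinearMap₂'_apply'_eq_zero_iff_forall_reachable G
      (x - pot G u v)).mp (by rw [Matrix.toLinearMap₂'_apply', hdiff, dotProduct_zero]) u v (hG u v)
    exact this
  have hxu : x u = k := by
    have hterm : ∀ i ∈ Finset.range k,
        (if G.dist u (P.getVert (i+1)) = G.dist u (P.getVert i) + 1 then (1:ℝ) else 0) = 1 := by
      intro i hi
      rw [Finset.mem_range] at hi
      have e1 := (dist_getVert_eq hG P hPlen i (by omega)).1
      have e2 := (dist_getVert_eq hG P hPlen (i+1) (by omega)).1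
      rw [if_pos (by omega)]
    rw [hx]
    simp only
    rw [Finset.sum_congr rfl hterm, Finset.sum_const, Finset.card_range, nsmul_eq_mul, mul_one]
  have hxv : x v = 0 := by
    have hterm : ∀ i ∈ Finset.range k,
        (if G.dist v (P.getVert (i+1)) = G.dist v (P.getVert i) + 1 then (1:ℝ) else 0) = 0 := by
      intro i hi
      rw [Finset.mem_range] at hi
      have e1 := (dist_getVert_eq hG P hPlen i (by omega)).2
      have e2 := (dist_getVert_eq hG P hPlen (i+1) (by omega)).2
      have e1' : G.dist v (P.getVert i) = P.length - i := by
        rw [SimpleGraph.dist_comm]; exact e1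
      have e2' : G.dist v (P.getVert (i+1)) = P.length - (i+1) := by
        rw [SimpleGraph.dist_comm]; exact e2
      rw [if_neg (by omega)]
    rw [hx]
    simp only
    rw [Finset.sum_congr rfl hterm, Finset.sum_const]
    simp
  have hfin : pot G u v u - pot G u v v = x u - x v := by
    simp only [Pi.sub_apply] at hconst
    linarith
  rw [hfin, hxu, hxv, hk]
  simp

end Aux

/-- The Wiener index dominates the Kirchhoff index, with equality iff `G` is a tree. -/
theorem wiener_ge_kf {V : Type*} [Fintype V] [DecidableEq V] (G : SimpleGraph V)
    (hG : G.Connected) :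
    kfR G ≤ wiener G ∧ (wiener G = kfR G ↔ G.IsTree) := by
  letI := Classical.decRel G.Adj
  have hres : ∀ u v : V, resist G u v = pot G u v u - pot G u v v := by
    intro u v
    exact resist_eq_pot u v
  have hle : ∀ u v : V, resist G u v ≤ (G.dist u v : ℝ) := fun u v => by
    rw [hres u v]; exact pot_le_dist hG u v
  have hsum : ∑ u, ∑ v, resist G u v ≤ ∑ u : V, ∑ v : V, (G.dist u v : ℝ) := by
    apply Finset.sum_le_sum; intro u _; apply Finset.sum_le_sum; intro v _; exact hle u v
  constructor
  · rw [kfR, wiener]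
    linarith
  · constructor
    · intro heq
      by_contra hnt
      have hnac : ¬ G.IsAcyclic := fun hac => hnt ⟨hG, hac⟩
      unfold SimpleGraph.IsAcyclic at hnac
      push_neg at hnac
      obtain ⟨w, c, hcyc⟩ := hnac
      obtain ⟨u0, v0, hlt0⟩ := pot_lt_dist_of_cycle hG c hcyc
      have hlt : resist G u0 v0 < (G.dist u0 v0 : ℝ) := by rw [hres]; exact hlt0
      have hstrict : ∑ u, ∑ v, resist G u v < ∑ u : V, ∑ v : V, (G.dist u v : ℝ) := by
        apply Finset.sum_lt_sum
        · intro u _; apply Finset.sum_le_sum; intro v _; exact hle u v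
        · exact ⟨u0, Finset.mem_univ _,
            Finset.sum_lt_sum (fun v _ => hle u0 v) ⟨v0, Finset.mem_univ _, hlt⟩⟩
      rw [kfR, wiener] at heq
      linarith
    · intro hT
      rw [kfR, wiener]
      congr 1
      apply Finset.sum_congr rfl; intro u _
      apply Finset.sum_congr rfl; intro v _
      exact ((hres u v).trans (pot_eq_dist_of_tree hT u v)).symm
end
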